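/- arXiv:1706.06055 — 10 statements merged into one kernel-verified Lean document; each statement's English description precedes it below -/
import Mathlib

section
/- For every integer p ≥ 0 one has θ_p ≤ K^p(KL + 1)^p. -/
/-- **Lemma 2.** Under the recursive estimates on `(θ_p)` and `(μ_p)`, with `K = 2m + 2`,
one has `θ_p ≤ K^p (KL + 1)^p` for every integer `p ≥ 0`. -/
theorem stmt_4 (m : ℕ) (L : ℝ) (hL : 0 < L)
    (θ μ : ℕ → ℝ)
    (hθnn : ∀ p, 0 ≤ θ p) (hμnn : ∀ p, 0 ≤ μ p)
    (hμ0 : μ 0 = 0)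
    (hμ1 : μ 1 ≤ ((2 * (m : ℝ)) ^ 2 + 4 * m) * L * θ 0 + 2 * m)
    (hμp : ∀ p : ℕ, 2 ≤ p →
      μ p ≤ (2 * (m : ℝ) + 1) * μ (p - 1) + μ (p - 2)
          + ((2 * (m : ℝ)) ^ 2 + 4 * m) * L * θ (p - 1) + 2 * m * L * θ (p - 2))
    (K : ℝ) (hK : K = 2 * (m : ℝ) + 2)
    (φ : ℕ → ℝ) (hφ0 : φ 0 = 2 * m)
    (hφ : ∀ p : ℕ, 1 ≤ p →
      φ p = (2 * (m : ℝ) + 1) * μ p + μ (p - 1) + 2 * m * L * θ (p - 1))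
    (hθ0 : θ 0 ≤ 1)
    (hθp : ∀ p : ℕ, 1 ≤ p → θ p ≤ L * θ (p - 1) + μ p) :
    ∀ p : ℕ, θ p ≤ K ^ p * (K * L + 1) ^ p := by
  subst hK
  have hm0 : (0:ℝ) ≤ 2 * (m:ℝ) := by positivity
  -- μ p ≤ φ p for all p
  have hμφ : ∀ p, μ p ≤ φ p := by
    intro p
    rcases Nat.eq_zero_or_pos p with h | h
    · subst h; rw [hμ0, hφ0]; positivity
    · rw [hφ p h]
      have h1 := hμnn (p-1)
      have h2 := hμnn p
      have h3 : 0 ≤ 2 * (m:ℝ) * L * θ (p-1) :=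
        mul_nonneg (mul_nonneg hm0 hL.le) (hθnn (p-1))
      nlinarith [mul_nonneg hm0 h2]
  have main : ∀ p, θ p ≤ (2 * (m:ℝ) + 2) ^ p * ((2 * (m:ℝ) + 2) * L + 1) ^ p ∧
      φ p ≤ (2 * (m:ℝ) + 2) ^ (p+1) * ((2 * (m:ℝ) + 2) * L + 1) ^ p := by
    intro p
    induction p with
    | zero =>
      constructor
      · simpa using hθ0
      · simp only [zero_add, pow_one, pow_zero, mul_one, hφ0]; linarith
    | succ p ih =>
      obtain ⟨ihθ, ihφ⟩ := ih
      set A : ℝ := (2 * (m:ℝ) + 2) ^ p * ((2 * (m:ℝ) + 2) * L + 1) ^ p with hAdef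
      have hA : 0 < A := by positivity
      have hpow0 : (2 * (m:ℝ) + 2) ^ (p+1) * ((2 * (m:ℝ) + 2) * L + 1) ^ p
          = (2 * (m:ℝ) + 2) * A := by rw [hAdef, pow_succ]; ring
      rw [hpow0] at ihφ
      clear_value A
      -- key step: μ (p+1) ≤ φ p + ((2m)^2+4m) L θ p
      have hstep : μ (p+1) ≤ φ p + ((2 * (m:ℝ)) ^ 2 + 4 * m) * L * θ p := by
        cases p with
        | zero => rw [hφ0]; linarith
        | succ q =>
          have h := hμp (q+2) (by omega)
          have hφq := hφ (q+1) (by omega)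
          have e1 : q + 2 - 1 = q + 1 := rfl
          have e2 : q + 2 - 2 = q := rfl
          have e3 : q + 1 - 1 = q := rfl
          rw [e1, e2] at h
          rw [e3] at hφq
          linarith
      have hθ1 := hθp (p+1) (by omega)
      have hφ1 := hφ (p+1) (by omega)
      have e4 : p + 1 - 1 = p := rfl
      rw [e4] at hθ1 hφ1
      have hμp' := hμφ p
      have hθnnp := hθnn p
      have hLθA : L * θ p ≤ L * A := by nlinarith
      have hD : 0 ≤ L * A - L * θ p := by linarith
      have hLθ0 : 0 ≤ L * θ p := by positivity
      have hLA0 : 0 ≤ L * A := by positivity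
      have h5 : 0 ≤ (2*(m:ℝ)) * (φ p + ((2 * (m:ℝ)) ^ 2 + 4 * m) * L * θ p - μ (p+1)) :=
        mul_nonneg hm0 (by linarith)
      have h6 : 0 ≤ (2*(m:ℝ)) * ((2 * (m:ℝ) + 2) * A - φ p) :=
        mul_nonneg hm0 (by linarith)
      have H1 : 0 ≤ 2*(m:ℝ) * (L * A - L * θ p) := mul_nonneg hm0 hD
      have H2 : 0 ≤ (2*(m:ℝ)) * (2*(m:ℝ)) * (L * A - L * θ p) :=
        mul_nonneg (mul_nonneg hm0 hm0) hD
      have H3 : 0 ≤ (2*(m:ℝ)) * (2*(m:ℝ)) * (2*(m:ℝ)) * (L * A - L * θ p) :=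
        mul_nonneg (mul_nonneg (mul_nonneg hm0 hm0) hm0) hD
      have G1 : 0 ≤ 2*(m:ℝ) * (L * A) := mul_nonneg hm0 hLA0
      have G2 : 0 ≤ (2*(m:ℝ)) * (2*(m:ℝ)) * (L * A) :=
        mul_nonneg (mul_nonneg hm0 hm0) hLA0
      constructor
      · have hpow : (2 * (m:ℝ) + 2) ^ (p+1) * ((2 * (m:ℝ) + 2) * L + 1) ^ (p+1)
            = ((2 * (m:ℝ) + 2) * ((2 * (m:ℝ) + 2) * L + 1)) * A := by
          rw [hAdef, pow_succ, pow_succ]; ring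
        rw [hpow]
        linarith [H1, H2, G1, G2, hD, hLA0, hθ1, hstep, ihφ]
      · have hpow : (2 * (m:ℝ) + 2) ^ (p+1+1) * ((2 * (m:ℝ) + 2) * L + 1) ^ (p+1)
            = ((2 * (m:ℝ) + 2) ^ 2 * ((2 * (m:ℝ) + 2) * L + 1)) * A := by
          rw [hAdef, pow_succ, pow_succ, pow_succ]; ring
        rw [hpow]
        have step1 : φ (p+1) ≤ (2*(m:ℝ)+2) * φ p
            + ((2*(m:ℝ)+1) * ((2*(m:ℝ))^2 + 4*m) + 2*m) * L * θ p := by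
          rw [hφ1]; linarith [h5, hstep, hμp']
        have step2 : (2*(m:ℝ)+2) * φ p ≤ ((2*(m:ℝ)+2) * (2*(m:ℝ)+2)) * A := by
          linarith [h6, ihφ]
        have step3 : ((2*(m:ℝ)+1) * ((2*(m:ℝ))^2 + 4*m) + 2*m) * L * θ p
            ≤ ((2*(m:ℝ)+2) * (2*(m:ℝ)+2) * (2*(m:ℝ)+2)) * (L * A) := by
          linarith [H1, H2, H3, G1, G2, hLA0, hD]
        linarith [step1, step2, step3]
  exact fun p => (main p).1
end

section
/- For every integer p ≥ 1 one has μ_p ≤ K^p(KL + 1)^p. -/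
/-- Key polynomial inequality for the inductive step. -/
lemma stmt5_key (K L t1 t0 u1 u0 v X : ℝ) (hK : 2 ≤ K) (hL : 0 < L) (hX : 1 ≤ X)
    (ht0 : 0 ≤ t0) (ht1 : 0 ≤ t1)
    (hu1 : u1 ≤ X * (K * (K * L + 1)))
    (hθ1 : (K - 1) * t1 ≤ K * (X * (K * (K * L + 1))))
    (hu0 : u0 ≤ X) (hθ0 : (K - 1) * t0 ≤ K * X)
    (hv : v ≤ (K - 1) * u1 + u0 + (K ^ 2 - 2 * K) * L * t1 + (K - 2) * L * t0) :
    v ≤ X * (K * (K * L + 1)) * (K * (K * L + 1)) := by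
  have hK1 : (0:ℝ) < K - 1 := by linarith
  have h1 : (K - 1) * v ≤ (K - 1) ^ 2 * u1 + (K - 1) * u0
      + (K ^ 2 - 2 * K) * L * ((K - 1) * t1) + (K - 2) * L * ((K - 1) * t0) := by
    nlinarith [mul_le_mul_of_nonneg_left hv (le_of_lt hK1)]
  have h2 : (K - 1) ^ 2 * u1 ≤ (K - 1) ^ 2 * (X * (K * (K * L + 1))) :=
    mul_le_mul_of_nonneg_left hu1 (by positivity)
  have h3 : (K - 1) * u0 ≤ (K - 1) * X := mul_le_mul_of_nonneg_left hu0 (le_of_lt hK1)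
  have hc1 : (0:ℝ) ≤ (K ^ 2 - 2 * K) * L := by nlinarith [mul_nonneg (mul_nonneg (show (0:ℝ) ≤ K by linarith) (show (0:ℝ) ≤ K - 2 by linarith)) hL.le]
  have hc2 : (0:ℝ) ≤ (K - 2) * L := mul_nonneg (by linarith) hL.le
  have h4 : (K ^ 2 - 2 * K) * L * ((K - 1) * t1)
      ≤ (K ^ 2 - 2 * K) * L * (K * (X * (K * (K * L + 1)))) :=
    mul_le_mul_of_nonneg_left hθ1 hc1
  have h5 : (K - 2) * L * ((K - 1) * t0) ≤ (K - 2) * L * (K * X) :=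
    mul_le_mul_of_nonneg_left hθ0 hc2
  have h6 : (K - 1) ^ 2 * (X * (K * (K * L + 1))) + (K - 1) * X
      + (K ^ 2 - 2 * K) * L * (K * (X * (K * (K * L + 1)))) + (K - 2) * L * (K * X)
      ≤ (K - 1) * (X * (K * (K * L + 1)) * (K * (K * L + 1))) := by
    have hD : 0 ≤ 1 - 2*K + K^2 + 2*K*L - 2*K^2*L + 2*K^3*L + K^4*L^2 := by
      nlinarith [sq_nonneg (K - 1), mul_nonneg (mul_nonneg hc2 hL.le) (sub_nonneg.2 hK),
        sq_nonneg (K^2 * L), mul_nonneg hc2 hL.le, mul_nonneg hc1 hL.le,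
        mul_nonneg (mul_nonneg hc1 hL.le) (sub_nonneg.2 hK)]
    nlinarith [mul_nonneg (sub_nonneg.2 hX)
      (le_of_lt (show (0:ℝ) < 1 - 2*K + K^2 + 2*K*L - 2*K^2*L + 2*K^3*L + K^4*L^2 + 0 from by nlinarith [hD]))]
  have : (K - 1) * v ≤ (K - 1) * (X * (K * (K * L + 1)) * (K * (K * L + 1))) := by linarith
  exact le_of_mul_le_mul_left this hK1

/-- Under the recursive estimates on `(θ_p)` and `(μ_p)`, with `K = 2m + 2`,
one has `μ_p ≤ K^p (KL + 1)^p` for every integer `p ≥ 1`. -/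
theorem stmt_5 (m : ℕ) (L : ℝ) (hL : 0 < L)
    (θ μ : ℕ → ℝ)
    (hθnn : ∀ p, 0 ≤ θ p) (hμnn : ∀ p, 0 ≤ μ p)
    (hμ0 : μ 0 = 0)
    (hμ1 : μ 1 ≤ ((2 * (m : ℝ)) ^ 2 + 4 * m) * L * θ 0 + 2 * m)
    (hμp : ∀ p : ℕ, 2 ≤ p →
      μ p ≤ (2 * (m : ℝ) + 1) * μ (p - 1) + μ (p - 2)
          + ((2 * (m : ℝ)) ^ 2 + 4 * m) * L * θ (p - 1) + 2 * m * L * θ (p - 2))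
    (K : ℝ) (hK : K = 2 * (m : ℝ) + 2)
    (φ : ℕ → ℝ) (hφ0 : φ 0 = 2 * m)
    (hφ : ∀ p : ℕ, 1 ≤ p →
      φ p = (2 * (m : ℝ) + 1) * μ p + μ (p - 1) + 2 * m * L * θ (p - 1))
    (hθ0 : θ 0 ≤ 1)
    (hθp : ∀ p : ℕ, 1 ≤ p → θ p ≤ L * θ (p - 1) + μ p) :
    ∀ p : ℕ, 1 ≤ p → μ p ≤ K ^ p * (K * L + 1) ^ p := by
  have hm : (0:ℝ) ≤ (m : ℝ) := Nat.cast_nonneg m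
  have hK2 : (2:ℝ) ≤ K := by rw [hK]; linarith
  set M : ℝ := K * (K * L + 1) with hM
  have hM1 : (1:ℝ) ≤ M := by
    have h1 : (1:ℝ) ≤ K * L + 1 := by nlinarith
    nlinarith
  have hLK : L * K ≤ M := by
    rw [hM]
    nlinarith [mul_nonneg (mul_nonneg hL.le (show (0:ℝ) ≤ K by linarith))
      (show (0:ℝ) ≤ K - 1 by linarith)]
  have main : ∀ p : ℕ, μ p ≤ M ^ p ∧ (K - 1) * θ p ≤ K * M ^ p := by
    intro p
    induction p using Nat.twoStepInduction with
    | zero =>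
      constructor
      · simp [hμ0]
      · simp only [pow_zero, mul_one]
        nlinarith [hθnn 0]
    | one =>
      have h0 := hθnn 0
      have hc : (0:ℝ) ≤ ((2 * (m:ℝ)) ^ 2 + 4 * m) * L := by positivity
      have hmu1 : μ 1 ≤ M ^ 1 := by
        have h2 : μ 1 ≤ ((2 * (m : ℝ)) ^ 2 + 4 * m) * L + 2 * m := by
          nlinarith [mul_le_mul_of_nonneg_left hθ0 hc]
        rw [pow_one, hM, hK]
        nlinarith [mul_nonneg hm hL.le]
      refine ⟨hmu1, ?_⟩
      have ht1 := hθp 1 le_rfl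
      norm_num at ht1
      have hθ0' : (K - 1) * θ 0 ≤ K := by nlinarith
      rw [pow_one]
      have hA : (K - 1) * θ 1 ≤ L * ((K - 1) * θ 0) + (K - 1) * μ 1 := by
        nlinarith [mul_le_mul_of_nonneg_left ht1 (show (0:ℝ) ≤ K - 1 by linarith)]
      have hB : L * ((K - 1) * θ 0) ≤ L * K := mul_le_mul_of_nonneg_left hθ0' hL.le
      have hC : (K - 1) * μ 1 ≤ (K - 1) * M := by
        rw [pow_one] at hmu1
        exact mul_le_mul_of_nonneg_left hmu1 (by linarith)
      linarith
    | more n ih0 ih1 =>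
      obtain ⟨iμ0, iθ0⟩ := ih0
      obtain ⟨iμ1, iθ1⟩ := ih1
      have hrec := hμp (n + 2) (by omega)
      simp only [show n + 2 - 1 = n + 1 from rfl, show n + 2 - 2 = n from rfl] at hrec
      have hrec' : μ (n + 2) ≤ (K - 1) * μ (n + 1) + μ n
          + (K ^ 2 - 2 * K) * L * θ (n + 1) + (K - 2) * L * θ n := by
        have e : (K - 1) * μ (n + 1) + μ n + (K ^ 2 - 2 * K) * L * θ (n + 1)
            + (K - 2) * L * θ n
            = (2 * (m:ℝ) + 1) * μ (n + 1) + μ n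
            + ((2 * (m:ℝ)) ^ 2 + 4 * m) * L * θ (n + 1) + 2 * m * L * θ n := by
          rw [hK]; ring
        rw [e]; exact hrec
      have hXn : (1:ℝ) ≤ M ^ n := one_le_pow₀ hM1
      have e1 : M ^ (n + 1) = M ^ n * M := pow_succ M n
      have e2 : M ^ (n + 2) = M ^ n * M * M := by rw [pow_succ, pow_succ]
      have hμ2 : μ (n + 2) ≤ M ^ n * M * M := by
        refine stmt5_key K L (θ (n+1)) (θ n) (μ (n+1)) (μ n) (μ (n+2)) (M ^ n)
          hK2 hL hXn (hθnn n) (hθnn (n+1)) ?_ ?_ iμ0 ?_ hrec'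
        · rw [← hM, ← e1]; exact iμ1
        · rw [← hM, ← e1]; exact iθ1
        · exact iθ0
      refine ⟨by rw [e2]; exact hμ2, ?_⟩
      have ht := hθp (n + 2) (by omega)
      simp only [show n + 2 - 1 = n + 1 from rfl] at ht
      have hKL : L * (K * M ^ (n + 1)) ≤ M ^ (n + 2) := by
        have hPM : (0:ℝ) ≤ M ^ (n + 1) := by positivity
        calc L * (K * M ^ (n + 1)) = (L * K) * M ^ (n + 1) := by ring
          _ ≤ M * M ^ (n + 1) := mul_le_mul_of_nonneg_right hLK hPM
          _ = M ^ (n + 2) := by rw [pow_succ]; ring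
      have h1 : (K - 1) * θ (n + 2) ≤ L * ((K - 1) * θ (n + 1)) + (K - 1) * μ (n + 2) := by
        nlinarith [mul_le_mul_of_nonneg_left ht (show (0:ℝ) ≤ K - 1 by linarith)]
      have h2 : L * ((K - 1) * θ (n + 1)) ≤ L * (K * M ^ (n + 1)) :=
        mul_le_mul_of_nonneg_left iθ1 hL.le
      have h3 : (K - 1) * μ (n + 2) ≤ (K - 1) * M ^ (n + 2) := by
        rw [e2]; exact mul_le_mul_of_nonneg_left hμ2 (by linarith)
      linarith
  intro p hp
  rw [← mul_pow]
  exact (main p).1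
end

section
/- There exist constants L > 0 and ε₀ > 0 such that for all 0 < ε < ε₀ the matrix e^{T_ε A_ε} − E is invertible and ‖(e^{T_ε A_ε} − E)⁻¹‖ < L ε⁻¹. -/
set_option maxHeartbeats 1000000
set_option linter.unusedSectionVars false
set_option linter.unnecessarySimpa false

open Matrix Finset

/-- The Frobenius norm of a complex matrix. -/
noncomputable def frobNorm {n : ℕ} (M : Matrix (Fin n) (Fin n) ℂ) : ℝ :=
  Real.sqrt (∑ i, ∑ j, ‖M i j‖ ^ 2)

namespace Stmt6Aux

section Algebra

variable {𝔸 : Type*} [NormedRing 𝔸] [NormedAlgebra ℂ 𝔸] [CompleteSpace 𝔸]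

/-- `g(x) = ∑ x^k/(k+1)!`, satisfying `x * g x = exp x - 1`. -/
noncomputable def gfun (x : 𝔸) : 𝔸 := ∑' k : ℕ, (((k+1).factorial : ℂ))⁻¹ • x ^ k

lemma norm_pow_le_aux (x : 𝔸) (r : ℝ) (hx : ‖x‖ ≤ r) (k : ℕ) :
    ‖x ^ k‖ ≤ max ‖(1 : 𝔸)‖ 1 * r ^ k := by
  induction k with
  | zero => simpa using le_max_left ‖(1:𝔸)‖ 1
  | succ k ih =>
      have h0 : (0:ℝ) ≤ r := le_trans (norm_nonneg x) hx
      calc ‖x ^ (k+1)‖ = ‖x * x ^ k‖ := by rw [pow_succ']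
        _ ≤ ‖x‖ * ‖x ^ k‖ := norm_mul_le _ _
        _ ≤ r * (max ‖(1 : 𝔸)‖ 1 * r ^ k) :=
            mul_le_mul hx ih (norm_nonneg _) h0
        _ = max ‖(1 : 𝔸)‖ 1 * r ^ (k+1) := by ring

omit [NormedRing 𝔸] in
lemma coeff_norm_le (k : ℕ) : ‖((((k+1).factorial : ℂ))⁻¹)‖ ≤ ((k.factorial : ℝ))⁻¹ := by
  rw [norm_inv]
  have h1 : ‖(((k+1).factorial : ℂ))‖ = (((k+1).factorial : ℝ)) := by
    rw [Complex.norm_natCast]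
  rw [h1]
  apply inv_anti₀
  · positivity
  · exact_mod_cast Nat.factorial_le (Nat.le_succ k)

lemma gfun_summable (x : 𝔸) :
    Summable (fun k : ℕ => ((((k+1).factorial : ℂ))⁻¹) • x ^ k) := by
  apply Summable.of_norm
  have hb : ∀ k : ℕ, ‖((((k+1).factorial : ℂ))⁻¹) • x ^ k‖
      ≤ max ‖(1:𝔸)‖ 1 * (‖x‖ ^ k / (k.factorial : ℝ)) := by
    intro k
    rw [norm_smul]
    have h2 := norm_pow_le_aux x ‖x‖ le_rfl k
    have h3 := coeff_norm_le k
    have h4 : (0:ℝ) < (k.factorial : ℝ) := by positivity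
    calc ‖((((k+1).factorial : ℂ))⁻¹)‖ * ‖x ^ k‖
        ≤ ((k.factorial : ℝ))⁻¹ * (max ‖(1:𝔸)‖ 1 * ‖x‖ ^ k) :=
          mul_le_mul h3 h2 (norm_nonneg _) (by positivity)
      _ = max ‖(1:𝔸)‖ 1 * (‖x‖ ^ k / (k.factorial : ℝ)) := by
          field_simp
  have hs : Summable (fun k : ℕ => max ‖(1:𝔸)‖ 1 * (‖x‖ ^ k / (k.factorial : ℝ))) :=
    (Real.summable_pow_div_factorial ‖x‖).mul_left _
  exact Summable.of_nonneg_of_le (fun k => norm_nonneg _) hb hs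

lemma mul_gfun (x : 𝔸) : x * gfun x = NormedSpace.exp x - 1 := by
  have hs := gfun_summable x
  have h1 : x * gfun x = ∑' k : ℕ, ((((k+1).factorial : ℂ))⁻¹) • x ^ (k+1) := by
    unfold gfun
    have := (ContinuousLinearMap.mul ℂ 𝔸 x).map_tsum hs
    simp only [ContinuousLinearMap.mul_apply'] at this
    rw [this]
    congr 1
    funext k
    rw [mul_smul_comm, ← pow_succ']
  have h2 : NormedSpace.exp x
      = 1 + ∑' k : ℕ, ((((k+1).factorial : ℂ))⁻¹) • x ^ (k+1) := by
    have he : NormedSpace.exp x = ∑' k : ℕ, ((k.factorial : ℂ))⁻¹ • x ^ k := by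
      rw [NormedSpace.exp_eq_tsum ℂ]
    rw [he, Summable.tsum_eq_zero_add (NormedSpace.expSeries_summable' (𝕂 := ℂ) x)]
    simp
  rw [h1, h2]
  abel

lemma gfun_zero : gfun (0 : 𝔸) = 1 := by
  unfold gfun
  rw [tsum_eq_single 0 (fun k hk => by
    rw [zero_pow hk, smul_zero])]
  simp

lemma norm_pow_sub_pow_le (x y : 𝔸) (r : ℝ) (hx : ‖x‖ ≤ r) (hy : ‖y‖ ≤ r) (k : ℕ) :
    ‖x ^ (k+1) - y ^ (k+1)‖ ≤ ((k:ℝ)+1) * (max ‖(1:𝔸)‖ 1 * r ^ k) * ‖x - y‖ := by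
  have h0 : (0:ℝ) ≤ r := le_trans (norm_nonneg x) hx
  have hM : (1:ℝ) ≤ max ‖(1:𝔸)‖ 1 := le_max_right _ _
  induction k with
  | zero => simpa using le_mul_of_one_le_left (norm_nonneg _) (by simpa using hM)
  | succ k ih =>
      have key : x ^ (k+2) - y ^ (k+2) = x * (x ^ (k+1) - y ^ (k+1)) + (x - y) * y ^ (k+1) := by
        rw [pow_succ' x (k+1), pow_succ' y (k+1)]
        noncomm_ring
      calc ‖x ^ (k+2) - y ^ (k+2)‖
          ≤ ‖x * (x ^ (k+1) - y ^ (k+1))‖ + ‖(x - y) * y ^ (k+1)‖ := by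
            rw [key]; exact norm_add_le _ _
        _ ≤ ‖x‖ * ‖x ^ (k+1) - y ^ (k+1)‖ + ‖x - y‖ * ‖y ^ (k+1)‖ :=
            add_le_add (norm_mul_le _ _) (norm_mul_le _ _)
        _ ≤ r * (((k:ℝ)+1) * (max ‖(1:𝔸)‖ 1 * r ^ k) * ‖x - y‖)
              + ‖x - y‖ * (max ‖(1:𝔸)‖ 1 * r ^ (k+1)) := by
            gcongr
            exact norm_pow_le_aux y r hy (k+1)
        _ = (((k:ℝ)+1)+1) * (max ‖(1:𝔸)‖ 1 * r ^ (k+1)) * ‖x - y‖ := by ring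
        _ = (((k+1:ℕ):ℝ)+1) * (max ‖(1:𝔸)‖ 1 * r ^ (k+1)) * ‖x - y‖ := by push_cast; ring

lemma gfun_lip_exists (r : ℝ) (hr : 0 ≤ r) :
    ∃ C : ℝ, 0 ≤ C ∧ ∀ x y : 𝔸, ‖x‖ ≤ r → ‖y‖ ≤ r →
      ‖gfun x - gfun y‖ ≤ C * ‖x - y‖ := by
  set M := max ‖(1:𝔸)‖ 1 with hM
  have hM0 : (0:ℝ) ≤ M := le_trans zero_le_one (le_max_right _ _)
  set u : ℕ → ℝ := fun k => if k = 0 then 0 else M * (r ^ (k-1) / ((k-1).factorial : ℝ)) with hu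
  have hu1 : ∀ m : ℕ, u (m+1) = M * (r ^ m / (m.factorial : ℝ)) := fun m => by simp [hu]
  have hus : Summable u := by
    rw [← summable_nat_add_iff 1]
    simpa [hu1] using ((Real.summable_pow_div_factorial r).mul_left M)
  refine ⟨∑' k, u k, tsum_nonneg (fun k => ?_), fun x y hx hy => ?_⟩
  · by_cases h : k = 0
    · simp [hu, h]
    · have : u k = M * (r ^ (k-1) / ((k-1).factorial : ℝ)) := by simp [hu, h]
      rw [this]; positivity
  · have hsx := gfun_summable x
    have hsy := gfun_summable y
    have hdiff : gfun x - gfun y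
        = ∑' k : ℕ, ((((k+1).factorial : ℂ))⁻¹) • (x ^ k - y ^ k) := by
      unfold gfun
      rw [← Summable.tsum_sub hsx hsy]
      congr 1; funext k; rw [smul_sub]
    rw [hdiff]
    have hbound : ∀ k : ℕ,
        ‖((((k+1).factorial : ℂ))⁻¹) • (x ^ k - y ^ k)‖ ≤ u k * ‖x - y‖ := by
      intro k
      cases k with
      | zero => simp [hu]
      | succ m =>
          rw [norm_smul, hu1]
          have h1 := coeff_norm_le (m+1)
          have h2 := norm_pow_sub_pow_le x y r hx hy m
          have h3 : (0:ℝ) < ((m+1).factorial : ℝ) := by positivity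
          calc ‖((((m+1)+1).factorial : ℂ))⁻¹‖ * ‖x ^ (m+1) - y ^ (m+1)‖
              ≤ (((m+1).factorial : ℝ))⁻¹ * (((m:ℝ)+1) * (M * r ^ m) * ‖x - y‖) :=
                mul_le_mul h1 h2 (norm_nonneg _) (by positivity)
            _ = M * (r ^ m / (m.factorial : ℝ)) * ‖x - y‖ := by
                rw [Nat.factorial_succ]
                have hm0 : ((m.factorial : ℝ)) ≠ 0 := by positivity
                push_cast
                field_simp
    exact tsum_of_norm_bounded (hus.hasSum.mul_right _) hbound

end Algebra

end Stmt6Aux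
section MatrixPart

open Stmt6Aux

attribute [local instance] Matrix.frobeniusSeminormedAddCommGroup
  Matrix.frobeniusNormedAddCommGroup Matrix.frobeniusNormedRing
  Matrix.frobeniusNormedSpace Matrix.frobeniusNormedAlgebra

namespace Stmt6Aux

variable {n : ℕ}

noncomputable local instance : CompleteSpace (Matrix (Fin n) (Fin n) ℂ) :=
  FiniteDimensional.complete ℂ _

/-- Apply a matrix to a fixed vector, as a continuous linear map in the matrix. -/
noncomputable def mulVecByL (y : Fin n → ℂ) :
    Matrix (Fin n) (Fin n) ℂ →L[ℂ] (Fin n → ℂ) :=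
  LinearMap.toContinuousLinearMap
    { toFun := fun M => M.mulVec y
      map_add' := fun M N => Matrix.add_mulVec M N y
      map_smul' := fun c M => Matrix.smul_mulVec c M y }

lemma mulVecByL_apply (y : Fin n → ℂ) (M : Matrix (Fin n) (Fin n) ℂ) :
    mulVecByL y M = M.mulVec y := rfl

lemma gfun_mulVec (B : Matrix (Fin n) (Fin n) ℂ) (y : Fin n → ℂ) (μ : ℂ)
    (hy : B.mulVec y = μ • y) : (gfun B).mulVec y = gfun μ • y := by
  have hpow : ∀ k : ℕ, (B ^ k).mulVec y = (μ ^ k) • y := by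
    intro k
    induction k with
    | zero => simp [Matrix.one_mulVec]
    | succ k ih =>
        rw [pow_succ', ← Matrix.mulVec_mulVec, ih, Matrix.mulVec_smul, hy,
          smul_smul, ← pow_succ]
  have h1 : (gfun B).mulVec y = ∑' k : ℕ, ((((k+1).factorial : ℂ))⁻¹) • (μ ^ k) • y := by
    erw [← mulVecByL_apply, gfun, (mulVecByL y).map_tsum (gfun_summable B)]
    congr 1
    funext k
    rw [(mulVecByL y).map_smul, mulVecByL_apply, hpow]
  have h2 : ∀ k : ℕ, ((((k+1).factorial : ℂ))⁻¹) • (μ ^ k) • y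
      = (((((k+1).factorial : ℂ))⁻¹) • μ ^ k) • y := by
    intro k; rw [smul_smul, smul_eq_mul]
  rw [h1]
  simp_rw [h2]
  have hL := (LinearMap.toContinuousLinearMap
    (LinearMap.toSpanSingleton ℂ (Fin n → ℂ) y)).map_tsum (gfun_summable (𝔸 := ℂ) μ)
  simpa [LinearMap.toSpanSingleton_apply, gfun] using hL.symm

lemma commute_gfun (A B : Matrix (Fin n) (Fin n) ℂ) (hc : Commute A B) :
    A * gfun B = gfun B * A := by
  have h1 := (ContinuousLinearMap.mul ℂ (Matrix (Fin n) (Fin n) ℂ) A).map_tsum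
    (gfun_summable B)
  have h2 := ((ContinuousLinearMap.mul ℂ (Matrix (Fin n) (Fin n) ℂ)).flip A).map_tsum
    (gfun_summable B)
  simp only [ContinuousLinearMap.mul_apply', ContinuousLinearMap.flip_apply] at h1 h2
  simp only [gfun]
  rw [h1, h2]
  congr 1
  funext k
  rw [mul_smul_comm, smul_mul_assoc, (hc.pow_right k).eq]

lemma gfun_isUnit (A : Matrix (Fin n) (Fin n) ℂ) (t : ℂ)
    (h : ∀ μ : ℂ, (∃ y : Fin n → ℂ, y ≠ 0 ∧ A.mulVec y = μ • y) → gfun (t * μ) ≠ (0:ℂ)) :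
    IsUnit (gfun (t • A)) := by
  by_contra hG
  rw [Matrix.isUnit_iff_isUnit_det, isUnit_iff_ne_zero, not_not] at hG
  obtain ⟨v, hv0, hv⟩ := Matrix.exists_mulVec_eq_zero_iff.mpr hG
  set G := gfun (t • A) with hGdef
  have hcomm : A * G = G * A := commute_gfun A (t • A) ((Commute.refl A).smul_right t)
  have hSinv : ∀ x ∈ LinearMap.ker (Matrix.mulVecLin G),
      (Matrix.mulVecLin A) x ∈ LinearMap.ker (Matrix.mulVecLin G) := by
    intro x hx
    rw [LinearMap.mem_ker] at hx ⊢
    simp only [Matrix.mulVecLin_apply] at hx ⊢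
    rw [Matrix.mulVec_mulVec, ← hcomm, ← Matrix.mulVec_mulVec, hx, Matrix.mulVec_zero]
  have hvS : v ∈ LinearMap.ker (Matrix.mulVecLin G) := by
    rw [LinearMap.mem_ker]
    simpa [Matrix.mulVecLin_apply] using hv
  haveI : Nontrivial (LinearMap.ker (Matrix.mulVecLin G)) :=
    ⟨⟨⟨v, hvS⟩, 0, by simp [Subtype.ext_iff, hv0]⟩⟩
  obtain ⟨μ, hμ⟩ := Module.End.exists_eigenvalue ((Matrix.mulVecLin A).restrict hSinv)
  obtain ⟨y, hy⟩ := hμ.exists_hasEigenvector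
  have hy0 : (y : Fin n → ℂ) ≠ 0 := fun hh => hy.right (by
    apply Subtype.ext; simpa using hh)
  have hyA : A.mulVec (y : Fin n → ℂ) = μ • (y : Fin n → ℂ) := by
    have := hy.apply_eq_smul
    have h2 := congrArg Subtype.val this
    simpa [LinearMap.restrict_apply, Matrix.mulVecLin_apply] using h2
  have hBy : (t • A).mulVec (y : Fin n → ℂ) = (t * μ) • (y : Fin n → ℂ) := by
    rw [Matrix.smul_mulVec, hyA, smul_smul]
  have hGy := gfun_mulVec (t • A) (y : Fin n → ℂ) (t * μ) hBy
  have hzero : G.mulVec (y : Fin n → ℂ) = 0 := by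
    have h2 := y.2
    rw [LinearMap.mem_ker] at h2
    rw [← Matrix.mulVecLin_apply]
    exact h2
  rw [hzero] at hGy
  have := (smul_eq_zero.mp hGy.symm).resolve_right hy0
  exact h μ ⟨y, hy0, hyA⟩ this

lemma charpoly_eval (A : Matrix (Fin n) (Fin n) ℂ) (μ : ℂ) :
    A.charpoly.eval μ = (μ • (1 : Matrix (Fin n) (Fin n) ℂ) - A).det := by
  rw [Matrix.charpoly, ← Polynomial.coe_evalRingHom, RingHom.map_det]
  congr 1
  ext i j
  by_cases hij : i = j
  · subst hij
    simp [Matrix.charmatrix_apply_eq, Matrix.sub_apply, Matrix.smul_apply, Matrix.one_apply]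
  · simp [Matrix.charmatrix_apply_ne _ _ _ hij, Matrix.sub_apply, Matrix.smul_apply,
      Matrix.one_apply_ne hij]

lemma eigen_root (A : Matrix (Fin n) (Fin n) ℂ) (lam : Fin n → ℂ)
    (hchar : A.charpoly = ∏ j, (Polynomial.X - Polynomial.C (lam j)))
    (μ : ℂ) (y : Fin n → ℂ) (hy0 : y ≠ 0) (hy : A.mulVec y = μ • y) :
    ∃ j, μ = lam j := by
  have hdet : (μ • (1 : Matrix (Fin n) (Fin n) ℂ) - A).det = 0 := by
    rw [← Matrix.exists_mulVec_eq_zero_iff]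
    refine ⟨y, hy0, ?_⟩
    rw [Matrix.sub_mulVec, hy, Matrix.smul_mulVec, Matrix.one_mulVec, sub_self]
  have h0 : A.charpoly.eval μ = 0 := by rw [charpoly_eval]; exact hdet
  rw [hchar, Polynomial.eval_prod] at h0
  obtain ⟨j, -, hj⟩ := Finset.prod_eq_zero_iff.mp h0
  simp only [Polynomial.eval_sub, Polynomial.eval_X, Polynomial.eval_C] at hj
  exact ⟨j, sub_eq_zero.mp hj⟩

lemma ker_exists (A : Matrix (Fin n) (Fin n) ℂ) (lam : Fin n → ℂ)
    (hchar : A.charpoly = ∏ j, (Polynomial.X - Polynomial.C (lam j)))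
    (j₀ : Fin n) (h0 : lam j₀ = 0) :
    ∃ v : Fin n → ℂ, v ≠ 0 ∧ A.mulVec v = 0 := by
  have h1 : A.charpoly.eval 0 = 0 := by
    rw [hchar, Polynomial.eval_prod]
    refine Finset.prod_eq_zero (Finset.mem_univ j₀) ?_
    simp [h0]
  have h2 : ((0:ℂ) • (1 : Matrix (Fin n) (Fin n) ℂ) - A).det = 0 := by
    rw [← charpoly_eval]; exact h1
  rw [zero_smul, zero_sub, Matrix.det_neg] at h2
  have h3 : A.det = 0 := by
    rcases mul_eq_zero.mp h2 with h | h
    · exact absurd h (pow_ne_zero _ (neg_ne_zero.mpr one_ne_zero))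
    · exact h
  obtain ⟨v, hv0, hv⟩ := Matrix.exists_mulVec_eq_zero_iff.mpr h3
  exact ⟨v, hv0, hv⟩

lemma near_unit (W : Matrix (Fin n) (Fin n) ℂ) (hW : IsUnit W) :
    ∃ δ : ℝ, 0 < δ ∧ ∃ C : ℝ, 0 < C ∧ ∀ Z : Matrix (Fin n) (Fin n) ℂ,
      ‖Z - W‖ < δ → IsUnit Z ∧ ‖Z⁻¹‖ ≤ C := by
  have hopen : IsOpen {x : Matrix (Fin n) (Fin n) ℂ | IsUnit x} := Units.isOpen
  have hc : ContinuousAt Ring.inverse W := by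
    have := NormedRing.inverse_continuousAt hW.unit
    rwa [IsUnit.unit_spec] at this
  rcases Metric.continuousAt_iff.mp hc 1 one_pos with ⟨δ₁, hδ₁, hball⟩
  rcases Metric.isOpen_iff.mp hopen W hW with ⟨δ₂, hδ₂, hsub⟩
  refine ⟨min δ₁ δ₂, lt_min hδ₁ hδ₂, ‖Ring.inverse W‖ + 1, by positivity, fun Z hZ => ?_⟩
  have hdist : dist Z W < min δ₁ δ₂ := by rwa [dist_eq_norm]
  have hunit : IsUnit Z := hsub (Metric.mem_ball.mpr (lt_of_lt_of_le hdist (min_le_right _ _)))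
  have hn := hball (lt_of_lt_of_le hdist (min_le_left _ _))
  rw [dist_eq_norm] at hn
  refine ⟨hunit, ?_⟩
  rw [Matrix.nonsing_inv_eq_ringInverse]
  have h3 := norm_sub_norm_le (Ring.inverse Z) (Ring.inverse W)
  linarith

/-- The matrix whose columns are the given vectors. -/
def colMat (v : Fin n → (Fin n → ℂ)) : Matrix (Fin n) (Fin n) ℂ :=
  Matrix.of fun i j => v j i

lemma colMat_apply (v : Fin n → (Fin n → ℂ)) (i j : Fin n) : colMat v i j = v j i := rfl

lemma mul_colMat (M : Matrix (Fin n) (Fin n) ℂ) (v : Fin n → (Fin n → ℂ)) :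
    M * colMat v = colMat (fun j => M.mulVec (v j)) := by
  ext i j
  simp [colMat, Matrix.mul_apply, Matrix.mulVec, dotProduct]

lemma isUnit_colMat (hn : 0 < n) (v : Fin n → (Fin n → ℂ)) (hv : LinearIndependent ℂ v) :
    IsUnit (colMat v) := by
  haveI : Nonempty (Fin n) := ⟨⟨0, hn⟩⟩
  have hcard : Fintype.card (Fin n) = Module.finrank ℂ (Fin n → ℂ) := by
    simp [Module.finrank_fintype_fun_eq_card]
  let b := basisOfLinearIndependentOfCardEqFinrank hv hcard
  haveI := (Pi.basisFun ℂ (Fin n)).invertibleToMatrix b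
  have heq : (Pi.basisFun ℂ (Fin n)).toMatrix ⇑b = colMat v := by
    ext i j
    rw [Module.Basis.toMatrix_apply, Pi.basisFun_repr]
    have : ⇑b = v := coe_basisOfLinearIndependentOfCardEqFinrank hv hcard
    rw [this]
    rfl
  rw [← heq]
  exact isUnit_of_invertible _

lemma frobNorm_eq (M : Matrix (Fin n) (Fin n) ℂ) : frobNorm M = ‖M‖ := by
  rw [frobNorm, Matrix.frobenius_norm_def, Real.sqrt_eq_rpow]
  congr 1
  refine Finset.sum_congr rfl fun i _ => Finset.sum_congr rfl fun j _ => ?_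
  rw [show ((2:ℝ)) = ((2:ℕ):ℝ) by norm_num, Real.rpow_natCast]

lemma norm_le_entries (M : Matrix (Fin n) (Fin n) ℂ) (b : ℝ) (hb : 0 ≤ b)
    (h : ∀ i j, ‖M i j‖ ≤ b) : ‖M‖ ≤ (n:ℝ) * b := by
  rw [← frobNorm_eq, frobNorm]
  have h1 : (∑ i, ∑ j, ‖M i j‖^2) ≤ ((n:ℝ) * b)^2 := by
    calc ∑ i, ∑ j, ‖M i j‖^2 ≤ ∑ _i : Fin n, ∑ _j : Fin n, b^2 := by
          refine Finset.sum_le_sum fun i _ => Finset.sum_le_sum fun j _ => ?_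
          exact pow_le_pow_left₀ (norm_nonneg _) (h i j) 2
      _ = ((n:ℝ))^2 * b^2 := by simp [Finset.sum_const]; ring
      _ = ((n:ℝ) * b)^2 := by ring
  calc Real.sqrt (∑ i, ∑ j, ‖M i j‖^2) ≤ Real.sqrt (((n:ℝ)*b)^2) := Real.sqrt_le_sqrt h1
    _ = (n:ℝ) * b := Real.sqrt_sq (by positivity)

lemma mulVec_sum_smul (M : Matrix (Fin n) (Fin n) ℂ) (s : Finset (Fin n))
    (c : Fin n → ℂ) (b : Fin n → (Fin n → ℂ)) :
    M.mulVec (∑ j ∈ s, c j • b j) = ∑ j ∈ s, c j • M.mulVec (b j) := by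
  rw [← Matrix.mulVecLin_apply, map_sum]
  refine Finset.sum_congr rfl fun j _ => ?_
  rw [LinearMap.map_smul, Matrix.mulVecLin_apply]

lemma decomp (hn : 0 < n) (A₀ A₁ : Matrix (Fin n) (Fin n) ℂ)
    (hker : ∃ v : Fin n → ℂ, v ≠ 0 ∧ A₀.mulVec v = 0)
    (hnodeg : ∀ a : Fin n → ℂ, a ≠ 0 → A₀.mulVec a = 0 →
      ∀ x : Fin n → ℂ, A₀.mulVec x ≠ -A₁.mulVec a) :
    ∃ (P W V : Matrix (Fin n) (Fin n) ℂ) (S : Finset (Fin n)),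
      IsUnit P ∧ IsUnit W ∧
      ∀ ε : ℂ, (A₀ + ε • A₁) * P =
        (W + ε • V) * Matrix.diagonal (fun j => if j ∈ S then ε else 1) := by
  classical
  obtain ⟨v, hv0, hvker⟩ := hker
  obtain ⟨Kc, hcompl⟩ := Submodule.exists_isCompl (LinearMap.ker (Matrix.mulVecLin A₀))
  set K := LinearMap.ker (Matrix.mulVecLin A₀) with hK
  have hrank : Module.finrank ℂ K + Module.finrank ℂ Kc = n := by
    rw [Submodule.finrank_add_eq_of_isCompl hcompl, Module.finrank_fintype_fun_eq_card,
      Fintype.card_fin]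
  set g := Module.finrank ℂ K with hgdef
  set w := Module.finrank ℂ Kc with hwdef
  have hvK : v ∈ K := by
    rw [hK, LinearMap.mem_ker, Matrix.mulVecLin_apply]
    exact hvker
  haveI : Nontrivial K := ⟨⟨⟨v, hvK⟩, 0, by simp [Subtype.ext_iff, hv0]⟩⟩
  set bK := Module.finBasis ℂ K with hbK
  set bKc := Module.finBasis ℂ Kc with hbKc
  set vfam : (Fin g ⊕ Fin w) → (Fin n → ℂ) :=
    Sum.elim (fun i => (bK i : Fin n → ℂ)) (fun i => (bKc i : Fin n → ℂ)) with hvfam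
  have hliK : LinearIndependent ℂ (fun i => (bK i : Fin n → ℂ)) :=
    bK.linearIndependent.map' K.subtype K.ker_subtype
  have hliKc : LinearIndependent ℂ (fun i => (bKc i : Fin n → ℂ)) :=
    bKc.linearIndependent.map' Kc.subtype Kc.ker_subtype
  have hspanK : Submodule.span ℂ (Set.range (fun i => (bK i : Fin n → ℂ))) = K := by
    have h1 : (fun i => (bK i : Fin n → ℂ)) = K.subtype ∘ bK := rfl
    rw [h1, Set.range_comp, Submodule.span_image, bK.span_eq, Submodule.map_subtype_top]
  have hspanKc : Submodule.span ℂ (Set.range (fun i => (bKc i : Fin n → ℂ))) = Kc := by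
    have h1 : (fun i => (bKc i : Fin n → ℂ)) = Kc.subtype ∘ bKc := rfl
    rw [h1, Set.range_comp, Submodule.span_image, bKc.span_eq, Submodule.map_subtype_top]
  have hli : LinearIndependent ℂ vfam :=
    LinearIndependent.sum_type hliK hliKc (by rw [hspanK, hspanKc]; exact hcompl.disjoint)
  set e : (Fin g ⊕ Fin w) ≃ Fin n := finSumFinEquiv.trans (finCongr hrank) with he
  set b : Fin n → (Fin n → ℂ) := vfam ∘ e.symm with hb
  have hbli : LinearIndependent ℂ b := hli.comp e.symm e.symm.injective
  set S : Finset (Fin n) := Finset.univ.filter (fun j => (e.symm j).isLeft) with hS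
  have hmemS : ∀ j ∈ S, b j ∈ K := by
    intro j hj
    rw [hS, Finset.mem_filter] at hj
    obtain ⟨i, hi⟩ := Sum.isLeft_iff.mp hj.2
    rw [hb]
    simp only [Function.comp_apply, hi, hvfam, Sum.elim_inl]
    exact (bK i).2
  have hmemKc : ∀ j ∉ S, b j ∈ Kc := by
    intro j hj
    rw [hS, Finset.mem_filter] at hj
    push_neg at hj
    have hright : (e.symm j).isRight := Sum.not_isLeft.mp (hj (Finset.mem_univ j))
    obtain ⟨i, hi⟩ := Sum.isRight_iff.mp hright
    rw [hb]
    simp only [Function.comp_apply, hi, hvfam, Sum.elim_inr]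
    exact (bKc i).2
  have hbker : ∀ j ∈ S, A₀.mulVec (b j) = 0 := by
    intro j hj
    have := hmemS j hj
    rw [hK, LinearMap.mem_ker, Matrix.mulVecLin_apply] at this
    exact this
  have hfS : Finset.univ.filter (fun j => j ∈ S) = S := by
    ext j; simp
  refine ⟨colMat b,
    colMat (fun j => if j ∈ S then A₁.mulVec (b j) else A₀.mulVec (b j)),
    colMat (fun j => if j ∈ S then 0 else A₁.mulVec (b j)), S,
    isUnit_colMat hn b hbli, ?_, ?_⟩
  · -- the limit matrix W has independent columns
    apply isUnit_colMat hn
    rw [Fintype.linearIndependent_iff]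
    intro c hc
    have hsplit : (∑ j, c j • (if j ∈ S then A₁.mulVec (b j) else A₀.mulVec (b j)))
        = A₁.mulVec (∑ j ∈ S, c j • b j)
          + A₀.mulVec (∑ j ∈ Finset.univ.filter (fun j => ¬ j ∈ S), c j • b j) := by
      rw [← Finset.sum_filter_add_sum_filter_not Finset.univ (fun j => j ∈ S), hfS,
        mulVec_sum_smul, mulVec_sum_smul]
      congr 1
      · refine Finset.sum_congr rfl fun j hj => ?_
        rw [if_pos hj]
      · refine Finset.sum_congr rfl fun j hj => ?_
        rw [Finset.mem_filter] at hj
        rw [if_neg hj.2]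
    rw [hsplit] at hc
    set a := ∑ j ∈ S, c j • b j with ha
    set x := ∑ j ∈ Finset.univ.filter (fun j => ¬ j ∈ S), c j • b j with hx
    have haK : a ∈ K := Submodule.sum_mem _ (fun j hj => Submodule.smul_mem _ _ (hmemS j hj))
    have haker : A₀.mulVec a = 0 := by
      have := haK; rw [hK, LinearMap.mem_ker, Matrix.mulVecLin_apply] at this; exact this
    have heq : A₀.mulVec x = -A₁.mulVec a := by
      have := hc
      rw [add_comm] at this
      linear_combination (norm := module) this
    have ha0 : a = 0 := by
      by_contra hne
      exact hnodeg a hne haker x heq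
    -- coefficients on S vanish
    have hcS : ∀ j ∈ S, c j = 0 := by
      have hzero : (∑ j, (if j ∈ S then c j else 0) • b j) = 0 := by
        have h1 : (∑ j, (if j ∈ S then c j else 0) • b j)
            = ∑ j ∈ Finset.univ.filter (fun j => j ∈ S), c j • b j := by
          rw [Finset.sum_filter]
          refine Finset.sum_congr rfl fun j _ => ?_
          by_cases hj : j ∈ S <;> simp [hj]
        rw [h1, hfS, ← ha, ha0]
      have := Fintype.linearIndependent_iff.mp hbli _ hzero
      intro j hj
      have h2 := this j
      rwa [if_pos hj] at h2
    -- x = 0 as well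
    have hx0 : x = 0 := by
      have hxK : x ∈ K := by
        rw [hK, LinearMap.mem_ker, Matrix.mulVecLin_apply]
        rw [heq, ha0, Matrix.mulVec_zero, neg_zero]
      have hxKc : x ∈ Kc := Submodule.sum_mem _ (fun j hj => by
        rw [Finset.mem_filter] at hj
        exact Submodule.smul_mem _ _ (hmemKc j hj.2))
      exact Submodule.disjoint_def.mp hcompl.disjoint x hxK hxKc
    have hcKc : ∀ j ∉ S, c j = 0 := by
      have hzero : (∑ j, (if j ∈ S then 0 else c j) • b j) = 0 := by
        have h1 : (∑ j, (if j ∈ S then 0 else c j) • b j)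
            = ∑ j ∈ Finset.univ.filter (fun j => ¬ j ∈ S), c j • b j := by
          rw [Finset.sum_filter]
          refine Finset.sum_congr rfl fun j _ => ?_
          by_cases hj : j ∈ S <;> simp [hj]
        rw [h1, ← hx, hx0]
      have := Fintype.linearIndependent_iff.mp hbli _ hzero
      intro j hj
      have h2 := this j
      rwa [if_neg hj] at h2
    intro j
    by_cases hj : j ∈ S
    · exact hcS j hj
    · exact hcKc j hj
  · -- the factorization identity
    intro ε
    rw [mul_colMat]
    ext i j
    rw [Matrix.mul_diagonal]
    by_cases hj : j ∈ S
    · have hb0 : A₀.mulVec (b j) i = 0 := by rw [hbker j hj]; rfl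
      simp only [colMat_apply, if_pos hj, Matrix.add_apply, Matrix.smul_apply,
        Matrix.add_mulVec, Matrix.smul_mulVec, Pi.add_apply, Pi.smul_apply,
        smul_eq_mul, hb0, smul_zero, mul_zero, Pi.zero_apply]
      ring
    · simp only [colMat_apply, if_neg hj, Matrix.add_apply, Matrix.smul_apply,
        Matrix.add_mulVec, Matrix.smul_mulVec, Pi.add_apply, Pi.smul_apply,
        smul_eq_mul]
      ring

theorem main
    (n p : ℕ) (hp : 1 ≤ p) (hpn : p ≤ n)
    (A₀ A₁ : Matrix (Fin n) (Fin n) ℂ)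
    (lam : Fin n → ℂ)
    (hchar : A₀.charpoly = ∏ j, (Polynomial.X - Polynomial.C (lam j)))
    (hzero : ∀ j : Fin n, (j : ℕ) < p ↔ lam j = 0)
    (hnodeg : ∀ a : Fin n → ℂ, a ≠ 0 → A₀.mulVec a = 0 →
      ∀ x : Fin n → ℂ, A₀.mulVec x ≠ -A₁.mulVec a)
    (T : ℝ) (hT : 0 < T)
    (hTlam : ∀ j : Fin n, p ≤ (j : ℕ) → ∀ k : ℤ,
      (T : ℂ) * lam j ≠ 2 * (k : ℂ) * (Real.pi : ℂ) * Complex.I) :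
    ∃ L : ℝ, 0 < L ∧ ∃ ε₀ : ℝ, 0 < ε₀ ∧ ∀ ε : ℝ, 0 < ε → ε < ε₀ →
      IsUnit (NormedSpace.exp
          (((↑(⌊T / (2 * Real.pi * ε)⌋) : ℝ) * (2 * Real.pi * ε)) •
            (A₀ + (ε : ℂ) • A₁)) - 1) ∧
      frobNorm ((NormedSpace.exp
          (((↑(⌊T / (2 * Real.pi * ε)⌋) : ℝ) * (2 * Real.pi * ε)) •
            (A₀ + (ε : ℂ) • A₁)) - 1)⁻¹) < L / ε := by
  classical
  have hn : 0 < n := lt_of_lt_of_le hp hpn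
  have hπ : 0 < Real.pi := Real.pi_pos
  -- a kernel vector of A₀ exists
  have hj₀ : lam ⟨0, hn⟩ = 0 := (hzero ⟨0, hn⟩).mp (by show 0 < p; omega)
  have hker := ker_exists A₀ lam hchar ⟨0, hn⟩ hj₀
  obtain ⟨P, W, V, S, hP, hW, hEq⟩ := decomp hn A₀ A₁ hker hnodeg
  -- invertibility of the limit matrix gfun (T • A₀)
  have hG₀ : IsUnit (gfun ((T:ℂ) • A₀)) := by
    apply gfun_isUnit
    rintro μ ⟨y, hy0, hyA⟩ hzero'
    obtain ⟨j, rfl⟩ := eigen_root A₀ lam hchar μ y hy0 hyA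
    by_cases hl0 : lam j = 0
    · rw [hl0, mul_zero, gfun_zero] at hzero'
      exact one_ne_zero hzero'
    · have hjp : p ≤ (j:ℕ) := le_of_not_gt (fun hlt => hl0 ((hzero j).mp hlt))
      have hmg := mul_gfun ((T:ℂ) * lam j)
      rw [hzero', mul_zero] at hmg
      have hexp : Complex.exp ((T:ℂ) * lam j) = 1 := by
        rw [Complex.exp_eq_exp_ℂ]
        exact sub_eq_zero.mp hmg.symm
      obtain ⟨k, hk⟩ := Complex.exp_eq_one_iff.mp hexp
      exact hTlam j hjp k (by rw [hk]; ring)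
  obtain ⟨δW, hδW, CW, hCW, hnearW⟩ := near_unit W hW
  obtain ⟨δG, hδG, CG, hCG, hnearG⟩ := near_unit _ hG₀
  set r : ℝ := ‖(T:ℂ) • A₀‖ + 1 with hr
  have hr0 : 0 ≤ r := by positivity
  obtain ⟨CL, hCL, hlip⟩ := gfun_lip_exists (𝔸 := Matrix (Fin n) (Fin n) ℂ) r hr0
  set Cb : ℝ := 2 * Real.pi * ‖A₀‖ + T * ‖A₁‖ + 1 with hCb
  have hCb0 : 0 < Cb := by positivity
  set CP : ℝ := ‖P‖ + 1 with hCP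
  have hCP0 : 0 < CP := by positivity
  set L' : ℝ := (2 / T) * (CG * (CP * ((n:ℝ) * CW))) with hL'
  have hL'0 : 0 ≤ L' := by
    apply mul_nonneg (div_nonneg (by norm_num) hT.le)
    exact mul_nonneg hCG.le (mul_nonneg hCP0.le (mul_nonneg (Nat.cast_nonneg n) hCW.le))
  set ε₀ : ℝ := min 1 (min (T / (4 * Real.pi))
      (min (δW / (‖V‖ + 1)) (min (δG / ((CL + 1) * Cb)) (1 / Cb)))) with hε₀
  have hε₀pos : 0 < ε₀ := by
    refine lt_min one_pos (lt_min (by positivity) (lt_min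
      (div_pos hδW (by positivity)) (lt_min
      (div_pos hδG (mul_pos (by linarith) hCb0)) (div_pos one_pos hCb0))))
  refine ⟨L' + 1, by linarith, ε₀, hε₀pos, ?_⟩
  intro ε hε hεε₀
  have hε1 : ε ≤ 1 := le_of_lt (lt_of_lt_of_le hεε₀ (min_le_left _ _))
  have hεT4 : ε ≤ T / (4 * Real.pi) :=
    le_of_lt (lt_of_lt_of_le hεε₀ ((min_le_right _ _).trans (min_le_left _ _)))
  have hεδW : ε < δW / (‖V‖ + 1) :=
    lt_of_lt_of_le hεε₀ ((min_le_right _ _).trans ((min_le_right _ _).trans (min_le_left _ _)))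
  have hεδG : ε < δG / ((CL + 1) * Cb) :=
    lt_of_lt_of_le hεε₀ ((min_le_right _ _).trans ((min_le_right _ _).trans
      ((min_le_right _ _).trans (min_le_left _ _))))
  have hεCb : ε ≤ 1 / Cb :=
    le_of_lt (lt_of_lt_of_le hεε₀ ((min_le_right _ _).trans ((min_le_right _ _).trans
      ((min_le_right _ _).trans (min_le_right _ _)))))
  -- the time value
  set t : ℝ := (↑(⌊T / (2 * Real.pi * ε)⌋) : ℝ) * (2 * Real.pi * ε) with ht
  have hc0 : 0 < 2 * Real.pi * ε := by positivity
  have htle : t ≤ T := by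
    have h1 := Int.floor_le (T / (2 * Real.pi * ε))
    have h2 := mul_le_mul_of_nonneg_right h1 hc0.le
    rwa [div_mul_cancel₀ T hc0.ne'] at h2
  have htge : T - 2 * Real.pi * ε ≤ t := by
    have h1 := (Int.sub_one_lt_floor (T / (2 * Real.pi * ε))).le
    have h2 := mul_le_mul_of_nonneg_right h1 hc0.le
    have h3 : (T / (2 * Real.pi * ε) - 1) * (2 * Real.pi * ε) = T - 2 * Real.pi * ε := by
      field_simp
    rwa [h3] at h2
  have h2πε : 2 * Real.pi * ε ≤ T / 2 := by
    have h1 : 2 * Real.pi * ε ≤ 2 * Real.pi * (T / (4 * Real.pi)) := by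
      gcongr
    have h2 : 2 * Real.pi * (T / (4 * Real.pi)) = T / 2 := by
      field_simp; ring
    linarith
  have ht2 : T / 2 ≤ t := by linarith
  have ht0 : 0 < t := lt_of_lt_of_le (by positivity) ht2
  -- the matrices
  set Aε : Matrix (Fin n) (Fin n) ℂ := A₀ + (ε:ℂ) • A₁ with hAε
  set B : Matrix (Fin n) (Fin n) ℂ := t • Aε with hB
  have hBc : B = ((t:ℝ):ℂ) • Aε := by
    rw [hB]
    ext i j
    simp [Matrix.smul_apply, Complex.real_smul]
  -- distance from B to T • A₀
  have hBdiff : ‖B - (T:ℂ) • A₀‖ ≤ ε * Cb := by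
    have hBexp : B - (T:ℂ) • A₀
        = (((t - T : ℝ)):ℂ) • A₀ + (((t * ε : ℝ)):ℂ) • A₁ := by
      rw [hBc, hAε]
      push_cast
      module
    rw [hBexp]
    have e1 : ‖(((t - T : ℝ)):ℂ) • A₀‖ = |t - T| * ‖A₀‖ := by
      rw [norm_smul, Complex.norm_real, Real.norm_eq_abs]
    have e2 : ‖(((t * ε : ℝ)):ℂ) • A₁‖ = |t * ε| * ‖A₁‖ := by
      rw [norm_smul, Complex.norm_real, Real.norm_eq_abs]
    have h1 : |t - T| ≤ 2 * Real.pi * ε := by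
      rw [abs_le]; constructor <;> linarith
    have h2 : |t * ε| ≤ T * ε := by
      rw [abs_of_nonneg (by positivity)]
      have := mul_le_mul_of_nonneg_right htle hε.le
      linarith
    calc ‖(((t - T : ℝ)):ℂ) • A₀ + (((t * ε : ℝ)):ℂ) • A₁‖
        ≤ ‖(((t - T : ℝ)):ℂ) • A₀‖ + ‖(((t * ε : ℝ)):ℂ) • A₁‖ := norm_add_le _ _
      _ = |t - T| * ‖A₀‖ + |t * ε| * ‖A₁‖ := by rw [e1, e2]
      _ ≤ (2 * Real.pi * ε) * ‖A₀‖ + (T * ε) * ‖A₁‖ := by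
          have k1 := mul_le_mul_of_nonneg_right h1 (norm_nonneg A₀)
          have k2 := mul_le_mul_of_nonneg_right h2 (norm_nonneg A₁)
          linarith
      _ ≤ ε * Cb := by rw [hCb]; nlinarith [norm_nonneg A₀, norm_nonneg A₁]
  have hεCb1 : ε * Cb ≤ 1 := by
    have := mul_le_mul_of_nonneg_right hεCb hCb0.le
    rwa [one_div, inv_mul_cancel₀ hCb0.ne'] at this
  have hBr : ‖B‖ ≤ r := by
    have h1 : ‖B‖ ≤ ‖(T:ℂ) • A₀‖ + ‖B - (T:ℂ) • A₀‖ := by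
      have := norm_sub_norm_le B ((T:ℂ) • A₀)
      linarith
    rw [hr]; linarith
  have hTAr : ‖(T:ℂ) • A₀‖ ≤ r := by rw [hr]; linarith
  -- gfun B is close to gfun (T • A₀)
  have hGdiff : ‖gfun B - gfun ((T:ℂ) • A₀)‖ < δG := by
    have h1 := hlip B ((T:ℂ) • A₀) hBr hTAr
    have h2 : CL * ‖B - (T:ℂ) • A₀‖ ≤ CL * (ε * Cb) := by
      apply mul_le_mul_of_nonneg_left hBdiff hCL
    have h3 : ε * ((CL + 1) * Cb) < δG :=
      (lt_div_iff₀ (mul_pos (by linarith) hCb0)).mp hεδG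
    nlinarith [hε.le, hCb0.le, hCL]
  obtain ⟨hGunit, hGnorm⟩ := hnearG (gfun B) hGdiff
  -- Wε is close to W
  set Wε : Matrix (Fin n) (Fin n) ℂ := W + (ε:ℂ) • V with hWεdef
  have hWdiff : ‖Wε - W‖ < δW := by
    have h1 : Wε - W = ((ε:ℝ):ℂ) • V := by rw [hWεdef]; module
    rw [h1, norm_smul, Complex.norm_real, Real.norm_eq_abs, abs_of_pos hε]
    have h2 : ε * (‖V‖ + 1) < δW :=
      (lt_div_iff₀ (by positivity)).mp hεδW
    nlinarith [norm_nonneg V]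
  obtain ⟨hWεunit, hWεnorm⟩ := hnearW Wε hWdiff
  -- the diagonal matrix
  set d : Fin n → ℂ := fun j => if j ∈ S then ((ε:ℝ):ℂ) else 1 with hd
  set dinv : Fin n → ℂ := fun j => if j ∈ S then ((ε:ℝ):ℂ)⁻¹ else 1 with hdinv
  have hεne : ((ε:ℝ):ℂ) ≠ 0 := by exact_mod_cast hε.ne'
  have hDinv : (Matrix.diagonal d)⁻¹ = Matrix.diagonal dinv := by
    apply Matrix.inv_eq_right_inv
    rw [Matrix.diagonal_mul_diagonal]
    have h1 : (fun i => d i * dinv i) = fun _ => (1:ℂ) := by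
      funext i
      by_cases hi : i ∈ S <;> simp [hd, hdinv, hi, mul_inv_cancel₀ hεne]
    rw [h1, Matrix.diagonal_one]
  have hDdet : IsUnit (Matrix.diagonal d).det := by
    rw [Matrix.det_diagonal, isUnit_iff_ne_zero]
    apply Finset.prod_ne_zero_iff.mpr
    intro i _
    by_cases hi : i ∈ S <;> simp [hd, hi, hεne]
  have hDinvnorm : ‖(Matrix.diagonal d)⁻¹‖ ≤ (n:ℝ) * ε⁻¹ := by
    rw [hDinv]
    apply norm_le_entries _ _ (by positivity)
    intro i j
    by_cases hij : i = j
    · subst hij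
      rw [Matrix.diagonal_apply_eq]
      by_cases hi : i ∈ S
      · simp only [hdinv, if_pos hi]
        rw [norm_inv, Complex.norm_real, Real.norm_eq_abs, abs_of_pos hε]
      · simp only [hdinv, if_neg hi, norm_one]
        have h9 := inv_anti₀ hε hε1
        simpa using h9
    · rw [Matrix.diagonal_apply_ne _ hij, norm_zero]
      positivity
  -- invert Aε
  have hAεP := hEq ((ε:ℝ):ℂ)
  have hWεdet : IsUnit Wε.det := (Matrix.isUnit_iff_isUnit_det Wε).mp hWεunit
  have hAεinv1 : Aε * (P * ((Matrix.diagonal d)⁻¹ * Wε⁻¹)) = 1 := by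
    calc Aε * (P * ((Matrix.diagonal d)⁻¹ * Wε⁻¹))
        = (Aε * P) * ((Matrix.diagonal d)⁻¹ * Wε⁻¹) := by rw [Matrix.mul_assoc]
      _ = (Wε * Matrix.diagonal d) * ((Matrix.diagonal d)⁻¹ * Wε⁻¹) := by
          rw [hAε, hAεP, hWεdef, hd]
      _ = Wε * ((Matrix.diagonal d) * (Matrix.diagonal d)⁻¹) * Wε⁻¹ := by
          rw [Matrix.mul_assoc, Matrix.mul_assoc, Matrix.mul_assoc]
      _ = 1 := by
          rw [Matrix.mul_nonsing_inv _ hDdet, Matrix.mul_one,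
            Matrix.mul_nonsing_inv _ hWεdet]
  have hAεunit : IsUnit Aε := IsUnit.of_mul_eq_one _ hAεinv1
  have hAεdet : IsUnit Aε.det := (Matrix.isUnit_iff_isUnit_det Aε).mp hAεunit
  have hAεinv : Aε⁻¹ = P * ((Matrix.diagonal d)⁻¹ * Wε⁻¹) := Matrix.inv_eq_right_inv hAεinv1
  have hAεinvnorm : ‖Aε⁻¹‖ ≤ CP * ((n:ℝ) * ε⁻¹ * CW) := by
    rw [hAεinv]
    calc ‖P * ((Matrix.diagonal d)⁻¹ * Wε⁻¹)‖
        ≤ ‖P‖ * ‖(Matrix.diagonal d)⁻¹ * Wε⁻¹‖ := norm_mul_le _ _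
      _ ≤ ‖P‖ * (‖(Matrix.diagonal d)⁻¹‖ * ‖Wε⁻¹‖) := by
          apply mul_le_mul_of_nonneg_left (norm_mul_le _ _) (norm_nonneg _)
      _ ≤ CP * ((n:ℝ) * ε⁻¹ * CW) := by
          apply mul_le_mul
          · rw [hCP]; linarith
          · apply mul_le_mul hDinvnorm hWεnorm (norm_nonneg _) (by positivity)
          · positivity
          · positivity
  -- the exponential identity
  have hGdet : IsUnit (gfun B).det := (Matrix.isUnit_iff_isUnit_det _).mp hGunit
  have htne : ((t:ℝ):ℂ) ≠ 0 := by exact_mod_cast ht0.ne'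
  have hMinv1 : (NormedSpace.exp (t • Aε) - 1)
      * (((t:ℝ):ℂ)⁻¹ • ((gfun B)⁻¹ * Aε⁻¹)) = 1 := by
    erw [← hB, ← mul_gfun B]
    calc B * gfun B * (((t:ℝ):ℂ)⁻¹ • ((gfun B)⁻¹ * Aε⁻¹))
        = (((t:ℝ):ℂ) • (Aε * gfun B)) * (((t:ℝ):ℂ)⁻¹ • ((gfun B)⁻¹ * Aε⁻¹)) := by
          rw [hBc, Matrix.smul_mul]
      _ = (((t:ℝ):ℂ) * ((t:ℝ):ℂ)⁻¹) • ((Aε * gfun B) * ((gfun B)⁻¹ * Aε⁻¹)) :=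
          smul_mul_smul_comm _ _ _ _
      _ = (Aε * gfun B) * ((gfun B)⁻¹ * Aε⁻¹) := by
          rw [mul_inv_cancel₀ htne, one_smul]
      _ = Aε * ((gfun B) * ((gfun B)⁻¹)) * Aε⁻¹ := by
          rw [Matrix.mul_assoc, Matrix.mul_assoc, Matrix.mul_assoc]
      _ = 1 := by
          rw [Matrix.mul_nonsing_inv _ hGdet, Matrix.mul_one,
            Matrix.mul_nonsing_inv _ hAεdet]
  constructor
  · exact IsUnit.of_mul_eq_one _ hMinv1
  · have hMinveq : (NormedSpace.exp (t • Aε) - 1)⁻¹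
        = ((t:ℝ):ℂ)⁻¹ • ((gfun B)⁻¹ * Aε⁻¹) := Matrix.inv_eq_right_inv hMinv1
    rw [frobNorm_eq, hMinveq]
    have h1 : ‖((t:ℝ):ℂ)⁻¹ • ((gfun B)⁻¹ * Aε⁻¹)‖
        = t⁻¹ * ‖(gfun B)⁻¹ * Aε⁻¹‖ := by
      rw [norm_smul, norm_inv, Complex.norm_real, Real.norm_eq_abs, abs_of_pos ht0]
    rw [h1]
    have h2 : ‖(gfun B)⁻¹ * Aε⁻¹‖ ≤ CG * (CP * ((n:ℝ) * ε⁻¹ * CW)) := by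
      calc ‖(gfun B)⁻¹ * Aε⁻¹‖ ≤ ‖(gfun B)⁻¹‖ * ‖Aε⁻¹‖ := norm_mul_le _ _
        _ ≤ CG * (CP * ((n:ℝ) * ε⁻¹ * CW)) := by
            apply mul_le_mul hGnorm hAεinvnorm (norm_nonneg _) hCG.le
    have h3 : t⁻¹ ≤ 2 / T := by
      have h4 := inv_anti₀ (by positivity : (0:ℝ) < T/2) ht2
      have h5 : (T/2)⁻¹ = 2/T := by
        field_simp
      linarith
    have hnorm2 : (0:ℝ) ≤ ‖(gfun B)⁻¹ * Aε⁻¹‖ := norm_nonneg _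
    have h6 : t⁻¹ * ‖(gfun B)⁻¹ * Aε⁻¹‖ ≤ (2/T) * (CG * (CP * ((n:ℝ) * ε⁻¹ * CW))) := by
      apply mul_le_mul h3 h2 hnorm2 (by positivity)
    have h7 : (2/T) * (CG * (CP * ((n:ℝ) * ε⁻¹ * CW))) = L' * ε⁻¹ := by
      rw [hL']; ring
    have h8 : L' * ε⁻¹ < (L' + 1) * ε⁻¹ :=
      mul_lt_mul_of_pos_right (lt_add_one L') (by positivity)
    have h9 : (L' + 1) / ε = (L' + 1) * ε⁻¹ := div_eq_mul_inv _ _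
    linarith

end Stmt6Aux

end MatrixPart

/-- **Lemma 3.** Let `A_ε = A₀ + εA₁`, where `0` is an eigenvalue of `A₀` of algebraic
multiplicity `p ≥ 1` and the remaining eigenvalues `λ_{p+1}, …, λ_n` are nonzero; assume no
eigenvector of `A₀` for the eigenvalue `0` has a generalized adjoined vector relative to
`(A₀, A₁)`.  With `R = max_{j>p}|λ_j| + 1`, `T > 0` such that `TR ≠ 2kπ` and
`Tλ_j ≠ 2kπi`, and `T_ε = ⌊T/(2πε)⌋·2πε`, there are `L > 0`, `ε₀ > 0` such that for all
`0 < ε < ε₀` the matrix `e^{T_ε A_ε} − E` is invertible and `‖(e^{T_ε A_ε} − E)⁻¹‖ < Lε⁻¹`. -/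
theorem stmt_6
    (n p : ℕ) (hp : 1 ≤ p) (hpn : p ≤ n)
    (A₀ A₁ : Matrix (Fin n) (Fin n) ℂ)
    (lam : Fin n → ℂ)
    (hchar : A₀.charpoly = ∏ j, (Polynomial.X - Polynomial.C (lam j)))
    (hzero : ∀ j : Fin n, (j : ℕ) < p ↔ lam j = 0)
    (hnodeg : ∀ a : Fin n → ℂ, a ≠ 0 → A₀.mulVec a = 0 →
      ∀ x : Fin n → ℂ, A₀.mulVec x ≠ -A₁.mulVec a)
    (R : ℝ)
    (hR : R = (((Finset.univ.filter fun j : Fin n => p ≤ (j : ℕ)).sup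
      fun j => ‖lam j‖₊ : NNReal) : ℝ) + 1)
    (T : ℝ) (hT : 0 < T)
    (hTR : ∀ k : ℤ, T * R ≠ 2 * (k : ℝ) * Real.pi)
    (hTlam : ∀ j : Fin n, p ≤ (j : ℕ) → ∀ k : ℤ,
      (T : ℂ) * lam j ≠ 2 * (k : ℂ) * (Real.pi : ℂ) * Complex.I) :
    ∃ L : ℝ, 0 < L ∧ ∃ ε₀ : ℝ, 0 < ε₀ ∧ ∀ ε : ℝ, 0 < ε → ε < ε₀ →
      IsUnit (NormedSpace.exp
          (((↑(⌊T / (2 * Real.pi * ε)⌋) : ℝ) * (2 * Real.pi * ε)) •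
            (A₀ + (ε : ℂ) • A₁)) - 1) ∧
      frobNorm ((NormedSpace.exp
          (((↑(⌊T / (2 * Real.pi * ε)⌋) : ℝ) * (2 * Real.pi * ε)) •
            (A₀ + (ε : ℂ) • A₁)) - 1)⁻¹) < L / ε := by
  exact Stmt6Aux.main n p hp hpn A₀ A₁ lam hchar hzero hnodeg T hT hTlam
end

section
/- There exists a finite set F ⊂ ℂ such that for every β₀ ∈ ℂ \ (F ∪ {0}) there exist constants L₁ > 0 and ε₀ > 0 with the property: for all 0 < ε < ε₀ the matrix β₀εE − A_ε is invertible and ‖(β₀εE − A_ε)⁻¹‖ ≤ L₁ε⁻¹. -/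
open Matrix Finset Polynomial

lemma poly_bound (r : Polynomial ℂ) : ∃ K : ℝ, 0 ≤ K ∧ ∀ z : ℂ, ‖z‖ ≤ 1 → ‖r.eval z‖ ≤ K := by
  refine ⟨∑ k ∈ Finset.range (r.natDegree + 1), ‖r.coeff k‖,
    Finset.sum_nonneg fun _ _ => norm_nonneg _, fun z hz => ?_⟩
  rw [Polynomial.eval_eq_sum_range]
  refine (norm_sum_le _ _).trans (Finset.sum_le_sum fun k _ => ?_)
  rw [norm_mul]
  calc ‖r.coeff k‖ * ‖z ^ k‖ ≤ ‖r.coeff k‖ * 1 := by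
        refine mul_le_mul_of_nonneg_left ?_ (norm_nonneg _)
        rw [norm_pow]; exact pow_le_one₀ (norm_nonneg _) hz
    _ = ‖r.coeff k‖ := mul_one _

lemma frobNorm_smul {n : ℕ} (c : ℂ) (A : Matrix (Fin n) (Fin n) ℂ) :
    frobNorm (c • A) = ‖c‖ * frobNorm A := by
  unfold frobNorm
  rw [← Real.sqrt_sq (norm_nonneg c), ← Real.sqrt_mul (sq_nonneg _)]
  congr 1
  rw [Finset.mul_sum]
  refine Finset.sum_congr rfl fun i _ => ?_
  rw [Finset.mul_sum]
  refine Finset.sum_congr rfl fun j _ => ?_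
  simp [Matrix.smul_apply, smul_eq_mul, norm_mul, mul_pow]

lemma frobNorm_nonneg {n : ℕ} (A : Matrix (Fin n) (Fin n) ℂ) : 0 ≤ frobNorm A :=
  Real.sqrt_nonneg _

lemma frobNorm_le {n : ℕ} {A : Matrix (Fin n) (Fin n) ℂ} {b : ℝ} (hb : 0 ≤ b)
    (h : ∀ i j, ‖A i j‖ ≤ b) : frobNorm A ≤ n * b := by
  have h1 : (∑ i, ∑ j, ‖A i j‖ ^ 2) ≤ (n * b) ^ 2 := by
    calc (∑ i : Fin n, ∑ j : Fin n, ‖A i j‖ ^ 2) ≤ ∑ _i : Fin n, ∑ _j : Fin n, b ^ 2 :=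
          Finset.sum_le_sum fun i _ => Finset.sum_le_sum fun j _ =>
            pow_le_pow_left₀ (norm_nonneg _) (h i j) 2
      _ = (n * b) ^ 2 := by simp [Finset.sum_const, Finset.card_univ]; ring
  calc frobNorm A ≤ Real.sqrt ((n * b) ^ 2) := Real.sqrt_le_sqrt h1
    _ = n * b := Real.sqrt_sq (by positivity)

/-- **Statement 1 of §1.5 (resolvent estimate on the small circle).** Let `A₀` be in Jordan
form whose first `s` Jordan blocks (sizes `e₁, …, e_s`, `e₁ + ⋯ + e_s = p`) are nilpotent
and whose remaining upper-triangular part has nonzero diagonal entries, let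
`A_ε = A₀ + εA₁`, and assume the nondegeneracy condition.  Then there is a finite set
`F ⊂ ℂ` such that for every `β₀ ∈ ℂ \ (F ∪ {0})` there are `L₁ > 0`, `ε₀ > 0` with:
for all `0 < ε < ε₀` the matrix `β₀εE − A_ε` is invertible and
`‖(β₀εE − A_ε)⁻¹‖ ≤ L₁ε⁻¹`. -/
theorem stmt_7
    (n s p : ℕ) (e : ℕ → ℕ)
    (he : ∀ r : ℕ, r < s → 1 ≤ e r)
    (hps : p = ∑ r ∈ Finset.range s, e r)
    (hpn : p ≤ n)
    (A₀ A₁ : Matrix (Fin n) (Fin n) ℂ)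
    (htri : ∀ i j : Fin n, (j : ℕ) ≠ (i : ℕ) → (j : ℕ) ≠ (i : ℕ) + 1 → A₀ i j = 0)
    (hdiag0 : ∀ i : Fin n, (i : ℕ) < p → A₀ i i = 0)
    (hdiagnz : ∀ i : Fin n, p ≤ (i : ℕ) → A₀ i i ≠ 0)
    (hsup0 : ∀ i j : Fin n, (j : ℕ) = (i : ℕ) + 1 → (j : ℕ) ≤ p →
      (∃ r : ℕ, r ≤ s ∧ ∑ k ∈ Finset.range r, e k = (j : ℕ)) → A₀ i j = 0)
    (hsup1 : ∀ i j : Fin n, (j : ℕ) = (i : ℕ) + 1 → (j : ℕ) ≤ p →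
      (¬ ∃ r : ℕ, r ≤ s ∧ ∑ k ∈ Finset.range r, e k = (j : ℕ)) → A₀ i j = 1)
    (hsupRest : ∀ i j : Fin n, (j : ℕ) = (i : ℕ) + 1 → p < (j : ℕ) →
      (A₀ i j = 0 ∨ A₀ i j = 1))
    (pst : Fin s → Fin n)
    (hpst : ∀ r : Fin s, (pst r : ℕ) = ∑ k ∈ Finset.range (r : ℕ), e k)
    (hnodeg : ∀ μ : Fin s → ℂ, μ ≠ 0 → ∀ x : Fin n → ℂ,
      A₀.mulVec x ≠ -A₁.mulVec (∑ r, μ r • (Pi.single (pst r) 1 : Fin n → ℂ))) :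
    ∃ F : Finset ℂ, ∀ β₀ : ℂ, β₀ ∉ F → β₀ ≠ 0 →
      ∃ L₁ : ℝ, 0 < L₁ ∧ ∃ ε₀ : ℝ, 0 < ε₀ ∧ ∀ ε : ℝ, 0 < ε → ε < ε₀ →
        IsUnit ((β₀ * (ε : ℂ)) • (1 : Matrix (Fin n) (Fin n) ℂ) - (A₀ + (ε : ℂ) • A₁)) ∧
        frobNorm (((β₀ * (ε : ℂ)) • (1 : Matrix (Fin n) (Fin n) ℂ)
            - (A₀ + (ε : ℂ) • A₁))⁻¹) ≤ L₁ / ε := by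
  classical
  -- partial sums
  set q : ℕ → ℕ := fun r => ∑ k ∈ Finset.range r, e k with hq
  have hqmono : ∀ r r' : ℕ, r < r' → r' ≤ s → q r < q r' := by
    intro r r' h h'
    refine Finset.sum_lt_sum_of_subset (Finset.range_subset_range.2 h.le) (Finset.mem_range.2 h)
      (by simp) (he r (lt_of_lt_of_le h h')) fun _ _ _ => Nat.zero_le _
  have hpstinj : Function.Injective pst := by
    intro r r' hrr
    have hv : q (r : ℕ) = q (r' : ℕ) := by
      have h2 := congrArg Fin.val hrr
      rwa [hpst r, hpst r'] at h2
    by_contra hne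
    have hvne : (r : ℕ) ≠ (r' : ℕ) := fun h => hne (Fin.ext h)
    rcases hvne.lt_or_gt with h | h
    · exact absurd hv (hqmono _ _ h r'.isLt.le).ne
    · exact absurd hv.symm (hqmono _ _ h r.isLt.le).ne
  set Z : Finset (Fin n) := Finset.image pst Finset.univ with hZ
  have hcardZ : Z.card = s := by
    rw [hZ, Finset.card_image_of_injective _ hpstinj, Finset.card_univ, Fintype.card_fin]
  have hqlt : ∀ r : Fin s, q (r : ℕ) < p := by
    intro r
    rw [hps]
    exact hqmono _ s r.isLt le_rfl
  -- zero columns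
  have colZ : ∀ j ∈ Z, ∀ i, A₀ i j = 0 := by
    intro j hj i
    obtain ⟨r, -, hr⟩ := Finset.mem_image.1 hj
    have hjp : (j : ℕ) < p := by rw [← hr, hpst r]; exact hqlt r
    by_cases hij : (j : ℕ) = (i : ℕ)
    · have hji : j = i := Fin.ext hij
      subst hji
      exact hdiag0 j hjp
    · by_cases hij1 : (j : ℕ) = (i : ℕ) + 1
      · exact hsup0 i j hij1 hjp.le ⟨(r : ℕ), r.isLt.le, by rw [← hpst r, hr]⟩
      · exact htri i j hij hij1
  -- row structure of A₀
  have rowsum : ∀ (x : Fin n → ℂ) (i : Fin n), A₀.mulVec x i =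
      A₀ i i * x i + (if h : (i : ℕ) + 1 < n then
        A₀ i ⟨(i : ℕ) + 1, h⟩ * x ⟨(i : ℕ) + 1, h⟩ else 0) := by
    intro x i
    by_cases h : (i : ℕ) + 1 < n
    · rw [dif_pos h]
      have hne : i ≠ (⟨(i : ℕ) + 1, h⟩ : Fin n) := by
        intro hc
        have := congrArg Fin.val hc
        simp at this
      have hsub : (∑ j, A₀ i j * x j)
          = ∑ j ∈ ({i, ⟨(i : ℕ) + 1, h⟩} : Finset (Fin n)), A₀ i j * x j := by
        symm
        apply Finset.sum_subset (Finset.subset_univ _)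
        intro j _ hj
        simp only [Finset.mem_insert, Finset.mem_singleton] at hj
        push_neg at hj
        rw [htri i j (fun hv => hj.1 (Fin.ext hv)) (fun hv => hj.2 (Fin.ext hv)), zero_mul]
      show (∑ j, A₀ i j * x j) = _
      rw [hsub, Finset.sum_pair hne]
    · rw [dif_neg h, add_zero]
      show (∑ j, A₀ i j * x j) = _
      rw [Finset.sum_eq_single i]
      · intro j _ hji
        have hj2 : (j : ℕ) ≠ (i : ℕ) + 1 := by
          intro hv
          exact h (by rw [← hv]; exact j.isLt)
        rw [htri i j (fun hv => hji (Fin.ext hv)) hj2, zero_mul]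
      · intro hi
        exact absurd (Finset.mem_univ i) hi
  -- kernel lemma
  have kerlem : ∀ x : Fin n → ℂ, A₀.mulVec x = 0 → (∀ j ∈ Z, x j = 0) → x = 0 := by
    intro x hx hz
    have hlow : ∀ i : Fin n, (i : ℕ) < p → x i = 0 := by
      intro i hip
      by_cases hiZ : i ∈ Z
      · exact hz i hiZ
      have hi0 : (i : ℕ) ≠ 0 := by
        intro h0
        have hs : 0 < s := by
          rcases Nat.eq_zero_or_pos s with h | h
          · rw [hps, h] at hip; simp at hip
          · exact h
        exact hiZ (Finset.mem_image.2 ⟨⟨0, hs⟩, Finset.mem_univ _,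
          Fin.ext (by rw [hpst]; simp [h0])⟩)
      have hin := i.isLt
      obtain ⟨i', hi'⟩ : ∃ m : ℕ, m + 1 = (i : ℕ) := ⟨(i : ℕ) - 1, by omega⟩
      have hi'n : i' < n := by omega
      set ip : Fin n := ⟨i', hi'n⟩ with hip'
      have hcond : (ip : ℕ) + 1 < n := by simp only [hip']; omega
      have heq : (⟨(ip : ℕ) + 1, hcond⟩ : Fin n) = i := Fin.ext (by simp only [hip']; omega)
      have hrow := congrFun hx ip
      rw [rowsum x ip, dif_pos hcond, heq] at hrow
      have h1 : A₀ ip ip = 0 := hdiag0 ip (by simp only [hip']; omega)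
      have h2 : A₀ ip i = 1 := by
        apply hsup1 ip i (by simp only [hip']; omega) hip.le
        rintro ⟨r, hrs, hre⟩
        rcases lt_or_eq_of_le hrs with hlt | hEq
        · exact hiZ (Finset.mem_image.2 ⟨⟨r, hlt⟩, Finset.mem_univ _,
            Fin.ext (by rw [hpst]; exact hre)⟩)
        · rw [hEq, ← hps] at hre; omega
      rw [h1, h2, zero_mul, one_mul, zero_add] at hrow
      simpa using hrow
    have hhigh : ∀ k : ℕ, ∀ i : Fin n, n - (i : ℕ) ≤ k → x i = 0 := by
      intro k
      induction k with
      | zero => intro i hik; exact absurd hik (by have := i.isLt; omega)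
      | succ k ih =>
        intro i hik
        by_cases hip : (i : ℕ) < p
        · exact hlow i hip
        push_neg at hip
        have hrow := congrFun hx i
        rw [rowsum x i] at hrow
        by_cases hc : (i : ℕ) + 1 < n
        · rw [dif_pos hc] at hrow
          have hx1 : x ⟨(i : ℕ) + 1, hc⟩ = 0 := ih _ (by simp only []; omega)
          rw [hx1, mul_zero, add_zero] at hrow
          have hrow0 : A₀ i i * x i = 0 := by simpa using hrow
          exact (mul_eq_zero.1 hrow0).resolve_left (hdiagnz i hip)
        · rw [dif_neg hc, add_zero] at hrow
          have hrow0 : A₀ i i * x i = 0 := by simpa using hrow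
          exact (mul_eq_zero.1 hrow0).resolve_left (hdiagnz i hip)
    funext i
    exact hhigh n i (by omega)
  -- beta polynomial
  set Nb : Matrix (Fin n) (Fin n) (Polynomial ℂ) := fun i j =>
    if j ∈ Z then ((if i = j then (X : Polynomial ℂ) else 0) - C (A₁ i j)) else (- C (A₀ i j))
    with hNb
  set G : Polynomial ℂ := Nb.det with hG
  have hG0 : G.eval 0 ≠ 0 := by
    have hmap : (Polynomial.evalRingHom (0 : ℂ)).mapMatrix Nb
        = (fun i j => if j ∈ Z then -A₁ i j else -A₀ i j : Matrix (Fin n) (Fin n) ℂ) := by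
      ext i j
      rw [RingHom.mapMatrix_apply, Matrix.map_apply]
      by_cases hj : j ∈ Z <;> by_cases hij : i = j <;>
        simp [hNb, hj, hij, Matrix.map_apply, RingHom.mapMatrix_apply]
    have hGdet : G.eval 0
        = Matrix.det (fun i j => if j ∈ Z then -A₁ i j else -A₀ i j : Matrix (Fin n) (Fin n) ℂ) := by
      rw [← hmap, ← RingHom.map_det]
      simp [hG]
    rw [hGdet]
    intro hdet
    obtain ⟨c, hc0, hc⟩ := Matrix.exists_mulVec_eq_zero_iff.2 hdet
    set x1 : Fin n → ℂ := fun j => if j ∈ Z then 0 else c j with hx1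
    set w : Fin n → ℂ := fun j => if j ∈ Z then c j else 0 with hw
    have hsplit : A₀.mulVec x1 = -(A₁.mulVec w) := by
      funext i
      have h0 : (∑ j, (if j ∈ Z then -A₁ i j else -A₀ i j) * c j) = 0 := by
        simpa [Matrix.mulVec, dotProduct] using congrFun hc i
      have h1 : (∑ j, (if j ∈ Z then -A₁ i j else -A₀ i j) * c j)
          = ∑ j, (-(A₀ i j * x1 j) + -(A₁ i j * w j)) := by
        refine Finset.sum_congr rfl fun j _ => ?_
        by_cases hj : j ∈ Z <;> simp [hx1, hw, hj] <;> ring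
      rw [h1, Finset.sum_add_distrib] at h0
      rw [Finset.sum_neg_distrib, Finset.sum_neg_distrib] at h0
      show (∑ j, A₀ i j * x1 j) = -(∑ j, A₁ i j * w j)
      linear_combination -h0
    by_cases hw0 : w = 0
    · have hcz : ∀ j ∈ Z, c j = 0 := by
        intro j hj
        have := congrFun hw0 j
        simpa [hw, hj] using this
      have hcx : x1 = c := by
        funext j
        by_cases hj : j ∈ Z
        · simp [hx1, hj, hcz j hj]
        · simp [hx1, hj]
      rw [hw0, Matrix.mulVec_zero, neg_zero, hcx] at hsplit
      exact hc0 (kerlem c hsplit hcz)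
    · set μ : Fin s → ℂ := fun r => c (pst r) with hμ
      have hμw : (∑ r, μ r • (Pi.single (pst r) 1 : Fin n → ℂ)) = w := by
        funext j
        rw [Finset.sum_apply]
        by_cases hjZ : j ∈ Z
        · obtain ⟨r₀, -, hr₀⟩ := Finset.mem_image.1 hjZ
          rw [Finset.sum_eq_single r₀]
          · simp [hμ, hw, hjZ, hr₀, Pi.single_apply]
          · intro r _ hr
            have hne : pst r ≠ j := fun hcc => hr (hpstinj (by rw [hcc, hr₀]))
            simp [Pi.single_apply, Ne.symm hne]
          · intro h
            exact absurd (Finset.mem_univ r₀) h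
        · have hall : ∀ r : Fin s, pst r ≠ j := by
            intro r hcc
            exact hjZ (hcc ▸ Finset.mem_image.2 ⟨r, Finset.mem_univ _, rfl⟩)
          rw [Finset.sum_eq_zero]
          · simp [hw, hjZ]
          · intro r _
            simp [Pi.single_apply, Ne.symm (hall r)]
      have hμ0 : μ ≠ 0 := by
        intro hμz
        apply hw0
        funext j
        by_cases hjZ : j ∈ Z
        · obtain ⟨r₀, -, hr₀⟩ := Finset.mem_image.1 hjZ
          have h2 : μ r₀ = 0 := congrFun hμz r₀
          rw [hμ] at h2
          simp only [hr₀] at h2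
          simp [hw, hjZ, h2]
        · simp [hw, hjZ]
      exact hnodeg μ hμ0 x1 (by rw [hμw]; exact hsplit)
  refine ⟨G.roots.toFinset, fun β₀ hβF hβ0 => ?_⟩
  have hGne : G ≠ 0 := fun h => hG0 (by rw [h, Polynomial.eval_zero])
  have hd : G.eval β₀ ≠ 0 := by
    intro h
    exact hβF (Multiset.mem_toFinset.2 ((Polynomial.mem_roots hGne).2 h))
  set d : ℂ := G.eval β₀ with hdd
  have hdpos : 0 < ‖d‖ := norm_pos_iff.2 hd
  -- epsilon layer
  set Cm : Matrix (Fin n) (Fin n) ℂ := β₀ • (1 : Matrix (Fin n) (Fin n) ℂ) - A₁ with hCm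
  set Mp : Matrix (Fin n) (Fin n) (Polynomial ℂ) := fun i j =>
    if j ∈ Z then C (Cm i j) else (C (Cm i j) * X - C (A₀ i j)) with hMp
  set v : Fin n → Polynomial ℂ := fun j => if j ∈ Z then X else 1 with hv
  set Bp : Matrix (Fin n) (Fin n) (Polynomial ℂ) :=
    fun i j => C (Cm i j) * X - C (A₀ i j) with hBpdef
  have hfact : Bp = Mp * Matrix.diagonal v := by
    ext i j
    rw [Matrix.mul_diagonal]
    by_cases hj : j ∈ Z
    · simp [hBpdef, hMp, hv, hj, colZ j hj i]
    · simp [hBpdef, hMp, hv, hj]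
  have hvprod : (∏ j, v j) = X ^ s := by
    calc (∏ j, v j) = ∏ j ∈ Finset.univ ∩ Z, (X : Polynomial ℂ) := by
          rw [hv]; exact Finset.prod_ite_mem _ _ _
      _ = X ^ s := by rw [Finset.univ_inter, Finset.prod_const, hcardZ]
  have hdetfact : Bp.det = X ^ s * Mp.det := by
    rw [hfact, Matrix.det_mul, Matrix.det_diagonal, hvprod, mul_comm]
  have hadjfact : ∀ i j, Bp.adjugate i j = X ^ ((Z.erase i).card) * Mp.adjugate i j := by
    intro i j
    rw [hfact, Matrix.adjugate_mul_distrib, Matrix.adjugate_diagonal, Matrix.diagonal_mul]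
    congr 1
    have hset : Finset.univ.erase i ∩ Z = Z.erase i := by
      ext k
      simp [Finset.mem_erase, Finset.mem_inter, and_comm]
    calc (∏ k ∈ Finset.univ.erase i, v k)
        = ∏ k ∈ (Finset.univ.erase i) ∩ Z, (X : Polynomial ℂ) := by
          rw [hv]; exact Finset.prod_ite_mem _ _ _
      _ = X ^ ((Z.erase i).card) := by rw [hset, Finset.prod_const]
  have hMdet0 : Mp.det.eval 0 = d := by
    have h1 : (Polynomial.evalRingHom (0 : ℂ)).mapMatrix Mp
        = (Polynomial.evalRingHom β₀).mapMatrix Nb := by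
      ext i j
      rw [RingHom.mapMatrix_apply, RingHom.mapMatrix_apply, Matrix.map_apply, Matrix.map_apply]
      by_cases hj : j ∈ Z <;> by_cases hij : i = j <;>
        simp [hMp, hNb, hCm, hj, hij, Matrix.map_apply, RingHom.mapMatrix_apply, Matrix.one_apply,
          Matrix.sub_apply, Matrix.smul_apply]
    have h2 := RingHom.map_det (Polynomial.evalRingHom (0 : ℂ)) Mp
    have h3 := RingHom.map_det (Polynomial.evalRingHom β₀) Nb
    calc Mp.det.eval 0 = ((Polynomial.evalRingHom (0 : ℂ)).mapMatrix Mp).det := by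
          rw [← h2]; simp
      _ = ((Polynomial.evalRingHom β₀).mapMatrix Nb).det := by rw [h1]
      _ = d := by rw [← h3]; simp [hG, hdd]
  -- bound on adjugate entries
  choose Kf hKf0 hKfb using fun ij : Fin n × Fin n => poly_bound (Mp.adjugate ij.1 ij.2)
  set K : ℝ := ∑ ij : Fin n × Fin n, Kf ij with hK
  have hK0 : 0 ≤ K := Finset.sum_nonneg fun ij _ => hKf0 ij
  have hKb : ∀ i j (z : ℂ), ‖z‖ ≤ 1 → ‖(Mp.adjugate i j).eval z‖ ≤ K := by
    intro i j z hz
    exact (hKfb (i, j) z hz).trans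
      (Finset.single_le_sum (fun ij _ => hKf0 ij) (Finset.mem_univ (i, j)))
  -- epsilon zero via continuity
  have hcont : ContinuousAt (fun t : ℝ => ‖Polynomial.eval ((t : ℂ)) Mp.det‖) 0 :=
    ((Mp.det.continuous).comp Complex.continuous_ofReal).norm.continuousAt
  have h20 : ‖d‖ / 2 < (fun t : ℝ => ‖Polynomial.eval ((t : ℂ)) Mp.det‖) 0 := by
    simp only [Complex.ofReal_zero, hMdet0]
    exact half_lt_self hdpos
  have hev : ∀ᶠ t : ℝ in nhds 0, ‖d‖ / 2 < ‖Polynomial.eval ((t : ℂ)) Mp.det‖ :=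
    hcont (Ioi_mem_nhds h20)
  obtain ⟨δ, hδ0, hδ⟩ := Metric.eventually_nhds_iff.1 hev
  refine ⟨2 * n * K / ‖d‖ + 1, by positivity, min δ 1, lt_min hδ0 one_pos, fun ε hε0 hε1 => ?_⟩
  have hεδ : ε < δ := hε1.trans_le (min_le_left _ _)
  have hεle1 : ε ≤ 1 := (hε1.trans_le (min_le_right _ _)).le
  set B : Matrix (Fin n) (Fin n) ℂ := (β₀ * (ε : ℂ)) • 1 - (A₀ + (ε : ℂ) • A₁) with hB
  have hnε : ‖((ε : ℝ) : ℂ)‖ = ε := by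
    rw [Complex.norm_real, Real.norm_eq_abs, abs_of_pos hε0]
  have hBeval : B = (Polynomial.evalRingHom ((ε : ℂ))).mapMatrix Bp := by
    ext i j
    rw [RingHom.mapMatrix_apply, Matrix.map_apply]
    by_cases hij : i = j <;>
      simp [hB, hBpdef, hCm, hij, Matrix.map_apply, RingHom.mapMatrix_apply, Matrix.sub_apply, Matrix.add_apply,
        Matrix.smul_apply, Matrix.one_apply] <;> ring
  have hq2 : ‖d‖ / 2 < ‖Mp.det.eval ((ε : ℂ))‖ := hδ (by simpa [abs_of_pos hε0] using hεδ)
  have hqne : Mp.det.eval ((ε : ℂ)) ≠ 0 := by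
    intro h
    rw [h, norm_zero] at hq2
    linarith
  have hεC : ((ε : ℝ) : ℂ) ≠ 0 := by exact_mod_cast hε0.ne'
  have hdetB : B.det = ((ε : ℂ)) ^ s * Mp.det.eval ((ε : ℂ)) := by
    rw [hBeval, ← RingHom.map_det, hdetfact]
    simp
  have hdetB0 : B.det ≠ 0 := by
    rw [hdetB]
    exact mul_ne_zero (pow_ne_zero _ hεC) hqne
  refine ⟨(Matrix.isUnit_iff_isUnit_det _).2 (isUnit_iff_ne_zero.2 hdetB0), ?_⟩
  have hinv : B⁻¹ = (B.det)⁻¹ • B.adjugate := by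
    rw [Matrix.inv_def, Ring.inverse_eq_inv']
  rw [hinv, frobNorm_smul]
  have hadjB : ∀ i j, ‖B.adjugate i j‖ ≤ ε ^ (s - 1) * K := by
    intro i j
    have h2 := RingHom.map_adjugate (Polynomial.evalRingHom ((ε : ℂ))) Bp
    have h3 : B.adjugate i j = (Bp.adjugate i j).eval ((ε : ℂ)) := by
      rw [hBeval, ← h2]
      simp [Matrix.map_apply]
    rw [h3, hadjfact i j, Polynomial.eval_mul, Polynomial.eval_pow, Polynomial.eval_X,
      norm_mul, norm_pow, hnε]
    have hb1 : ε ^ (Z.erase i).card ≤ ε ^ (s - 1) := by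
      apply pow_le_pow_of_le_one hε0.le hεle1
      have := Finset.pred_card_le_card_erase (s := Z) (a := i)
      omega
    exact mul_le_mul hb1 (hKb i j _ (by rw [hnε]; exact hεle1)) (norm_nonneg _) (by positivity)
  have hfrobadj : frobNorm B.adjugate ≤ n * (ε ^ (s - 1) * K) :=
    frobNorm_le (by positivity) hadjB
  have hdetlb : ε ^ s * (‖d‖ / 2) ≤ ‖B.det‖ := by
    rw [hdetB, norm_mul, norm_pow, hnε]
    exact mul_le_mul_of_nonneg_left hq2.le (pow_nonneg hε0.le s)
  have hmain : ‖(B.det)⁻¹‖ * frobNorm B.adjugate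
      ≤ (ε ^ s * (‖d‖ / 2))⁻¹ * (n * (ε ^ (s - 1) * K)) := by
    rw [norm_inv]
    exact mul_le_mul (inv_anti₀ (by positivity) hdetlb) hfrobadj
      (frobNorm_nonneg _) (by positivity)
  refine hmain.trans ?_
  have hpow : ε ^ (s - 1) * ε ≤ ε ^ s := by
    cases s with
    | zero => simpa using hεle1
    | succ t =>
      rw [Nat.succ_sub_one, ← pow_succ]
  have h5 : (ε ^ s * (‖d‖ / 2))⁻¹ * (n * (ε ^ (s - 1) * K))
      = (2 * n * K) * (ε ^ (s - 1) / (ε ^ s * ‖d‖)) := by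
    field_simp
  have h6 : ε ^ (s - 1) / (ε ^ s * ‖d‖) ≤ 1 / (ε * ‖d‖) := by
    rw [div_le_div_iff₀ (by positivity) (by positivity)]
    calc ε ^ (s - 1) * (ε * ‖d‖) = (ε ^ (s - 1) * ε) * ‖d‖ := by ring
      _ ≤ ε ^ s * ‖d‖ := mul_le_mul_of_nonneg_right hpow (norm_nonneg _)
      _ = 1 * (ε ^ s * ‖d‖) := (one_mul _).symm
  calc (ε ^ s * (‖d‖ / 2))⁻¹ * (n * (ε ^ (s - 1) * K))
      = (2 * n * K) * (ε ^ (s - 1) / (ε ^ s * ‖d‖)) := h5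
    _ ≤ (2 * n * K) * (1 / (ε * ‖d‖)) := mul_le_mul_of_nonneg_left h6 (by positivity)
    _ = (2 * n * K / ‖d‖) / ε := by
        rw [mul_one_div, div_div, mul_comm ε ‖d‖]
    _ ≤ (2 * n * K / ‖d‖ + 1) / ε :=
        (div_le_div_iff_of_pos_right hε0).2 (le_add_of_nonneg_right one_pos.le)
end

section
/- Assume all the nilpotent Jordan blocks are multiple, i.e. e_r ≥ 2 for every r = 1, …, s. Then for every fixed β₀ ∈ ℂ one has det(β₀εE − A_ε) = ε^s(−1)^{n−p+s} λ_{p+1}λ_{p+2}⋯λ_n · det P + o(ε^s) as ε → 0⁺, where P is the s×s matrix with entries P_{ij} = b_{q_i, p_{j−1}}, i, j = 1, …, s. -/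
open Matrix Finset Asymptotics


/-- The `m × m` "cyclic shift" matrix: column `0` is `-e_{m-1}`, column `j>0` is `-e_{j-1}`. -/
def stmt9Cyc (m : ℕ) : Matrix (Fin m) (Fin m) ℂ :=
  Matrix.of fun i j =>
    if ((j : ℕ) = 0 ∧ (i : ℕ) + 1 = m) ∨ ((j : ℕ) ≠ 0 ∧ (i : ℕ) + 1 = (j : ℕ)) then -1 else 0

lemma stmt9Cyc_det {m : ℕ} (hm : 0 < m) : (stmt9Cyc m).det = -1 := by
  obtain ⟨k, rfl⟩ := Nat.exists_eq_add_of_lt hm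
  rw [zero_add] at *
  have h : stmt9Cyc (k + 1) = (-1 : ℂ) • ((finRotate (k + 1)).permMatrix ℂ) := by
    ext i j
    simp only [stmt9Cyc, Matrix.of_apply, Matrix.smul_apply, Equiv.Perm.permMatrix,
      PEquiv.toMatrix_apply, Equiv.toPEquiv_apply, finRotate_succ_apply, Option.mem_def,
      Option.some_inj, smul_eq_mul]
    by_cases hij : ((j : ℕ) = 0 ∧ (i : ℕ) + 1 = k + 1) ∨ ((j : ℕ) ≠ 0 ∧ (i : ℕ) + 1 = (j : ℕ))
    · rw [if_pos hij, if_pos, mul_one]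
      have : ((i + 1 : Fin (k + 1)) : ℕ) = (j : ℕ) := by
        rw [Fin.val_add_one i]
        split
        · rcases hij with ⟨h1, h2⟩ | ⟨h1, h2⟩
          · omega
          · exfalso; rename_i hl; rw [hl] at h2; simp [Fin.val_last] at h2; omega
        · rcases hij with ⟨h1, h2⟩ | ⟨h1, h2⟩
          · exfalso; rename_i hl
            have : (i : ℕ) = k := by omega
            exact hl (Fin.ext this)
          · omega
      exact Fin.ext this
    · rw [if_neg hij, if_neg, mul_zero]
      intro hc
      apply hij
      have : ((i + 1 : Fin (k + 1)) : ℕ) = (j : ℕ) := by rw [hc]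
      rw [Fin.val_add_one i] at this
      split at this
      · left
        constructor
        · omega
        · rename_i hl; rw [hl]; simp [Fin.val_last]
      · right
        constructor
        · omega
        · omega
  rw [h, Matrix.det_smul, Matrix.det_permutation, sign_finRotate]
  simp only [Fintype.card_fin]
  push_cast
  rw [← pow_add]
  rw [show k + 1 + k = 2 * k + 1 by ring, pow_succ, pow_mul]
  norm_num

/-- The block-diagonal matrix of nilpotent shift cycles. -/
def stmt9G (s : ℕ) (e : ℕ → ℕ) :
    Matrix (Fin (∑ k ∈ Finset.range s, e k)) (Fin (∑ k ∈ Finset.range s, e k)) ℂ :=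
  Matrix.of fun i j =>
    if (∃ r ∈ Finset.range s, (∑ k ∈ Finset.range r, e k) = (j : ℕ) ∧
          (i : ℕ) + 1 = ∑ k ∈ Finset.range (r + 1), e k)
        ∨ ((¬ ∃ r ∈ Finset.range s, (∑ k ∈ Finset.range r, e k) = (j : ℕ)) ∧
          (i : ℕ) + 1 = (j : ℕ))
    then -1 else 0

lemma stmt9G_det (s : ℕ) (e : ℕ → ℕ) (he : ∀ k, k < s → 0 < e k) :
    (stmt9G s e).det = (-1) ^ s := by
  induction s with
  | zero =>
    have : IsEmpty (Fin (∑ k ∈ Finset.range 0, e k)) := by simp; infer_instance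
    simp only [pow_zero]; exact Matrix.det_isEmpty
  | succ s ih =>
    have hsum : (∑ k ∈ Finset.range s, e k) + e s = ∑ k ∈ Finset.range (s + 1), e k :=
      (Finset.sum_range_succ e s).symm
    set B := ∑ k ∈ Finset.range s, e k with hB
    -- strict monotonicity facts
    have hmono : ∀ {a b : ℕ}, a ≤ b → (∑ k ∈ Finset.range a, e k) ≤ ∑ k ∈ Finset.range b, e k :=
      fun h => Finset.sum_le_sum_of_subset (Finset.range_subset_range.2 h)
    have hstrict : ∀ r : ℕ, r < s → (∑ k ∈ Finset.range r, e k) < B := by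
      intro r hr
      have h1 : (∑ k ∈ Finset.range (r + 1), e k) ≤ B := hmono hr
      have h2 : (∑ k ∈ Finset.range r, e k) + e r = ∑ k ∈ Finset.range (r + 1), e k :=
        (Finset.sum_range_succ e r).symm
      have := he r (Nat.lt_succ_of_lt hr)
      omega
    let E : Fin B ⊕ Fin (e s) ≃ Fin (∑ k ∈ Finset.range (s + 1), e k) :=
      finSumFinEquiv.trans (finCongr hsum)
    have hEl : ∀ i : Fin B, ((E (Sum.inl i)) : ℕ) = (i : ℕ) := by
      intro i; simp [E, finCongr_apply]
    have hEr : ∀ i : Fin (e s), ((E (Sum.inr i)) : ℕ) = B + (i : ℕ) := by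
      intro i; simp [E, finCongr_apply]
    have hblock : (stmt9G (s + 1) e).submatrix E E =
        Matrix.fromBlocks (stmt9G s e) 0 0 (stmt9Cyc (e s)) := by
      ext x y
      cases x with
      | inl i =>
        cases y with
        | inl j =>
          simp only [Matrix.submatrix_apply, Matrix.fromBlocks_apply₁₁, stmt9G, Matrix.of_apply,
            hEl]
          congr 1
          rw [eq_iff_iff]
          have hi : (i : ℕ) < B := i.isLt
          have hj : (j : ℕ) < B := j.isLt
          constructor
          · rintro (⟨r, hr, h1, h2⟩ | ⟨h1, h2⟩)
            · left
              rw [Finset.mem_range] at hr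
              have hrs : r < s := by
                by_contra hc
                have : r = s := by omega
                subst this
                omega
              exact ⟨r, Finset.mem_range.2 hrs, h1, h2⟩
            · right
              refine ⟨?_, h2⟩
              rintro ⟨r, hr, h3⟩
              rw [Finset.mem_range] at hr
              exact h1 ⟨r, Finset.mem_range.2 (Nat.lt_succ_of_lt hr), h3⟩
          · rintro (⟨r, hr, h1, h2⟩ | ⟨h1, h2⟩)
            · rw [Finset.mem_range] at hr
              exact Or.inl ⟨r, Finset.mem_range.2 (Nat.lt_succ_of_lt hr), h1, h2⟩
            · right
              refine ⟨?_, h2⟩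
              rintro ⟨r, hr, h3⟩
              rw [Finset.mem_range] at hr
              have hrs : r < s := by
                by_contra hc
                have : r = s := by omega
                subst this
                omega
              exact h1 ⟨r, Finset.mem_range.2 hrs, h3⟩
        | inr j =>
          simp only [Matrix.submatrix_apply, Matrix.fromBlocks_apply₁₂, stmt9G, Matrix.of_apply,
            hEl, hEr, Matrix.zero_apply]
          rw [if_neg]
          rintro (⟨r, hr, h1, h2⟩ | ⟨h1, h2⟩)
          · rw [Finset.mem_range] at hr
            have hi : (i : ℕ) < B := i.isLt
            -- r must be s, then j = 0 and i+1 = B + e s, impossible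
            rcases Nat.lt_or_ge r s with hrs | hrs
            · have := hstrict r hrs; omega
            · have h4 : (∑ k ∈ Finset.range r, e k) = B := by rw [(by omega : r = s)]
              have h5 : (∑ k ∈ Finset.range (r + 1), e k) = ∑ k ∈ Finset.range (s + 1), e k := by
                rw [(by omega : r = s)]
              have := he s (Nat.lt_succ_self s)
              omega
          · have hi : (i : ℕ) < B := i.isLt
            -- i+1 = B + j with i < B; then j = 0 and i + 1 = B, but then r = s witnesses start
            have hj0 : (j : ℕ) = 0 := by omega
            exact h1 ⟨s, Finset.mem_range.2 (Nat.lt_succ_self s), by omega⟩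
      | inr i =>
        cases y with
        | inl j =>
          simp only [Matrix.submatrix_apply, Matrix.fromBlocks_apply₂₁, stmt9G, Matrix.of_apply,
            hEl, hEr, Matrix.zero_apply]
          rw [if_neg]
          have hj : (j : ℕ) < B := j.isLt
          rintro (⟨r, hr, h1, h2⟩ | ⟨h1, h2⟩)
          · rw [Finset.mem_range] at hr
            rcases Nat.lt_or_ge r s with hrs | hrs
            · have : (∑ k ∈ Finset.range (r + 1), e k) ≤ B := hmono hrs
              omega
            · have h4 : (∑ k ∈ Finset.range r, e k) = B := by rw [(by omega : r = s)]
              omega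
          · omega
        | inr j =>
          simp only [Matrix.submatrix_apply, Matrix.fromBlocks_apply₂₂, stmt9G, stmt9Cyc,
            Matrix.of_apply, hEr]
          congr 1
          rw [eq_iff_iff]
          have hi : (i : ℕ) < e s := i.isLt
          have hj : (j : ℕ) < e s := j.isLt
          have hes := he s (Nat.lt_succ_self s)
          have hss : (∑ k ∈ Finset.range (s + 1), e k) = B + e s := by omega
          constructor
          · rintro (⟨r, hr, h1, h2⟩ | ⟨h1, h2⟩)
            · rw [Finset.mem_range] at hr
              rcases Nat.lt_or_ge r s with hrs | hrs
              · have := hstrict r hrs; omega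
              · have h4 : (∑ k ∈ Finset.range r, e k) = B := by rw [(by omega : r = s)]
                have h5 : (∑ k ∈ Finset.range (r + 1), e k) = ∑ k ∈ Finset.range (s + 1), e k := by
                  rw [(by omega : r = s)]
                left
                omega
            · right
              constructor
              · intro hj0
                exact h1 ⟨s, Finset.mem_range.2 (Nat.lt_succ_self s), by omega⟩
              · omega
          · rintro (⟨h1, h2⟩ | ⟨h1, h2⟩)
            · left
              exact ⟨s, Finset.mem_range.2 (Nat.lt_succ_self s), by omega, by omega⟩
            · right
              refine ⟨?_, by omega⟩
              rintro ⟨r, hr, h3⟩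
              rw [Finset.mem_range] at hr
              rcases Nat.lt_or_ge r s with hrs | hrs
              · have := hstrict r hrs; omega
              · have h4 : (∑ k ∈ Finset.range r, e k) = B := by rw [(by omega : r = s)]
                omega
    have hdet := Matrix.det_submatrix_equiv_self E (stmt9G (s + 1) e)
    rw [← hdet, hblock, Matrix.det_fromBlocks_zero₂₁,
      ih (fun k hk => he k (Nat.lt_succ_of_lt hk)), stmt9Cyc_det (he s (Nat.lt_succ_self s))]
    ring

lemma stmt9_detN0
    (n s p : ℕ) (e : ℕ → ℕ)
    (he : ∀ r : ℕ, r < s → 2 ≤ e r)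
    (hps : p = ∑ r ∈ Finset.range s, e r)
    (hpn : p ≤ n)
    (A₀ A₁ : Matrix (Fin n) (Fin n) ℂ)
    (htri : ∀ i j : Fin n, (j : ℕ) ≠ (i : ℕ) → (j : ℕ) ≠ (i : ℕ) + 1 → A₀ i j = 0)
    (hdiag0 : ∀ i : Fin n, (i : ℕ) < p → A₀ i i = 0)
    (hsup0 : ∀ i j : Fin n, (j : ℕ) = (i : ℕ) + 1 → (j : ℕ) ≤ p →
      (∃ r : ℕ, r ≤ s ∧ ∑ k ∈ Finset.range r, e k = (j : ℕ)) → A₀ i j = 0)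
    (hsup1 : ∀ i j : Fin n, (j : ℕ) = (i : ℕ) + 1 → (j : ℕ) ≤ p →
      (¬ ∃ r : ℕ, r ≤ s ∧ ∑ k ∈ Finset.range r, e k = (j : ℕ)) → A₀ i j = 1)
    (q pst : Fin s → Fin n)
    (hq : ∀ r : Fin s, (q r : ℕ) + 1 = ∑ k ∈ Finset.range ((r : ℕ) + 1), e k)
    (hpst : ∀ r : Fin s, (pst r : ℕ) = ∑ k ∈ Finset.range (r : ℕ), e k)
    (β₀ : ℂ) :
    (Matrix.of fun i j : Fin n =>
        if j ∈ Finset.image pst Finset.univ then β₀ * (if i = j then 1 else 0) - A₁ i j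
        else -A₀ i j).det
      = (-1 : ℂ) ^ (n - p + s)
          * (∏ i ∈ Finset.univ.filter fun i : Fin n => p ≤ (i : ℕ), A₀ i i)
          * (Matrix.of fun i j : Fin s => A₁ (q i) (pst j)).det := by
  classical
  -- arithmetic facts
  have hmono : ∀ {a b : ℕ}, a ≤ b →
      (∑ k ∈ Finset.range a, e k) ≤ ∑ k ∈ Finset.range b, e k :=
    fun h => Finset.sum_le_sum_of_subset (Finset.range_subset_range.2 h)
  have hqp : ∀ r : Fin s, (q r : ℕ) < p := by
    intro r
    have h1 := hq r
    have h2 : (∑ k ∈ Finset.range ((r : ℕ) + 1), e k) ≤ ∑ k ∈ Finset.range s, e k :=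
      hmono r.isLt
    omega
  have hpstq : ∀ r : Fin s, (pst r : ℕ) < q r := by
    intro r
    have h1 := hq r
    have h2 := hpst r
    have h3 : (∑ k ∈ Finset.range ((r : ℕ) + 1), e k)
        = (∑ k ∈ Finset.range (r : ℕ), e k) + e (r : ℕ) := Finset.sum_range_succ e r
    have h4 := he (r : ℕ) r.isLt
    omega
  have hpstp : ∀ r : Fin s, (pst r : ℕ) < p := fun r => lt_trans (hpstq r) (hqp r)
  have hqpst : ∀ r r' : Fin s, (q r : ℕ) ≠ (pst r' : ℕ) := by
    intro r r'
    rcases le_or_gt (r' : ℕ) (r : ℕ) with h | h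
    · have : (pst r' : ℕ) ≤ pst r := by rw [hpst, hpst]; exact hmono h
      have := hpstq r
      omega
    · have : (q r : ℕ) + 1 ≤ (pst r' : ℕ) := by
        rw [hq, hpst]; exact hmono h
      omega
  have hpstinj : Function.Injective pst := by
    intro a b hab
    by_contra hne
    rcases Ne.lt_or_gt (fun hc : (a : ℕ) = (b : ℕ) => hne (Fin.ext hc)) with h | h
    · have h1 : (pst a : ℕ) < q a := hpstq a
      have h2 : (q a : ℕ) + 1 ≤ (pst b : ℕ) := by rw [hq, hpst]; exact hmono h
      rw [hab] at h1; omega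
    · have h1 : (pst b : ℕ) < q b := hpstq b
      have h2 : (q b : ℕ) + 1 ≤ (pst a : ℕ) := by rw [hq, hpst]; exact hmono h
      rw [hab] at h2; omega
  have hqinj : Function.Injective q := by
    intro a b hab
    by_contra hne
    have hv : (q a : ℕ) = (q b : ℕ) := by rw [hab]
    rcases Ne.lt_or_gt (fun hc : (a : ℕ) = (b : ℕ) => hne (Fin.ext hc)) with h | h
    · have h2 : (∑ k ∈ Finset.range ((a : ℕ) + 1), e k)
          ≤ ∑ k ∈ Finset.range (b : ℕ), e k := hmono h
      have h3 := hq a; have h4 := hq b; have h5 := hpst b; have h6 := hpstq b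
      omega
    · have h2 : (∑ k ∈ Finset.range ((b : ℕ) + 1), e k)
          ≤ ∑ k ∈ Finset.range (a : ℕ), e k := hmono h
      have h3 := hq a; have h4 := hq b; have h5 := hpst a; have h6 := hpstq a
      omega
  set SS := Finset.image pst Finset.univ with hSS
  have hmem : ∀ j : Fin n, j ∈ SS ↔ ∃ r : Fin s, pst r = j := by
    intro j; simp [hSS]
  -- zero columns of A₀ at block starts
  have hzerocol : ∀ (r : Fin s) (i : Fin n), A₀ i (pst r) = 0 := by
    intro r i
    by_cases h1 : (pst r : ℕ) = (i : ℕ)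
    · have : pst r = i := Fin.ext h1
      rw [← this]
      exact hdiag0 (pst r) (hpstp r)
    · by_cases h2 : (pst r : ℕ) = (i : ℕ) + 1
      · exact hsup0 i (pst r) h2 (le_of_lt (hpstp r))
          ⟨(r : ℕ), le_of_lt r.isLt, (hpst r).symm⟩
      · exact htri i (pst r) h1 h2
  -- rows q r of A₀ vanish away from block-start columns
  have hrow : ∀ (r : Fin s) (j : Fin n), A₀ (q r) j ≠ 0 → ∃ r' : Fin s, pst r' = j := by
    intro r j hA
    by_cases h1 : (j : ℕ) = (q r : ℕ)
    · exfalso; apply hA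
      have : j = q r := Fin.ext h1
      rw [this]; exact hdiag0 (q r) (hqp r)
    · by_cases h2 : (j : ℕ) = (q r : ℕ) + 1
      · exfalso; apply hA
        exact hsup0 (q r) j h2 (by have := hqp r; omega)
          ⟨(r : ℕ) + 1, r.isLt, by rw [← hq r]; omega⟩
      · exact absurd (htri (q r) j h1 h2) hA
  -- the auxiliary matrices
  set U : Matrix (Fin n) (Fin s) ℂ := Matrix.of (fun i r =>
    (β₀ * (if i = pst r then 1 else 0) - A₁ i (pst r)) + (if i = q r then 1 else 0)) with hU
  set W : Matrix (Fin s) (Fin n) ℂ := Matrix.of (fun r j =>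
    -(if j = q r then (1 : ℂ) else 0)) with hW
  set G : Matrix (Fin n) (Fin n) ℂ := Matrix.of (fun i j =>
    if j ∈ SS then (if ∃ r : Fin s, pst r = j ∧ q r = i then (-1 : ℂ) else 0)
    else -A₀ i j) with hG
  have hWG : ∀ (r : Fin s) (j : Fin n), (W * G) r j = if j = pst r then 1 else 0 := by
    intro r j
    have hsum : (W * G) r j = -G (q r) j := by
      rw [Matrix.mul_apply]
      rw [Fintype.sum_eq_single (q r)]
      · simp [hW]
      · intro k hk
        simp [hW, hk]
    rw [hsum]
    by_cases hj : j ∈ SS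
    · obtain ⟨r', hr'⟩ := (hmem j).1 hj
      subst hr'
      rw [hG]
      simp only [Matrix.of_apply, if_pos hj]
      by_cases h : r' = r
      · subst h
        rw [if_pos ⟨r', rfl, rfl⟩, if_pos rfl]
        norm_num
      · have c1 : ¬∃ r'' : Fin s, pst r'' = pst r' ∧ q r'' = q r := by
          rintro ⟨r'', h1, h2⟩
          apply h
          rw [← hpstinj h1]
          exact hqinj h2
        have c2 : pst r' ≠ pst r := fun hc => h (hpstinj hc)
        rw [if_neg c1, if_neg c2]
        norm_num
    · rw [hG]
      simp only [Matrix.of_apply, if_neg hj]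
      have h0 : A₀ (q r) j = 0 := by
        by_contra hc
        exact hj ((hmem j).2 (hrow r j hc))
      rw [h0, if_neg]
      · norm_num
      · intro hc
        exact hj ((hmem j).2 ⟨r, hc.symm⟩)
  have hfact : (Matrix.of fun i j : Fin n =>
      if j ∈ SS then β₀ * (if i = j then 1 else 0) - A₁ i j
      else -A₀ i j) = (1 + U * W) * G := by
    rw [Matrix.add_mul, Matrix.one_mul, Matrix.mul_assoc]
    ext i j
    rw [Matrix.add_apply, Matrix.mul_apply]
    simp only [hWG]
    by_cases hj : j ∈ SS
    · obtain ⟨r₀, hr₀⟩ := (hmem j).1 hj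
      subst hr₀
      have hsum2 : (∑ r : Fin s, U i r * if pst r₀ = pst r then 1 else 0) = U i r₀ := by
        rw [Fintype.sum_eq_single r₀]
        · rw [if_pos rfl, mul_one]
        · intro r hr
          rw [if_neg, mul_zero]
          intro hc
          exact hr (hpstinj hc.symm)
      rw [hsum2, hG]
      simp only [Matrix.of_apply, if_pos hj, hU]
      have hcond : (∃ r : Fin s, pst r = pst r₀ ∧ q r = i) ↔ q r₀ = i := by
        constructor
        · rintro ⟨r, h1, h2⟩
          rw [← hpstinj h1]; exact h2
        · intro h; exact ⟨r₀, rfl, h⟩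
      by_cases hi : q r₀ = i
      · rw [if_pos (hcond.2 hi), if_pos hi.symm]
        ring
      · rw [if_neg (fun hc => hi (hcond.1 hc)),
          if_neg (show ¬(i = q r₀) from fun hc => hi hc.symm)]
        ring
    · have hsum2 : (∑ r : Fin s, U i r * if j = pst r then 1 else 0) = 0 := by
        apply Finset.sum_eq_zero
        intro r _
        rw [if_neg, mul_zero]
        intro hc
        exact hj ((hmem j).2 ⟨r, hc.symm⟩)
      rw [hsum2, hG]
      simp only [Matrix.of_apply, if_neg hj, add_zero]
  -- the small determinant
  have hWU : (1 : Matrix (Fin s) (Fin s) ℂ) + W * U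
      = Matrix.of (fun r r' : Fin s => A₁ (q r) (pst r')) := by
    ext r r'
    rw [Matrix.add_apply, Matrix.mul_apply]
    have hsum : (∑ j : Fin n, W r j * U j r') = -U (q r) r' := by
      rw [Fintype.sum_eq_single (q r)]
      · simp [hW]
      · intro k hk
        simp [hW, hk]
    rw [hsum, hU]
    simp only [Matrix.of_apply]
    rw [if_neg (show ¬(q r = pst r') from fun hc => hqpst r r' (by rw [hc]))]
    by_cases hrr : r = r'
    · subst hrr
      rw [Matrix.one_apply_eq, if_pos rfl]
      ring
    · rw [Matrix.one_apply_ne hrr, if_neg (fun hc => hrr (hqinj hc))]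
      ring
  have hsmall : (1 + U * W).det
      = (Matrix.of (fun r r' : Fin s => A₁ (q r) (pst r'))).det := by
    rw [Matrix.det_one_add_mul_comm, hWU]
  -- the determinant of G
  have hnp : p + (n - p) = n := Nat.add_sub_cancel' hpn
  set E2 : Fin p ⊕ Fin (n - p) ≃ Fin n := finSumFinEquiv.trans (finCongr hnp) with hE2
  have hE2l : ∀ i : Fin p, ((E2 (Sum.inl i)) : ℕ) = (i : ℕ) := by
    intro i; simp [hE2, finCongr_apply]
  have hE2r : ∀ i : Fin (n - p), ((E2 (Sum.inr i)) : ℕ) = p + (i : ℕ) := by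
    intro i; simp [hE2, finCongr_apply]
  have hnotSS : ∀ x : Fin n, p ≤ (x : ℕ) → x ∉ SS := by
    intro x hx hmem'
    obtain ⟨r, hr⟩ := (hmem x).1 hmem'
    have := hpstp r
    rw [hr] at this
    omega
  set GP : Matrix (Fin p) (Fin p) ℂ :=
    Matrix.of (fun i j => G (E2 (Sum.inl i)) (E2 (Sum.inl j))) with hGP
  set GT : Matrix (Fin (n - p)) (Fin (n - p)) ℂ :=
    Matrix.of (fun i j => G (E2 (Sum.inr i)) (E2 (Sum.inr j))) with hGT
  have hGsub : G.submatrix E2 E2 = Matrix.fromBlocks GP 0 0 GT := by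
    ext x y
    cases x with
    | inl i =>
      cases y with
      | inl j => rfl
      | inr j =>
        simp only [Matrix.submatrix_apply, Matrix.fromBlocks_apply₁₂, Matrix.zero_apply]
        rw [hG]
        simp only [Matrix.of_apply]
        rw [if_neg (hnotSS _ (by rw [hE2r]; omega))]
        have hiv : ((E2 (Sum.inl i)) : ℕ) = (i : ℕ) := hE2l i
        have hjv : ((E2 (Sum.inr j)) : ℕ) = p + (j : ℕ) := hE2r j
        have hip : (i : ℕ) < p := i.isLt
        by_cases hc : p + (j : ℕ) = (i : ℕ) + 1
        · rw [hsup0 (E2 (Sum.inl i)) (E2 (Sum.inr j)) (by omega) (by omega)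
            ⟨s, le_refl s, by omega⟩, neg_zero]
        · rw [htri (E2 (Sum.inl i)) (E2 (Sum.inr j)) (by omega) (by omega), neg_zero]
    | inr i =>
      cases y with
      | inl j =>
        simp only [Matrix.submatrix_apply, Matrix.fromBlocks_apply₂₁, Matrix.zero_apply]
        rw [hG]
        simp only [Matrix.of_apply]
        have hiv : ((E2 (Sum.inr i)) : ℕ) = p + (i : ℕ) := hE2r i
        have hjv : ((E2 (Sum.inl j)) : ℕ) = (j : ℕ) := hE2l j
        have hjp : (j : ℕ) < p := j.isLt
        by_cases hj : E2 (Sum.inl j) ∈ SS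
        · rw [if_pos hj, if_neg]
          rintro ⟨r, h1, h2⟩
          have := hqp r
          rw [h2] at this
          omega
        · rw [if_neg hj, htri _ _ (by omega) (by omega), neg_zero]
      | inr j => rfl
  have hGdet : G.det = GP.det * GT.det := by
    rw [← Matrix.det_submatrix_equiv_self E2 G, hGsub, Matrix.det_fromBlocks_zero₂₁]
  -- GT is upper triangular
  have hGTtri : GT.BlockTriangular id := by
    intro i j hij
    have hij' : (j : ℕ) < (i : ℕ) := hij
    rw [hGT]
    simp only [Matrix.of_apply]
    rw [hG]
    simp only [Matrix.of_apply]
    rw [if_neg (hnotSS _ (by rw [hE2r]; omega))]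
    rw [htri _ _ (by rw [hE2r, hE2r]; omega) (by rw [hE2r, hE2r]; omega), neg_zero]
  have hGTdet : GT.det = (-1 : ℂ) ^ (n - p)
      * ∏ i ∈ Finset.univ.filter (fun i : Fin n => p ≤ (i : ℕ)), A₀ i i := by
    rw [Matrix.det_of_upperTriangular hGTtri]
    have hdiag : ∀ i : Fin (n - p), GT i i
        = -A₀ (E2 (Sum.inr i)) (E2 (Sum.inr i)) := by
      intro i
      rw [hGT]
      simp only [Matrix.of_apply]
      rw [hG]
      simp only [Matrix.of_apply]
      rw [if_neg (hnotSS _ (by rw [hE2r]; omega))]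
    calc (∏ i : Fin (n - p), GT i i)
        = ∏ i : Fin (n - p), -A₀ (E2 (Sum.inr i)) (E2 (Sum.inr i)) :=
          Finset.prod_congr rfl (fun i _ => hdiag i)
      _ = (-1 : ℂ) ^ (n - p) * ∏ i : Fin (n - p), A₀ (E2 (Sum.inr i)) (E2 (Sum.inr i)) := by
          rw [show (fun i : Fin (n-p) => -A₀ (E2 (Sum.inr i)) (E2 (Sum.inr i)))
              = fun i : Fin (n-p) => (-1 : ℂ) * A₀ (E2 (Sum.inr i)) (E2 (Sum.inr i)) from
            funext fun i => by ring]
          rw [Finset.prod_mul_distrib, Finset.prod_const, Finset.card_univ, Fintype.card_fin]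
      _ = (-1 : ℂ) ^ (n - p)
          * ∏ i ∈ Finset.univ.filter (fun i : Fin n => p ≤ (i : ℕ)), A₀ i i := by
          congr 1
          apply Finset.prod_bij (fun (i : Fin (n - p)) _ => E2 (Sum.inr i))
          · intro i _
            simp only [Finset.mem_filter, Finset.mem_univ, true_and]
            rw [hE2r]; omega
          · intro a _ b _ hab
            have : (Sum.inr a : Fin p ⊕ Fin (n - p)) = Sum.inr b := E2.injective hab
            exact Sum.inr.injEq .. ▸ (by injection this)
          · intro x hx
            simp only [Finset.mem_filter, Finset.mem_univ, true_and] at hx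
            have hxn : (x : ℕ) - p < n - p := by omega
            refine ⟨⟨(x : ℕ) - p, hxn⟩, Finset.mem_univ _, ?_⟩
            apply Fin.ext
            rw [hE2r]
            simp only []
            omega
          · intro i _
            rfl
  -- GP is the nilpotent block-cycle matrix
  have hGPdet : GP.det = (-1 : ℂ) ^ s := by
    have hstart : ∀ x : Fin n, (x : ℕ) < p →
        ((∃ r : Fin s, pst r = x) ↔ ∃ r ∈ Finset.range s, (∑ k ∈ Finset.range r, e k) = (x : ℕ)) := by
      intro x hx
      constructor
      · rintro ⟨r, hr⟩
        exact ⟨(r : ℕ), Finset.mem_range.2 r.isLt, by rw [← hpst r, hr]⟩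
      · rintro ⟨r, hr, hsum⟩
        rw [Finset.mem_range] at hr
        refine ⟨⟨r, hr⟩, Fin.ext ?_⟩
        rw [hpst ⟨r, hr⟩]
        exact hsum
    have hGPeq : GP = (stmt9G s e).submatrix (finCongr hps) (finCongr hps) := by
      ext i j
      simp only [Matrix.submatrix_apply, hGP, Matrix.of_apply, finCongr_apply]
      rw [hG]
      simp only [Matrix.of_apply]
      have hiv := hE2l i
      have hjv := hE2l j
      have hip : (i : ℕ) < p := i.isLt
      have hjp : (j : ℕ) < p := j.isLt
      rw [show stmt9G s e (Fin.cast hps i) (Fin.cast hps j) =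
          (if (∃ r ∈ Finset.range s, (∑ k ∈ Finset.range r, e k) = (j : ℕ) ∧
                (i : ℕ) + 1 = ∑ k ∈ Finset.range (r + 1), e k)
              ∨ ((¬ ∃ r ∈ Finset.range s, (∑ k ∈ Finset.range r, e k) = (j : ℕ)) ∧
                (i : ℕ) + 1 = (j : ℕ))
          then -1 else 0) from by simp [stmt9G]]
      by_cases hj : E2 (Sum.inl j) ∈ SS
      · have hex : ∃ r ∈ Finset.range s, (∑ k ∈ Finset.range r, e k) = (j : ℕ) := by
          have h1 := (hstart (E2 (Sum.inl j)) (by omega)).1 ((hmem _).1 hj)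
          rwa [hjv] at h1
        rw [if_pos hj]
        by_cases hc : ∃ r : Fin s, pst r = E2 (Sum.inl j) ∧ q r = E2 (Sum.inl i)
        · obtain ⟨r, h1, h2⟩ := hc
          rw [if_pos ⟨r, h1, h2⟩, if_pos]
          left
          refine ⟨(r : ℕ), Finset.mem_range.2 r.isLt, ?_, ?_⟩
          · rw [← hpst r, h1, hjv]
          · have := hq r
            rw [h2, hiv] at this
            omega
        · rw [if_neg hc, if_neg]
          rintro (⟨rr, hrr, hs1, hs2⟩ | ⟨hn, _⟩)
          · rw [Finset.mem_range] at hrr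
            apply hc
            refine ⟨⟨rr, hrr⟩, Fin.ext ?_, Fin.ext ?_⟩
            · rw [hpst ⟨rr, hrr⟩, hjv]; exact hs1
            · have := hq ⟨rr, hrr⟩
              rw [hiv]
              simp only at this ⊢
              omega
          · exact hn hex
      · have hnex : ¬∃ r ∈ Finset.range s, (∑ k ∈ Finset.range r, e k) = (j : ℕ) := by
          intro hcc
          apply hj
          apply (hmem _).2
          apply (hstart (E2 (Sum.inl j)) (by omega)).2
          rwa [hjv]
        rw [if_neg hj]
        by_cases hc : (i : ℕ) + 1 = (j : ℕ)
        · rw [hsup1 (E2 (Sum.inl i)) (E2 (Sum.inl j)) (by omega) (by omega) ?hne]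
          · rw [if_pos (Or.inr ⟨hnex, hc⟩)]
          case hne =>
            rintro ⟨rr, hrs, hsum⟩
            rcases Nat.lt_or_ge rr s with h | h
            · exact hnex ⟨rr, Finset.mem_range.2 h, by omega⟩
            · have : rr = s := by omega
              subst this
              rw [← hps] at hsum
              omega
        · rw [if_neg]
          · by_cases hd : (j : ℕ) = (i : ℕ)
            · have : E2 (Sum.inl j) = E2 (Sum.inl i) := Fin.ext (by omega)
              rw [this, hdiag0 _ (by omega), neg_zero]
            · rw [htri _ _ (by omega) (by omega), neg_zero]
          · rintro (⟨rr, hrr, hs1, hs2⟩ | ⟨_, hii⟩)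
            · exact hnex ⟨rr, hrr, hs1⟩
            · exact hc hii
    rw [hGPeq, Matrix.det_submatrix_equiv_self,
      stmt9G_det s e (fun k hk => by have := he k hk; omega)]
  -- final assembly
  rw [hfact, Matrix.det_mul, hsmall, hGdet, hGPdet, hGTdet, pow_add]
  ring

/-- **Determinant expansion on the small circle.** Let `A₀` be in Jordan form whose first
`s` nilpotent Jordan blocks all have size `e_r ≥ 2` (with `e₁ + ⋯ + e_s = p`) and whose
remaining upper-triangular part has nonzero diagonal entries `λ_{p+1}, …, λ_n`, and let
`A_ε = A₀ + εA₁`.  Then for every fixed `β₀ ∈ ℂ`,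
`det(β₀εE − A_ε) = ε^s (−1)^{n−p+s} λ_{p+1}⋯λ_n · det P + o(ε^s)` as `ε → 0⁺`, where
`P_{ij} = b_{q_i, p_{j−1}}` with `b = A₁`. -/
theorem stmt_9
    (n s p : ℕ) (e : ℕ → ℕ)
    (he : ∀ r : ℕ, r < s → 2 ≤ e r)
    (hps : p = ∑ r ∈ Finset.range s, e r)
    (hpn : p ≤ n)
    (A₀ A₁ : Matrix (Fin n) (Fin n) ℂ)
    (htri : ∀ i j : Fin n, (j : ℕ) ≠ (i : ℕ) → (j : ℕ) ≠ (i : ℕ) + 1 → A₀ i j = 0)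
    (hdiag0 : ∀ i : Fin n, (i : ℕ) < p → A₀ i i = 0)
    (hdiagnz : ∀ i : Fin n, p ≤ (i : ℕ) → A₀ i i ≠ 0)
    (hsup0 : ∀ i j : Fin n, (j : ℕ) = (i : ℕ) + 1 → (j : ℕ) ≤ p →
      (∃ r : ℕ, r ≤ s ∧ ∑ k ∈ Finset.range r, e k = (j : ℕ)) → A₀ i j = 0)
    (hsup1 : ∀ i j : Fin n, (j : ℕ) = (i : ℕ) + 1 → (j : ℕ) ≤ p →
      (¬ ∃ r : ℕ, r ≤ s ∧ ∑ k ∈ Finset.range r, e k = (j : ℕ)) → A₀ i j = 1)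
    (hsupRest : ∀ i j : Fin n, (j : ℕ) = (i : ℕ) + 1 → p < (j : ℕ) →
      (A₀ i j = 0 ∨ A₀ i j = 1))
    (q pst : Fin s → Fin n)
    (hq : ∀ r : Fin s, (q r : ℕ) + 1 = ∑ k ∈ Finset.range ((r : ℕ) + 1), e k)
    (hpst : ∀ r : Fin s, (pst r : ℕ) = ∑ k ∈ Finset.range (r : ℕ), e k)
    (β₀ : ℂ) :
    (fun ε : ℝ =>
        ((β₀ * (ε : ℂ)) • (1 : Matrix (Fin n) (Fin n) ℂ) - (A₀ + (ε : ℂ) • A₁)).det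
        - (ε : ℂ) ^ s * (-1 : ℂ) ^ (n - p + s)
          * (∏ i ∈ Finset.univ.filter fun i : Fin n => p ≤ (i : ℕ), A₀ i i)
          * (Matrix.of fun i j : Fin s => A₁ (q i) (pst j)).det)
      =o[nhdsWithin (0 : ℝ) (Set.Ioi 0)] (fun ε : ℝ => (ε : ℂ) ^ s) := by
  classical
  -- arithmetic facts
  have hmono : ∀ {a b : ℕ}, a ≤ b →
      (∑ k ∈ Finset.range a, e k) ≤ ∑ k ∈ Finset.range b, e k :=
    fun h => Finset.sum_le_sum_of_subset (Finset.range_subset_range.2 h)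
  have hqp : ∀ r : Fin s, (q r : ℕ) < p := by
    intro r
    have h1 := hq r
    have h2 : (∑ k ∈ Finset.range ((r : ℕ) + 1), e k) ≤ ∑ k ∈ Finset.range s, e k :=
      hmono r.isLt
    omega
  have hpstq : ∀ r : Fin s, (pst r : ℕ) < q r := by
    intro r
    have h1 := hq r
    have h2 := hpst r
    have h3 : (∑ k ∈ Finset.range ((r : ℕ) + 1), e k)
        = (∑ k ∈ Finset.range (r : ℕ), e k) + e (r : ℕ) := Finset.sum_range_succ e r
    have h4 := he (r : ℕ) r.isLt
    omega
  have hpstp : ∀ r : Fin s, (pst r : ℕ) < p := fun r => lt_trans (hpstq r) (hqp r)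
  have hpstinj : Function.Injective pst := by
    intro a b hab
    by_contra hne
    rcases Ne.lt_or_gt (fun hc : (a : ℕ) = (b : ℕ) => hne (Fin.ext hc)) with h | h
    · have h1 : (pst a : ℕ) < q a := hpstq a
      have h2 : (q a : ℕ) + 1 ≤ (pst b : ℕ) := by rw [hq, hpst]; exact hmono h
      rw [hab] at h1; omega
    · have h1 : (pst b : ℕ) < q b := hpstq b
      have h2 : (q b : ℕ) + 1 ≤ (pst a : ℕ) := by rw [hq, hpst]; exact hmono h
      rw [hab] at h2; omega
  set SS := Finset.image pst Finset.univ with hSS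
  have hzerocol : ∀ j : Fin n, j ∈ SS → ∀ i : Fin n, A₀ i j = 0 := by
    intro j hj i
    obtain ⟨r, _, hr⟩ := Finset.mem_image.1 hj
    subst hr
    by_cases h1 : (pst r : ℕ) = (i : ℕ)
    · have : pst r = i := Fin.ext h1
      rw [← this]
      exact hdiag0 (pst r) (hpstp r)
    · by_cases h2 : (pst r : ℕ) = (i : ℕ) + 1
      · exact hsup0 i (pst r) h2 (le_of_lt (hpstp r))
          ⟨(r : ℕ), le_of_lt r.isLt, (hpst r).symm⟩
      · exact htri i (pst r) h1 h2
  set X : Matrix (Fin n) (Fin n) ℂ := Matrix.of (fun i j =>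
    if j ∈ SS then β₀ * (if i = j then 1 else 0) - A₁ i j else -A₀ i j) with hX
  set Y : Matrix (Fin n) (Fin n) ℂ := Matrix.of (fun i j =>
    if j ∈ SS then 0 else β₀ * (if i = j then 1 else 0) - A₁ i j) with hY
  have hfact : ∀ ε : ℝ,
      ((β₀ * (ε : ℂ)) • (1 : Matrix (Fin n) (Fin n) ℂ) - (A₀ + (ε : ℂ) • A₁))
        = (X + (ε : ℂ) • Y) * Matrix.diagonal (fun j => if j ∈ SS then (ε : ℂ) else 1) := by
    intro ε
    ext i j
    rw [Matrix.mul_diagonal]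
    simp only [Matrix.sub_apply, Matrix.add_apply, Matrix.smul_apply, Matrix.one_apply,
      hX, hY, Matrix.of_apply, smul_eq_mul]
    by_cases hj : j ∈ SS
    · rw [if_pos hj, if_pos hj, if_pos hj, hzerocol j hj i]
      ring
    · rw [if_neg hj, if_neg hj, if_neg hj]
      ring
  have hdiagdet : ∀ ε : ℝ,
      (Matrix.diagonal (fun j : Fin n => if j ∈ SS then (ε : ℂ) else 1)).det = (ε : ℂ) ^ s := by
    intro ε
    rw [Matrix.det_diagonal]
    have hcard : SS.card = s := by
      rw [hSS, Finset.card_image_of_injective _ hpstinj, Finset.card_univ, Fintype.card_fin]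
    calc (∏ j : Fin n, if j ∈ SS then (ε : ℂ) else 1)
        = ∏ j ∈ SS, (ε : ℂ) := by
          rw [← Finset.prod_filter]
          apply Finset.prod_congr _ (fun _ _ => rfl)
          ext x
          simp
      _ = (ε : ℂ) ^ s := by rw [Finset.prod_const, hcard]
  have hCdet : X.det
      = (-1 : ℂ) ^ (n - p + s)
          * (∏ i ∈ Finset.univ.filter fun i : Fin n => p ≤ (i : ℕ), A₀ i i)
          * (Matrix.of fun i j : Fin s => A₁ (q i) (pst j)).det :=
    stmt9_detN0 n s p e he hps hpn A₀ A₁ htri hdiag0 hsup0 hsup1 q pst hq hpst β₀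
  have key : ∀ ε : ℝ,
      ((β₀ * (ε : ℂ)) • (1 : Matrix (Fin n) (Fin n) ℂ) - (A₀ + (ε : ℂ) • A₁)).det
        = (ε : ℂ) ^ s * (X + (ε : ℂ) • Y).det := by
    intro ε
    rw [hfact ε, Matrix.det_mul, hdiagdet ε]
    ring
  have hgoal : (fun ε : ℝ =>
        ((β₀ * (ε : ℂ)) • (1 : Matrix (Fin n) (Fin n) ℂ) - (A₀ + (ε : ℂ) • A₁)).det
        - (ε : ℂ) ^ s * (-1 : ℂ) ^ (n - p + s)
          * (∏ i ∈ Finset.univ.filter fun i : Fin n => p ≤ (i : ℕ), A₀ i i)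
          * (Matrix.of fun i j : Fin s => A₁ (q i) (pst j)).det)
      = fun ε : ℝ => (ε : ℂ) ^ s * ((X + (ε : ℂ) • Y).det - X.det) := by
    funext ε
    rw [key ε, hCdet]
    ring
  rw [hgoal]
  have hcont : Continuous fun ε : ℝ => (X + (ε : ℂ) • Y).det := by
    apply Continuous.matrix_det
    exact continuous_const.add (Continuous.smul Complex.continuous_ofReal continuous_const)
  have htend : Filter.Tendsto (fun ε : ℝ => (X + (ε : ℂ) • Y).det - X.det)
      (nhdsWithin (0 : ℝ) (Set.Ioi 0)) (nhds 0) := by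
    have h0 : (X + ((0 : ℝ) : ℂ) • Y) = X := by
      norm_num
    have h1 := (hcont.tendsto 0).mono_left (nhdsWithin_le_nhds (s := Set.Ioi (0:ℝ)))
    rw [h0] at h1
    simpa using h1.sub (tendsto_const_nhds (x := X.det))
  have hlo : (fun ε : ℝ => (X + (ε : ℂ) • Y).det - X.det)
      =o[nhdsWithin (0 : ℝ) (Set.Ioi 0)] (fun _ : ℝ => (1 : ℂ)) :=
    (Asymptotics.isLittleO_one_iff ℂ).2 htend
  have hfin := (Asymptotics.isBigO_refl (fun ε : ℝ => (ε : ℂ) ^ s)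
    (nhdsWithin (0 : ℝ) (Set.Ioi 0))).mul_isLittleO hlo
  simpa using hfin
end

section
/- The s×s matrix P with entries P_{ij} = b_{q_i, p_{j−1}}, i, j = 1, …, s, has nonzero determinant. -/
open Matrix Finset

open Classical in
noncomputable def valA (n p s : ℕ) (e : ℕ → ℕ) (A₀ : Matrix (Fin n) (Fin n) ℂ)
    (c : Fin n → ℂ) (i : ℕ) (prev : ℂ) : ℂ :=
  if h : i < n then
    if i < p then
      (if ∃ r, r < s ∧ ∑ k ∈ Finset.range r, e k = i then 0
       else if h' : i - 1 < n then c ⟨i - 1, h'⟩ else 0)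
    else (c ⟨i, h⟩ - (if h2 : i + 1 < n then A₀ ⟨i, h⟩ ⟨i + 1, h2⟩ * prev else 0)) /
      A₀ ⟨i, h⟩ ⟨i, h⟩
  else 0

noncomputable def xA (n p s : ℕ) (e : ℕ → ℕ) (A₀ : Matrix (Fin n) (Fin n) ℂ)
    (c : Fin n → ℂ) : ℕ → ℂ
  | 0 => valA n p s e A₀ c (n - 1) 0
  | (k + 1) => valA n p s e A₀ c (n - 1 - (k + 1)) (xA n p s e A₀ c k)


/-- Let `A₀ ∈ M_n(ℂ)` be in Jordan form whose first `s` Jordan blocks, of sizes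
`e₁, …, e_s` with `e₁ + ⋯ + e_s = p`, are nilpotent, and whose remaining upper-triangular
part has nonzero diagonal entries.  If no eigenvector of `A₀` for the eigenvalue `0`
(i.e. no nontrivial combination of the standard basis vectors at the block-start
positions `p₀, …, p_{s−1}`) has a generalized adjoined vector relative to `(A₀, A₁)`,
then the `s×s` matrix `P` with entries `P_{ij} = b_{q_i, p_{j−1}}` (where `b = A₁`,
`q_i` is the last row of block `i` and `p_{j−1}` the first row of block `j`) has nonzero
determinant. -/
theorem stmt_10
    (n s p : ℕ) (e : ℕ → ℕ)
    (he : ∀ r : ℕ, r < s → 1 ≤ e r)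
    (hps : p = ∑ r ∈ Finset.range s, e r)
    (hpn : p ≤ n)
    (A₀ A₁ : Matrix (Fin n) (Fin n) ℂ)
    -- `A₀` vanishes off the diagonal and superdiagonal
    (htri : ∀ i j : Fin n, (j : ℕ) ≠ (i : ℕ) → (j : ℕ) ≠ (i : ℕ) + 1 → A₀ i j = 0)
    -- first `p` diagonal entries vanish, the remaining ones are nonzero
    (hdiag0 : ∀ i : Fin n, (i : ℕ) < p → A₀ i i = 0)
    (hdiagnz : ∀ i : Fin n, p ≤ (i : ℕ) → A₀ i i ≠ 0)
    -- superdiagonal of the nilpotent part: `0` at block boundaries, `1` inside blocks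
    (hsup0 : ∀ i j : Fin n, (j : ℕ) = (i : ℕ) + 1 → (j : ℕ) ≤ p →
      (∃ r : ℕ, r ≤ s ∧ ∑ k ∈ Finset.range r, e k = (j : ℕ)) → A₀ i j = 0)
    (hsup1 : ∀ i j : Fin n, (j : ℕ) = (i : ℕ) + 1 → (j : ℕ) ≤ p →
      (¬ ∃ r : ℕ, r ≤ s ∧ ∑ k ∈ Finset.range r, e k = (j : ℕ)) → A₀ i j = 1)
    -- superdiagonal of the invertible part consists of `0`s and `1`s
    (hsupRest : ∀ i j : Fin n, (j : ℕ) = (i : ℕ) + 1 → p < (j : ℕ) →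
      (A₀ i j = 0 ∨ A₀ i j = 1))
    -- `q r` is the (0-indexed) last row of nilpotent block `r`,
    -- `pst r` its (0-indexed) first row
    (q pst : Fin s → Fin n)
    (hq : ∀ r : Fin s, (q r : ℕ) + 1 = ∑ k ∈ Finset.range ((r : ℕ) + 1), e k)
    (hpst : ∀ r : Fin s, (pst r : ℕ) = ∑ k ∈ Finset.range (r : ℕ), e k)
    -- no eigenvector of `A₀` for the eigenvalue `0` has a generalized adjoined vector
    (hnodeg : ∀ μ : Fin s → ℂ, μ ≠ 0 → ∀ x : Fin n → ℂ,
      A₀.mulVec x ≠ -A₁.mulVec (∑ r, μ r • (Pi.single (pst r) 1 : Fin n → ℂ))) :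
    (Matrix.of fun i j : Fin s => A₁ (q i) (pst j)).det ≠ 0 := by
  intro hdet
  obtain ⟨μ, hμ, hPμ⟩ := (Matrix.exists_mulVec_eq_zero_iff).mpr hdet
  set v : Fin n → ℂ := ∑ r, μ r • (Pi.single (pst r) 1 : Fin n → ℂ) with hv
  set c : Fin n → ℂ := -A₁.mulVec v with hcdef
  set x : Fin n → ℂ := fun j => xA n p s e A₀ c (n - 1 - (j : ℕ)) with hxd
  -- monotonicity of partial sums
  have hmono : ∀ r : ℕ, r ≤ s → ∑ k ∈ Finset.range r, e k ≤ p := by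
    intro r hr
    rw [hps]
    exact Finset.sum_le_sum_of_subset (Finset.range_subset_range.mpr hr)
  -- P rows vanish on μ
  have hP0 : ∀ r : Fin s, ∑ j, μ j * A₁ (q r) (pst j) = 0 := by
    intro r
    have := congrFun hPμ r
    simp only [Matrix.mulVec, dotProduct, Matrix.of_apply, Pi.zero_apply] at this
    rw [← this]
    exact Finset.sum_congr rfl fun j _ => mul_comm _ _
  -- value of c
  have hcv : ∀ i : Fin n, c i = -∑ r, μ r * A₁ i (pst r) := by
    intro i
    have hAv : A₁ *ᵥ v = fun i => ∑ r, μ r * A₁ i (pst r) := by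
      rw [hv]
      rw [show A₁ *ᵥ (∑ r, μ r • (Pi.single (pst r) 1 : Fin n → ℂ))
            = A₁.mulVecLin (∑ r, μ r • (Pi.single (pst r) 1 : Fin n → ℂ)) from rfl]
      rw [map_sum]
      funext i
      simp [Matrix.mulVecLin_apply, Matrix.mulVec_single, Finset.sum_apply]
    rw [hcdef, Pi.neg_apply, hAv]
  -- unfolding lemma for x
  have hxdef : ∀ i : Fin n, x i = valA n p s e A₀ c (i : ℕ)
      (if h : (i : ℕ) + 1 < n then x ⟨(i : ℕ) + 1, h⟩ else 0) := by
    intro i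
    by_cases h : (i : ℕ) + 1 < n
    · rw [dif_pos h]
      show xA n p s e A₀ c (n - 1 - (i : ℕ)) = _
      have hk : n - 1 - (i : ℕ) = (n - 1 - ((i : ℕ) + 1)) + 1 := by omega
      rw [hk, xA]
      have hi : n - 1 - ((n - 1 - ((i : ℕ) + 1)) + 1) = (i : ℕ) := by omega
      rw [hi]
    · rw [dif_neg h]
      show xA n p s e A₀ c (n - 1 - (i : ℕ)) = _
      have hi0 : n - 1 - (i : ℕ) = 0 := by omega
      rw [hi0, xA]
      have : n - 1 = (i : ℕ) := by have := i.isLt; omega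
      rw [this]
  -- the row form of A₀ *ᵥ x
  have hmv : ∀ i : Fin n, A₀.mulVec x i = A₀ i i * x i +
      (if h : (i : ℕ) + 1 < n then A₀ i ⟨(i : ℕ) + 1, h⟩ * x ⟨(i : ℕ) + 1, h⟩ else 0) := by
    intro i
    show ∑ j, A₀ i j * x j = _
    by_cases h : (i : ℕ) + 1 < n
    · rw [dif_pos h]
      have hne : i ≠ (⟨(i : ℕ) + 1, h⟩ : Fin n) := by
        intro hh
        have := congrArg Fin.val hh
        simp at this
      rw [← Finset.sum_subset (Finset.subset_univ ({i, ⟨(i : ℕ) + 1, h⟩} : Finset (Fin n)))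
          (fun j _ hj => ?_), Finset.sum_pair hne]
      simp only [Finset.mem_insert, Finset.mem_singleton, not_or] at hj
      rw [htri i j (fun hji => hj.1 (Fin.ext hji)) (fun hji => hj.2 (Fin.ext hji)), zero_mul]
    · rw [dif_neg h]
      rw [← Finset.sum_subset (Finset.subset_univ ({i} : Finset (Fin n)))
          (fun j _ hj => ?_), Finset.sum_singleton, add_zero]
      simp only [Finset.mem_singleton] at hj
      have hj2 : (j : ℕ) ≠ (i : ℕ) + 1 := by have := j.isLt; omega
      rw [htri i j (fun hji => hj (Fin.ext hji)) hj2, zero_mul]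
  -- main contradiction
  refine hnodeg μ hμ x ?_
  show A₀.mulVec x = c
  funext i
  rw [hmv i]
  rcases lt_or_ge (i : ℕ) p with hip | hip
  · by_cases hb : ∃ r : ℕ, r ≤ s ∧ ∑ k ∈ Finset.range r, e k = (i : ℕ) + 1
    · -- Case A : i is the last row of a nilpotent block
      obtain ⟨r, hrs, hrsum⟩ := hb
      have hr1 : 1 ≤ r := by
        by_contra hr0
        push_neg at hr0
        interval_cases r
        simp at hrsum
      have hr1s : r - 1 < s := by omega
      have hqr : (q ⟨r - 1, hr1s⟩ : ℕ) = (i : ℕ) := by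
        have h1 := hq ⟨r - 1, hr1s⟩
        have h2 : (r - 1 : ℕ) + 1 = r := by omega
        simp only [h2] at h1
        omega
      have hqi : q ⟨r - 1, hr1s⟩ = i := Fin.ext hqr
      have hzero : (if h : (i : ℕ) + 1 < n then
          A₀ i ⟨(i : ℕ) + 1, h⟩ * x ⟨(i : ℕ) + 1, h⟩ else 0) = 0 := by
        by_cases h : (i : ℕ) + 1 < n
        · rw [dif_pos h, hsup0 i ⟨(i : ℕ) + 1, h⟩ rfl ?_ ⟨r, hrs, hrsum⟩, zero_mul]
          have := hmono r hrs
          simp only []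
          omega
        · rw [dif_neg h]
      rw [hdiag0 i hip, zero_mul, zero_add, hzero, hcv i, ← hqi, hP0 ⟨r - 1, hr1s⟩, neg_zero]
    · -- Case B : i is interior to a nilpotent block
      have hnep : (i : ℕ) + 1 ≠ p := by
        intro hh
        exact hb ⟨s, le_rfl, by rw [← hps]; exact hh.symm⟩
      have hip1 : (i : ℕ) + 1 < p := by omega
      have h : (i : ℕ) + 1 < n := lt_of_lt_of_le hip1 hpn
      rw [dif_pos h, hdiag0 i hip, zero_mul, zero_add,
        hsup1 i ⟨(i : ℕ) + 1, h⟩ rfl (le_of_lt hip1) hb, one_mul,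
        hxdef ⟨(i : ℕ) + 1, h⟩]
      unfold valA
      rw [dif_pos h, if_pos hip1, if_neg (fun ⟨r, hrs, hrsum⟩ => hb ⟨r, le_of_lt hrs, hrsum⟩),
        dif_pos (show (i : ℕ) + 1 - 1 < n by omega)]
      congr 1
  · -- Case C : invertible part, back substitution
    have hd := hdiagnz i hip
    rw [hxdef i]
    unfold valA
    rw [dif_pos i.isLt, if_neg (not_lt.mpr hip)]
    by_cases h : (i : ℕ) + 1 < n
    · simp only [dif_pos h, Fin.eta]
      field_simp
      ring
    · simp only [dif_neg h, Fin.eta]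
      field_simp
      ring
end

section
/- There exist constants c > 0 and ε₀ > 0 such that for all 0 < ε < ε₀ every eigenvalue λ of A_ε = A₀ + εA₁ with |λ| ≤ r₁ satisfies |λ| ≥ cε. (Equivalently: no eigenvalue branch λ^ε of A_ε converging to 0 has an expansion λ^ε = φ₀ε^{p₀} + o(ε^{p₀}) with φ₀ ≠ 0 and exponent p₀ > 1.) -/
open Matrix Filter Topology

/-- Let `0` be an eigenvalue of `A₀`, let `r₁ > 0` be such that `A₀` has no nonzero
eigenvalue of modulus `≤ r₁`, and assume no eigenvector of `A₀` for the eigenvalue `0`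
has a generalized adjoined vector relative to `(A₀, A₁)`. Then there are `c > 0`,
`ε₀ > 0` such that for all `0 < ε < ε₀` every eigenvalue `μ` of `A_ε = A₀ + εA₁` with
`|μ| ≤ r₁` satisfies `|μ| ≥ cε`. -/
theorem stmt_11
    (n : ℕ) (A₀ A₁ : Matrix (Fin n) (Fin n) ℂ)
    (h0 : ∃ v : Fin n → ℂ, v ≠ 0 ∧ A₀.mulVec v = 0)
    (r₁ : ℝ) (hr₁ : 0 < r₁)
    (hgap : ∀ μ : ℂ, (∃ v : Fin n → ℂ, v ≠ 0 ∧ A₀.mulVec v = μ • v) →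
      ‖μ‖ ≤ r₁ → μ = 0)
    (hnodeg : ∀ a : Fin n → ℂ, a ≠ 0 → A₀.mulVec a = 0 →
      ∀ x : Fin n → ℂ, A₀.mulVec x ≠ -A₁.mulVec a) :
    ∃ c : ℝ, 0 < c ∧ ∃ ε₀ : ℝ, 0 < ε₀ ∧ ∀ ε : ℝ, 0 < ε → ε < ε₀ →
      ∀ μ : ℂ, (∃ v : Fin n → ℂ, v ≠ 0 ∧ (A₀ + (ε : ℂ) • A₁).mulVec v = μ • v) →
        ‖μ‖ ≤ r₁ → c * ε ≤ ‖μ‖ := by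
  by_contra hcon
  push_neg at hcon
  -- For each k, pick ε_k < 1/(k+1), eigenvalue μ_k with |μ_k| < ε_k/(k+1),
  -- and a normalized eigenvector v_k.
  have H : ∀ k : ℕ, ∃ ε : ℝ, ∃ μ : ℂ, ∃ v : Fin n → ℂ,
      0 < ε ∧ ε < 1 / (k + 1) ∧ ‖v‖ = 1 ∧
      A₀.mulVec v = μ • v - (ε : ℂ) • A₁.mulVec v ∧
      ‖μ‖ < (1 / (k + 1)) * ε := by
    intro k
    have hk : (0 : ℝ) < 1 / (k + 1) := by positivity
    obtain ⟨ε, hε, hεlt, μ, ⟨v, hv0, hveq⟩, _, hμlt⟩ := hcon (1 / (k + 1)) hk (1 / (k + 1)) hk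
    have hvnorm : ‖v‖ ≠ 0 := norm_ne_zero_iff.mpr hv0
    refine ⟨ε, μ, (‖v‖ : ℂ)⁻¹ • v, hε, hεlt, ?_, ?_, hμlt⟩
    · rw [norm_smul, norm_inv, Complex.norm_real, Real.norm_eq_abs,
        abs_of_nonneg (norm_nonneg v), inv_mul_cancel₀ hvnorm]
    · have hveq' : A₀.mulVec v = μ • v - (ε : ℂ) • A₁.mulVec v := by
        rw [Matrix.add_mulVec, Matrix.smul_mulVec] at hveq
        rw [← hveq]; abel
      rw [Matrix.mulVec_smul, Matrix.mulVec_smul, hveq', smul_sub, smul_comm, smul_comm ((‖v‖:ℂ)⁻¹)]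
  choose ε μ v hε hεlt hvnorm heig hμlt using H
  -- Extract a convergent subsequence of the eigenvectors.
  obtain ⟨a, ha, φ, hφ, hconv⟩ :=
    (isCompact_sphere (0 : Fin n → ℂ) 1).tendsto_subseq
      (x := v) (fun k => mem_sphere_zero_iff_norm.mpr (hvnorm k))
  have hanorm : ‖a‖ = 1 := mem_sphere_zero_iff_norm.mp ha
  have hane : a ≠ 0 := by
    intro h; rw [h, norm_zero] at hanorm; norm_num at hanorm
  -- Basic limits.
  have hφle : ∀ k, (1 : ℝ) / (φ k + 1) ≤ 1 / (k + 1) := by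
    intro k
    have h1 : (k : ℝ) ≤ (φ k : ℝ) := Nat.cast_le.mpr hφ.le_apply
    gcongr
  have hεlim : Tendsto (fun k => ε (φ k)) atTop (𝓝 0) := by
    apply squeeze_zero (fun k => (hε (φ k)).le)
      (fun k => le_trans (hεlt (φ k)).le (hφle k))
    exact tendsto_one_div_add_atTop_nhds_zero_nat
  have hεClim : Tendsto (fun k => ((ε (φ k) : ℝ) : ℂ)) atTop (𝓝 0) := by
    have := (Complex.continuous_ofReal.tendsto 0).comp hεlim
    exact this
  have hμlim : Tendsto (fun k => μ (φ k)) atTop (𝓝 0) := by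
    rw [tendsto_zero_iff_norm_tendsto_zero]
    apply squeeze_zero (fun k => norm_nonneg _)
      (f := fun k => ‖μ (φ k)‖) (g := fun k => 1 / (k + 1))
    · intro k
      calc ‖μ (φ k)‖ = ‖μ (φ k)‖ := rfl
        _ ≤ (1 / (φ k + 1)) * ε (φ k) := (hμlt (φ k)).le
        _ ≤ (1 / (φ k + 1)) * (1 / (φ k + 1)) :=
            mul_le_mul_of_nonneg_left (hεlt (φ k)).le (by positivity)
        _ ≤ 1 * (1 / (φ k + 1)) := by
            apply mul_le_mul_of_nonneg_right _ (by positivity)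
            rw [div_le_one (by positivity)]; linarith [Nat.cast_nonneg (α := ℝ) (φ k)]
        _ = 1 / (φ k + 1) := one_mul _
        _ ≤ 1 / (k + 1) := hφle k
    · exact tendsto_one_div_add_atTop_nhds_zero_nat
  -- μ/ε → 0
  have hratio : Tendsto (fun k => μ (φ k) / (ε (φ k) : ℂ)) atTop (𝓝 0) := by
    rw [tendsto_zero_iff_norm_tendsto_zero]
    apply squeeze_zero (fun k : ℕ => norm_nonneg _)
      (f := fun k : ℕ => ‖μ (φ k) / ((ε (φ k) : ℝ) : ℂ)‖) (g := fun k : ℕ => 1 / (k + 1))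
    · intro k
      rw [norm_div]
      have hεpos := hε (φ k)
      have : ‖((ε (φ k) : ℝ) : ℂ)‖ = ε (φ k) := by
        rw [Complex.norm_real, Real.norm_eq_abs, abs_of_pos hεpos]
      rw [this, div_le_iff₀ hεpos]
      calc ‖μ (φ k)‖ ≤ (1 / (φ k + 1)) * ε (φ k) := (hμlt (φ k)).le
        _ ≤ (1 / (k + 1)) * ε (φ k) :=
            mul_le_mul_of_nonneg_right (hφle k) hεpos.le
        _ = 1 / (k + 1) * ε (φ k) := rfl
    · exact tendsto_one_div_add_atTop_nhds_zero_nat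
  -- Continuity of the matrix actions.
  have hc0 : Continuous fun x : Fin n → ℂ => A₀.mulVec x := by
    exact A₀.mulVecLin.continuous_of_finiteDimensional
  have hc1 : Continuous fun x : Fin n → ℂ => A₁.mulVec x := by
    exact A₁.mulVecLin.continuous_of_finiteDimensional
  have hA1lim : Tendsto (fun k => A₁.mulVec (v (φ k))) atTop (𝓝 (A₁.mulVec a)) :=
    (hc1.tendsto a).comp hconv
  -- A₀ a = 0
  have hA0a : A₀.mulVec a = 0 := by
    have h1 : Tendsto (fun k => A₀.mulVec (v (φ k))) atTop (𝓝 (A₀.mulVec a)) :=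
      (hc0.tendsto a).comp hconv
    have h2 : Tendsto (fun k => A₀.mulVec (v (φ k))) atTop (𝓝 0) := by
      have : Tendsto (fun k => μ (φ k) • v (φ k) - ((ε (φ k) : ℝ) : ℂ) • A₁.mulVec (v (φ k)))
          atTop (𝓝 ((0 : ℂ) • a - (0 : ℂ) • A₁.mulVec a)) :=
        (hμlim.smul hconv).sub (hεClim.smul hA1lim)
      simpa [heig] using this
    exact tendsto_nhds_unique h1 h2
  -- -A₁ a is in the range of A₀
  have hrange : ∃ x : Fin n → ℂ, A₀.mulVec x = -A₁.mulVec a := by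
    have hclosed : IsClosed (LinearMap.range A₀.mulVecLin : Set (Fin n → ℂ)) :=
      Submodule.closed_of_finiteDimensional _
    have hmem : -A₁.mulVec a ∈ (LinearMap.range A₀.mulVecLin : Set (Fin n → ℂ)) := by
      have htend : Tendsto (fun k => A₀.mulVec (((ε (φ k) : ℂ))⁻¹ • v (φ k))) atTop
          (𝓝 (-A₁.mulVec a)) := by
        have : Tendsto (fun k => (μ (φ k) / (ε (φ k) : ℂ)) • v (φ k) - A₁.mulVec (v (φ k)))
            atTop (𝓝 ((0 : ℂ) • a - A₁.mulVec a)) :=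
          (hratio.smul hconv).sub hA1lim
        have heq : ∀ k, A₀.mulVec (((ε (φ k) : ℂ))⁻¹ • v (φ k))
            = (μ (φ k) / (ε (φ k) : ℂ)) • v (φ k) - A₁.mulVec (v (φ k)) := by
          intro k
          have hεne : ((ε (φ k) : ℝ) : ℂ) ≠ 0 := by
            exact_mod_cast (hε (φ k)).ne'
          rw [Matrix.mulVec_smul, heig, smul_sub, smul_smul, smul_smul,
            inv_mul_cancel₀ hεne, one_smul, div_eq_inv_mul]
        simp only [heq]
        simpa using this
      exact hclosed.mem_of_tendsto htend (Filter.Eventually.of_forall fun k =>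
        ⟨((ε (φ k) : ℂ))⁻¹ • v (φ k), by
          simp [Matrix.mulVecLin_apply, Matrix.mulVec_smul]⟩)
    obtain ⟨x, hx⟩ := hmem
    exact ⟨x, by simpa [Matrix.mulVecLin_apply] using hx⟩
  obtain ⟨x, hx⟩ := hrange
  exact hnodeg a hane hA0a x hx
end

section
/- If δ C₀ T M (1 + ‖(E − e^{TA})⁻¹‖) < 1, then every continuously differentiable T-periodic solution z : ℝ → ℂⁿ of the system dz/dt = Az + δQ(t)z is identically zero. -/
set_option maxHeartbeats 1000000
set_option synthInstance.maxHeartbeats 400000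

open Matrix

namespace Stmt12Aux

open NormedSpace

noncomputable def LL {n : ℕ} (B : Matrix (Fin n) (Fin n) ℂ) :
    EuclideanSpace ℂ (Fin n) →L[ℂ] EuclideanSpace ℂ (Fin n) :=
  Matrix.toEuclideanCLM (𝕜 := ℂ) B

variable {n : ℕ}

lemma frobNorm_nonneg' (B : Matrix (Fin n) (Fin n) ℂ) : 0 ≤ frobNorm B := Real.sqrt_nonneg _

lemma LL_continuous : Continuous (LL (n := n)) := by
  have heq : (LL (n := n)) =
      (Matrix.toEuclideanLin.trans LinearMap.toContinuousLinearMap).toLinearMap := rfl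
  rw [heq]; exact LinearMap.continuous_of_finiteDimensional _

noncomputable instance clmNormedAlgebraRat :
    NormedAlgebra ℚ (EuclideanSpace ℂ (Fin n) →L[ℂ] EuclideanSpace ℂ (Fin n)) :=
  NormedAlgebra.restrictScalars ℚ ℂ _

lemma LL_exp (B : Matrix (Fin n) (Fin n) ℂ) : LL (exp B) = exp (LL B) := by
  letI : SeminormedRing (Matrix (Fin n) (Fin n) ℂ) := Matrix.linftyOpSemiNormedRing
  letI : NormedRing (Matrix (Fin n) (Fin n) ℂ) := Matrix.linftyOpNormedRing
  letI : NormedAlgebra ℂ (Matrix (Fin n) (Fin n) ℂ) := Matrix.linftyOpNormedAlgebra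
  letI : NormedAlgebra ℚ (Matrix (Fin n) (Fin n) ℂ) := NormedAlgebra.restrictScalars ℚ ℂ _
  exact map_exp (Matrix.toEuclideanCLM (𝕜 := ℂ)) LL_continuous B

lemma LL_mul (X Y : Matrix (Fin n) (Fin n) ℂ) : LL (X * Y) = LL X * LL Y :=
  _root_.map_mul (Matrix.toEuclideanCLM (𝕜 := ℂ)) X Y

lemma LL_one : LL (1 : Matrix (Fin n) (Fin n) ℂ) = 1 :=
  _root_.map_one (Matrix.toEuclideanCLM (𝕜 := ℂ))

lemma LL_sub (X Y : Matrix (Fin n) (Fin n) ℂ) : LL (X - Y) = LL X - LL Y :=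
  _root_.map_sub (Matrix.toEuclideanCLM (𝕜 := ℂ)) X Y

lemma LL_apply_coord (B : Matrix (Fin n) (Fin n) ℂ) (x : EuclideanSpace ℂ (Fin n)) (i : Fin n) :
    (LL B x) i = ∑ j, B i j * x j := rfl

lemma LL_smulc (t : ℝ) (B : Matrix (Fin n) (Fin n) ℂ) : LL (t • B) = (t : ℂ) • LL B := by
  ext x i
  simp [LL_apply_coord, Finset.mul_sum, Complex.real_smul, mul_assoc]

lemma LL_exp_smul (t : ℝ) (B : Matrix (Fin n) (Fin n) ℂ) :
    LL (exp (t • B)) = exp ((t : ℂ) • LL B) := by rw [LL_exp, LL_smulc]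

lemma entry_eq (B : Matrix (Fin n) (Fin n) ℂ) (i j : Fin n) :
    B i j = (LL B (EuclideanSpace.single j 1)) i := by
  rw [LL_apply_coord]
  simp [EuclideanSpace.single_apply]

lemma cont_frob_exp (A : Matrix (Fin n) (Fin n) ℂ) :
    Continuous fun t : ℝ => frobNorm (exp (t • A)) := by
  have hexp : Continuous fun t : ℝ => exp ((t : ℂ) • LL A) :=
    exp_continuous.comp (Complex.continuous_ofReal.smul continuous_const)
  have : ∀ t : ℝ, frobNorm (exp (t • A)) =
      Real.sqrt (∑ i, ∑ j, ‖(exp ((t : ℂ) • LL A) (EuclideanSpace.single j 1)) i‖ ^ 2) := by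
    intro t
    rw [frobNorm]
    congr 1
    refine Finset.sum_congr rfl fun i _ => Finset.sum_congr rfl fun j _ => ?_
    rw [entry_eq (exp (t • A)) i j, LL_exp_smul]
  simp_rw [this]
  refine Real.continuous_sqrt.comp ?_
  refine continuous_finset_sum _ fun i _ => continuous_finset_sum _ fun j _ => ?_
  have h1 : Continuous fun t : ℝ => (exp ((t : ℂ) • LL A)) (EuclideanSpace.single j 1) :=
    hexp.clm_apply continuous_const
  have h2 : Continuous fun t : ℝ => (exp ((t : ℂ) • LL A)) (EuclideanSpace.single j 1) i :=
    (EuclideanSpace.proj i).continuous.comp h1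
  exact (h2.norm).pow 2

lemma LL_opNorm_le (B : Matrix (Fin n) (Fin n) ℂ) : ‖LL B‖ ≤ frobNorm B := by
  refine ContinuousLinearMap.opNorm_le_bound _ (Real.sqrt_nonneg _) fun x => ?_
  have key : ∀ i, ‖(LL B x) i‖ ≤ Real.sqrt (∑ j, ‖B i j‖ ^ 2) * ‖x‖ := by
    intro i
    set a : EuclideanSpace ℂ (Fin n) := (WithLp.equiv 2 (Fin n → ℂ)).symm
      (fun j => starRingEnd ℂ (B i j)) with ha
    have h1 : (LL B x) i = inner (𝕜 := ℂ) a x := by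
      rw [LL_apply_coord, PiLp.inner_apply]
      simp [a, RCLike.inner_apply, mul_comm]
    have h2 : ‖a‖ = Real.sqrt (∑ j, ‖B i j‖ ^ 2) := by
      rw [EuclideanSpace.norm_eq]
      simp [a]
    rw [h1, ← h2]
    exact norm_inner_le_norm a x
  have hx := norm_nonneg x
  rw [EuclideanSpace.norm_eq]
  have hsum : ∑ i, ‖(LL B x) i‖ ^ 2 ≤ (∑ i, ∑ j, ‖B i j‖ ^ 2) * ‖x‖ ^ 2 := by
    rw [Finset.sum_mul]
    refine Finset.sum_le_sum fun i _ => ?_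
    calc ‖(LL B x) i‖ ^ 2 ≤ (Real.sqrt (∑ j, ‖B i j‖ ^ 2) * ‖x‖) ^ 2 :=
          pow_le_pow_left₀ (norm_nonneg _) (key i) 2
      _ = (∑ j, ‖B i j‖ ^ 2) * ‖x‖ ^ 2 := by
          rw [mul_pow, Real.sq_sqrt (Finset.sum_nonneg fun j _ => sq_nonneg _)]
  calc Real.sqrt (∑ i, ‖(LL B x) i‖ ^ 2)
      ≤ Real.sqrt ((∑ i, ∑ j, ‖B i j‖ ^ 2) * ‖x‖ ^ 2) := Real.sqrt_le_sqrt hsum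
    _ = frobNorm B * ‖x‖ := by
        rw [Real.sqrt_mul (Finset.sum_nonneg fun i _ => Finset.sum_nonneg fun j _ => sq_nonneg _),
          Real.sqrt_sq hx, frobNorm]

lemma eadd (LA : EuclideanSpace ℂ (Fin n) →L[ℂ] EuclideanSpace ℂ (Fin n)) (a b : ℂ) :
    exp (a • LA) * exp (b • LA) = exp ((a + b) • LA) := by
  have h : (a + b) • LA = a • LA + b • LA := add_smul a b LA
  rw [h]
  exact (NormedSpace.exp_add_of_commute (((Commute.refl LA).smul_left a).smul_right b)).symm

end Stmt12Aux

open Stmt12Aux NormedSpace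

/-- Let `E − e^{TA}` be invertible, let `Q` be a continuous `T`-periodic matrix function
with `sup_t ‖Q(t)‖ ≤ C₀`, let `δ > 0`, and let `M = sup_{0≤t≤2T}‖e^{tA}‖`. If
`δ C₀ T M (1 + ‖(E − e^{TA})⁻¹‖) < 1`, then every `C¹` `T`-periodic solution of
`dz/dt = Az + δQ(t)z` is identically zero. -/
theorem stmt_12
    (n : ℕ) (A : Matrix (Fin n) (Fin n) ℂ) (T : ℝ) (hT : 0 < T)
    (hinv : IsUnit ((1 : Matrix (Fin n) (Fin n) ℂ) - NormedSpace.exp (T • A)))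
    (Q : ℝ → Matrix (Fin n) (Fin n) ℂ)
    (hQcont : Continuous Q)
    (hQper : ∀ t : ℝ, Q (t + T) = Q t)
    (C₀ : ℝ) (hC₀ : ∀ t : ℝ, frobNorm (Q t) ≤ C₀)
    (δ : ℝ) (hδ : 0 < δ)
    (M : ℝ)
    (hM : M = sSup ((fun t : ℝ => frobNorm (NormedSpace.exp (t • A))) ''
      Set.Icc (0 : ℝ) (2 * T)))
    (hsmall : δ * C₀ * T * M *
      (1 + frobNorm (((1 : Matrix (Fin n) (Fin n) ℂ) - NormedSpace.exp (T • A))⁻¹)) < 1) :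
    ∀ z : ℝ → Fin n → ℂ,
      ContDiff ℝ 1 z →
      (∀ t : ℝ, z (t + T) = z t) →
      (∀ t : ℝ, deriv z t = A.mulVec (z t) + δ • (Q t).mulVec (z t)) →
      z = 0 := by
  classical
  intro z hz hper hode
  set LA : EuclideanSpace ℂ (Fin n) →L[ℂ] EuclideanSpace ℂ (Fin n) := LL A with hLAdef
  set mexp : ℂ → (EuclideanSpace ℂ (Fin n) →L[ℂ] EuclideanSpace ℂ (Fin n)) :=
    fun v => exp (v • LA) with hmexp
  have emul : ∀ a b : ℂ, mexp a * mexp b = mexp (a + b) := fun a b => eadd LA a b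
  have m0 : mexp 0 = 1 := by
    rw [hmexp]
    show exp ((0:ℂ) • LA) = 1
    have h0 : (0:ℂ) • LA = 0 := zero_smul ℂ LA
    rw [h0, exp_zero]
  set Bm : Matrix (Fin n) (Fin n) ℂ := 1 - exp (T • A) with hBm
  set Binv := LL (Bm⁻¹) with hBinvdef
  set B := LL Bm with hBdef
  have hdet : IsUnit Bm.det := (Matrix.isUnit_iff_isUnit_det _).mp hinv
  have hBBinv : B * Binv = 1 := by
    rw [hBdef, hBinvdef, ← LL_mul, Matrix.mul_nonsing_inv _ hdet, LL_one]
  have hBinvB : Binv * B = 1 := by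
    rw [hBdef, hBinvdef, ← LL_mul, Matrix.nonsing_inv_mul _ hdet, LL_one]
  have hBeq : B = 1 - mexp (T : ℂ) := by
    rw [hBdef, hBm, LL_sub, LL_one, LL_exp_smul, ← hLAdef]
  -- pass to Euclidean space
  let Ee := (PiLp.continuousLinearEquiv 2 ℂ (fun _ : Fin n => ℂ)).symm
  let EeL : (Fin n → ℂ) →L[ℂ] EuclideanSpace ℂ (Fin n) := Ee
  set w : ℝ → EuclideanSpace ℂ (Fin n) := fun t => EeL (z t) with hwdef
  have hzc : Continuous z := hz.continuous
  have hwcont : Continuous w := EeL.continuous.comp hzc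
  have hwper : w T = w 0 := by
    have h0 := hper 0; rw [zero_add] at h0
    simp only [hwdef, h0]
  have hw' : ∀ t, HasDerivAt w (LA (w t) + δ • LL (Q t) (w t)) t := by
    intro t
    have h0 : HasDerivAt z (A.mulVec (z t) + δ • (Q t).mulVec (z t)) t := by
      have h := ((hz.differentiable one_ne_zero) t).hasDerivAt
      rwa [hode t] at h
    have h1c : HasDerivAt (⇑(EeL.restrictScalars ℝ) ∘ z)
        ((EeL.restrictScalars ℝ) (A.mulVec (z t) + δ • (Q t).mulVec (z t))) t :=
      (EeL.restrictScalars ℝ).hasFDerivAt.comp_hasDerivAt t h0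
    have h1 : HasDerivAt (fun u => EeL (z u))
        (EeL (A.mulVec (z t) + δ • (Q t).mulVec (z t))) t := h1c
    have h2 : EeL (A.mulVec (z t) + δ • (Q t).mulVec (z t))
        = LA (w t) + δ • LL (Q t) (w t) := rfl
    rw [h2] at h1
    exact h1
  -- the integrand
  set g : ℝ → EuclideanSpace ℂ (Fin n) :=
    fun s => δ • (mexp (-(s : ℂ)) (LL (Q s) (w s))) with hgdef
  have hmexpcont : Continuous fun s : ℝ => mexp (-(s : ℂ)) := by
    simp only [hmexp]
    exact exp_continuous.comp ((Complex.continuous_ofReal.neg).smul continuous_const)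
  have hgc : Continuous g := by
    apply Continuous.fun_const_smul
    exact hmexpcont.clm_apply ((LL_continuous.comp hQcont).clm_apply hwcont)
  have hyd : ∀ t, HasDerivAt (fun u : ℝ => mexp (-(u : ℂ)) (w u)) (g t) t := by
    intro t
    have hc := hasDerivAt_exp_smul_const (𝕂 := ℂ) (-LA) ((t : ℂ))
    simp only [smul_neg, ← neg_smul] at hc
    have hf : HasDerivAt (fun u : ℝ => (u : ℂ)) 1 t := by
      simpa using (hasDerivAt_id t).ofReal_comp
    have hFn0 := HasDerivAt.scomp t hc hf
    have hFn : HasDerivAt (fun u : ℝ => mexp (-(u : ℂ))) (mexp (-(t : ℂ)) * -LA) t := by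
      simpa only [Function.comp_def, one_smul] using hFn0
    set R := ContinuousLinearMap.restrictScalarsL ℂ (EuclideanSpace ℂ (Fin n))
      (EuclideanSpace ℂ (Fin n)) ℝ ℝ with hRdef
    have hFnR0 := R.hasFDerivAt.comp_hasDerivAt t hFn
    have hFnR : HasDerivAt (fun u : ℝ => R (mexp (-(u : ℂ))))
        (R (mexp (-(t : ℂ)) * -LA)) t := hFnR0
    have hcomb := hFnR.clm_apply (hw' t)
    have hval : (R (mexp (-(t : ℂ)) * -LA)) (w t)
        + (R (mexp (-(t : ℂ)))) (LA (w t) + δ • LL (Q t) (w t)) = g t := by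
      show (mexp (-(t : ℂ)) * -LA) (w t)
        + (mexp (-(t : ℂ))) (LA (w t) + δ • LL (Q t) (w t)) = g t
      simp only [hgdef, ContinuousLinearMap.mul_apply, map_add,
        ContinuousLinearMap.map_smul_of_tower, ContinuousLinearMap.neg_apply, map_neg]
      abel
    rw [hval] at hcomb
    exact hcomb
  have hkey : ∀ t : ℝ, (∫ s in (0:ℝ)..t, g s) = mexp (-(t : ℂ)) (w t) - w 0 := by
    intro t
    have h := intervalIntegral.integral_eq_sub_of_hasDerivAt
      (a := (0:ℝ)) (b := t)
      (f := fun u : ℝ => mexp (-(u : ℂ)) (w u)) (f' := g)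
      (fun s _ => hyd s) (hgc.intervalIntegrable _ _)
    rw [h]
    norm_num [m0]
  set IT := ∫ s in (0:ℝ)..T, g s with hIT
  have hw0 : B (w 0) = mexp (T : ℂ) IT := by
    have h1 : IT = mexp (-(T : ℂ)) (w 0) - w 0 := by rw [hIT, hkey T, hwper]
    have h2 : mexp (T : ℂ) (mexp (-(T : ℂ)) (w 0)) = w 0 := by
      rw [← ContinuousLinearMap.mul_apply, emul, add_neg_cancel, m0,
        ContinuousLinearMap.one_apply]
    calc B (w 0) = w 0 - mexp (T : ℂ) (w 0) := by
          rw [hBeq]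
          simp [ContinuousLinearMap.sub_apply, ContinuousLinearMap.one_apply]
      _ = mexp (T : ℂ) (mexp (-(T : ℂ)) (w 0) - w 0) := by rw [map_sub, h2]
      _ = mexp (T : ℂ) IT := by rw [← h1]
  have hw0' : w 0 = Binv (mexp (T : ℂ) IT) := by
    calc w 0 = (Binv * B) (w 0) := by rw [hBinvB, ContinuousLinearMap.one_apply]
      _ = Binv (B (w 0)) := ContinuousLinearMap.mul_apply _ _ _
      _ = Binv (mexp (T : ℂ) IT) := by rw [hw0]
  have hrep : ∀ t : ℝ, w t = mexp (t : ℂ) (w 0 + ∫ s in (0:ℝ)..t, g s) := by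
    intro t
    have h1 : w 0 + (∫ s in (0:ℝ)..t, g s) = mexp (-(t : ℂ)) (w t) := by
      rw [hkey t]; abel
    rw [h1, ← ContinuousLinearMap.mul_apply, emul, add_neg_cancel, m0,
      ContinuousLinearMap.one_apply]
  -- maximum of ‖w‖ on [0, T]
  obtain ⟨t₀, ht₀mem, ht₀max⟩ :=
    isCompact_Icc.exists_isMaxOn (Set.nonempty_Icc.mpr hT.le)
      ((continuous_norm.comp hwcont).continuousOn :
        ContinuousOn (fun t => ‖w t‖) (Set.Icc 0 T))
  set K := ‖w t₀‖ with hKdef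
  have hKmax : ∀ s ∈ Set.Icc (0:ℝ) T, ‖w s‖ ≤ K := fun s hs => ht₀max hs
  have hK0 : (0:ℝ) ≤ K := norm_nonneg _
  obtain ⟨ht₀0, ht₀T⟩ := ht₀mem
  -- norm bounds
  have hMb : ∀ u : ℝ, u ∈ Set.Icc (0:ℝ) (2*T) → ‖mexp (u : ℂ)‖ ≤ M := by
    intro u hu
    rw [hmexp]
    simp only
    rw [hLAdef, ← LL_exp_smul]
    refine (LL_opNorm_le _).trans ?_
    rw [hM]
    exact le_csSup (isCompact_Icc.image (cont_frob_exp A)).bddAbove ⟨u, hu, rfl⟩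
  have hM0 : (0:ℝ) ≤ M := le_trans (norm_nonneg _) (hMb 0 ⟨le_refl _, by linarith⟩)
  have hC0 : (0:ℝ) ≤ C₀ := (frobNorm_nonneg' (Q 0)).trans (hC₀ 0)
  have hQb : ∀ s : ℝ, ‖LL (Q s)‖ ≤ C₀ := fun s => (LL_opNorm_le _).trans (hC₀ s)
  set invF := frobNorm Bm⁻¹ with hinvFdef
  have hinvF0 : (0:ℝ) ≤ invF := frobNorm_nonneg' _
  have hBinvb : ‖Binv‖ ≤ invF := LL_opNorm_le _
  have hQw : ∀ s ∈ Set.Icc (0:ℝ) T, ‖LL (Q s) (w s)‖ ≤ C₀ * K := by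
    intro s hs
    exact (ContinuousLinearMap.le_opNorm _ _).trans
      (mul_le_mul (hQb s) (hKmax s hs) (norm_nonneg _) hC0)
  -- term 2 bound
  have hterm2 : ‖mexp (t₀ : ℂ) (∫ s in (0:ℝ)..t₀, g s)‖ ≤ δ * (M * (C₀ * K)) * T := by
    rw [← ContinuousLinearMap.intervalIntegral_comp_comm _ (hgc.intervalIntegrable _ _)]
    have hb : ∀ s ∈ Set.uIoc (0:ℝ) t₀, ‖mexp (t₀ : ℂ) (g s)‖ ≤ δ * (M * (C₀ * K)) := by
      intro s hs
      rw [Set.uIoc_of_le ht₀0] at hs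
      have hs0 : (0:ℝ) ≤ s := hs.1.le
      have hsT : s ≤ T := hs.2.trans ht₀T
      have hrw : mexp (t₀ : ℂ) (g s)
          = δ • (mexp (((t₀ - s : ℝ) : ℂ)) (LL (Q s) (w s))) := by
        simp only [hgdef]
        rw [ContinuousLinearMap.map_smul_of_tower, ← ContinuousLinearMap.mul_apply, emul]
        have hco : ((t₀ : ℂ) + -(s : ℂ)) = ((t₀ - s : ℝ) : ℂ) := by push_cast; ring
        rw [hco]
      rw [hrw, norm_smul, Real.norm_eq_abs, abs_of_pos hδ]
      have h1 : ‖mexp (((t₀ - s : ℝ) : ℂ))‖ ≤ M :=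
        hMb _ ⟨by linarith [hs.1, hs.2], by linarith [hs.1, hs.2]⟩
      have h3 : ‖mexp (((t₀ - s : ℝ) : ℂ)) (LL (Q s) (w s))‖ ≤ M * (C₀ * K) :=
        (ContinuousLinearMap.le_opNorm _ _).trans
          (mul_le_mul h1 (hQw s ⟨hs0, hsT⟩) (norm_nonneg _) hM0)
      exact mul_le_mul_of_nonneg_left h3 hδ.le
    have h := intervalIntegral.norm_integral_le_of_norm_le_const hb
    rw [sub_zero, abs_of_nonneg ht₀0] at h
    refine h.trans ?_
    have hfac : (0:ℝ) ≤ δ * (M * (C₀ * K)) := by positivity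
    exact mul_le_mul_of_nonneg_left ht₀T hfac
  -- commutation
  have hcomB : mexp (t₀ : ℂ) * B = B * mexp (t₀ : ℂ) := by
    rw [hBeq, mul_sub, sub_mul, mul_one, one_mul, emul, emul, add_comm]
  have hcomBinv : mexp (t₀ : ℂ) * Binv = Binv * mexp (t₀ : ℂ) := by
    calc mexp (t₀ : ℂ) * Binv
        = (Binv * B) * (mexp (t₀ : ℂ) * Binv) := by rw [hBinvB, one_mul]
      _ = Binv * ((B * mexp (t₀ : ℂ)) * Binv) := by
          rw [mul_assoc, ← mul_assoc B]
      _ = Binv * ((mexp (t₀ : ℂ) * B) * Binv) := by rw [hcomB]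
      _ = Binv * (mexp (t₀ : ℂ) * (B * Binv)) := by rw [mul_assoc]
      _ = Binv * mexp (t₀ : ℂ) := by rw [hBBinv, mul_one]
  set W := Binv * mexp ((t₀ : ℂ) + (T : ℂ)) with hWdef
  have hterm1eq : mexp (t₀ : ℂ) (Binv (mexp (T : ℂ) IT)) = W IT := by
    rw [hWdef, ← ContinuousLinearMap.mul_apply, ← ContinuousLinearMap.mul_apply]
    congr 1
    rw [hcomBinv, mul_assoc, emul]
  have hterm1 : ‖mexp (t₀ : ℂ) (Binv (mexp (T : ℂ) IT))‖
      ≤ δ * (invF * (M * (C₀ * K))) * T := by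
    rw [hterm1eq, hIT,
      ← ContinuousLinearMap.intervalIntegral_comp_comm _ (hgc.intervalIntegrable _ _)]
    have hb : ∀ s ∈ Set.uIoc (0:ℝ) T, ‖W (g s)‖ ≤ δ * (invF * (M * (C₀ * K))) := by
      intro s hs
      rw [Set.uIoc_of_le hT.le] at hs
      have hrw : W (g s)
          = δ • (Binv (mexp (((t₀ + T - s : ℝ) : ℂ)) (LL (Q s) (w s)))) := by
        simp only [hgdef, hWdef]
        rw [ContinuousLinearMap.map_smul_of_tower, ContinuousLinearMap.mul_apply,
          ← ContinuousLinearMap.mul_apply (mexp ((t₀ : ℂ) + (T : ℂ))), emul]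
        have hco : ((t₀ : ℂ) + (T : ℂ) + -(s : ℂ)) = ((t₀ + T - s : ℝ) : ℂ) := by
          push_cast; ring
        rw [hco]
      rw [hrw, norm_smul, Real.norm_eq_abs, abs_of_pos hδ]
      have h1 : ‖mexp (((t₀ + T - s : ℝ) : ℂ))‖ ≤ M := by
        refine hMb _ ⟨by linarith [hs.1, hs.2], by linarith [hs.1, hs.2]⟩
      have h3 : ‖mexp (((t₀ + T - s : ℝ) : ℂ)) (LL (Q s) (w s))‖ ≤ M * (C₀ * K) :=
        (ContinuousLinearMap.le_opNorm _ _).trans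
          (mul_le_mul h1 (hQw s ⟨hs.1.le, hs.2⟩) (norm_nonneg _) hM0)
      have h4 : ‖Binv (mexp (((t₀ + T - s : ℝ) : ℂ)) (LL (Q s) (w s)))‖
          ≤ invF * (M * (C₀ * K)) :=
        (ContinuousLinearMap.le_opNorm _ _).trans
          (mul_le_mul hBinvb h3 (norm_nonneg _) hinvF0)
      exact mul_le_mul_of_nonneg_left h4 hδ.le
    have h := intervalIntegral.norm_integral_le_of_norm_le_const hb
    rw [sub_zero, abs_of_nonneg hT.le] at h
    exact h
  -- combine
  have hcomb : K ≤ δ * C₀ * T * M * (1 + invF) * K := by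
    have hsplit : w t₀ = mexp (t₀ : ℂ) (Binv (mexp (T : ℂ) IT))
        + mexp (t₀ : ℂ) (∫ s in (0:ℝ)..t₀, g s) := by
      rw [hrep t₀, map_add, hw0']
    calc K = ‖w t₀‖ := rfl
      _ ≤ ‖mexp (t₀ : ℂ) (Binv (mexp (T : ℂ) IT))‖
          + ‖mexp (t₀ : ℂ) (∫ s in (0:ℝ)..t₀, g s)‖ := by
          rw [hsplit]; exact norm_add_le _ _
      _ ≤ δ * (invF * (M * (C₀ * K))) * T + δ * (M * (C₀ * K)) * T :=
          add_le_add hterm1 hterm2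
      _ = δ * C₀ * T * M * (1 + invF) * K := by ring
  have hKzero : K = 0 := by
    by_contra hne
    have hKpos : 0 < K := lt_of_le_of_ne hK0 (Ne.symm hne)
    have h2 : δ * C₀ * T * M * (1 + invF) * K < 1 * K :=
      mul_lt_mul_of_pos_right hsmall hKpos
    rw [one_mul] at h2
    exact absurd (lt_of_le_of_lt hcomb h2) (lt_irrefl K)
  have hwz : ∀ s ∈ Set.Icc (0:ℝ) T, z s = 0 := by
    intro s hs
    have hns : ‖w s‖ ≤ 0 := hKzero ▸ hKmax s hs
    have h0 : w s = 0 := norm_eq_zero.mp (le_antisymm hns (norm_nonneg _))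
    have hzs : z s = Ee.symm (w s) := (Ee.symm_apply_apply (z s)).symm
    rw [hzs, h0, map_zero]
  funext t
  obtain ⟨y, hy, hzy⟩ := Function.Periodic.exists_mem_Ico₀ (hper : Function.Periodic z T) hT t
  have hy' : z y = 0 := hwz y ⟨hy.1, hy.2.le⟩
  show z t = 0
  rw [hzy, hy']
end

section
/- For every a ∈ ker A the equation Ax = Ba has a solution x ∈ ℂⁿ if and only if the equation PAPx₁ = PBa has a solution x₁ in the range of P. Consequently, a vector a ∈ ker A has no generalized adjoined vector relative to the pair (A, B) in ℂⁿ if and only if it has none relative to the pair (PAP, PBP) in the range of P. -/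
open Matrix

/-- Let `P` be a projection commuting with `A`, `Q = E − P`, with `ker A ⊆ range P` and the
restriction of `A` to `range Q` invertible on `range Q`. For every `a ∈ ker A` the equation
`Ax = Ba` is solvable in `ℂⁿ` iff `PAPx₁ = PBa` is solvable in `range P`; consequently,
`a` has no generalized adjoined vector relative to `(A, B)` in `ℂⁿ` iff it has none
relative to `(PAP, PBP)` in `range P`. -/
theorem stmt_15
    (n : ℕ) (A B P : Matrix (Fin n) (Fin n) ℂ)
    (hproj : P * P = P)
    (hcomm : A * P = P * A)
    (hker : ∀ v : Fin n → ℂ, A.mulVec v = 0 → P.mulVec v = v)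
    (hQinv : ∀ w : Fin n → ℂ, ((1 : Matrix (Fin n) (Fin n) ℂ) - P).mulVec w = w →
      ∃! u : Fin n → ℂ,
        ((1 : Matrix (Fin n) (Fin n) ℂ) - P).mulVec u = u ∧ A.mulVec u = w) :
    ∀ a : Fin n → ℂ, A.mulVec a = 0 →
      ((∃ x : Fin n → ℂ, A.mulVec x = B.mulVec a) ↔
        (∃ x₁ : Fin n → ℂ, P.mulVec x₁ = x₁ ∧
          (P * A * P).mulVec x₁ = (P * B).mulVec a)) ∧
      ((¬ ∃ x : Fin n → ℂ, A.mulVec x = B.mulVec a) ↔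
        (¬ ∃ x₁ : Fin n → ℂ, P.mulVec x₁ = x₁ ∧
          (P * A * P).mulVec x₁ = (P * B * P).mulVec a)) := by
  intro a ha
  have hPa : P.mulVec a = a := hker a ha
  have hPBP : (P * B * P).mulVec a = (P * B).mulVec a := by
    rw [← Matrix.mulVec_mulVec, hPa]
  have main : (∃ x : Fin n → ℂ, A.mulVec x = B.mulVec a) ↔
      (∃ x₁ : Fin n → ℂ, P.mulVec x₁ = x₁ ∧
        (P * A * P).mulVec x₁ = (P * B).mulVec a) := by
    constructor
    · rintro ⟨x, hx⟩
      refine ⟨P.mulVec x, ?_, ?_⟩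
      · rw [Matrix.mulVec_mulVec, hproj]
      · have h1 : P * A * P * P = P * A := by
          rw [mul_assoc (P * A) P P, hproj, mul_assoc, hcomm, ← mul_assoc, hproj]
        rw [Matrix.mulVec_mulVec, h1, ← Matrix.mulVec_mulVec, hx, Matrix.mulVec_mulVec]
    · rintro ⟨x₁, hx₁p, hx₁⟩
      have e1 : (P * A * P).mulVec x₁ = (P * A).mulVec x₁ := by
        rw [← Matrix.mulVec_mulVec, hx₁p]
      have e2 : A.mulVec x₁ = (P * A).mulVec x₁ := by
        conv_lhs => rw [← hx₁p]
        rw [Matrix.mulVec_mulVec, hcomm]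
      have hAx₁ : A.mulVec x₁ = (P * B).mulVec a := by rw [e2, ← e1, hx₁]
      have hQQ : ((1 : Matrix (Fin n) (Fin n) ℂ) - P) * ((1 : Matrix (Fin n) (Fin n) ℂ) - P)
          = (1 : Matrix (Fin n) (Fin n) ℂ) - P := by
        rw [sub_mul, one_mul, mul_sub, mul_one, hproj, sub_self, sub_zero]
      set w : Fin n → ℂ := ((1 : Matrix (Fin n) (Fin n) ℂ) - P).mulVec (B.mulVec a) with hw
      have hQw : ((1 : Matrix (Fin n) (Fin n) ℂ) - P).mulVec w = w := by
        rw [hw, Matrix.mulVec_mulVec, hQQ]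
      obtain ⟨u, ⟨hu1, hu2⟩, -⟩ := hQinv w hQw
      refine ⟨x₁ + u, ?_⟩
      rw [Matrix.mulVec_add, hu2, hAx₁, hw, Matrix.sub_mulVec, Matrix.one_mulVec,
        ← Matrix.mulVec_mulVec]
      abel
  refine ⟨main, ?_⟩
  simp only [hPBP]
  exact not_congr main
end

section
/- A number λ ∈ ℂ is an eigenvalue of A_ω = A + ω⁻¹B if and only if λ is an eigenvalue of the operator PAP + ω⁻¹P[B − ω⁻¹BQ R_λ Q B]P acting on the range of P, where R_λ denotes the inverse of the restriction of Q(A_ω − λE)Q to the range of Q. -/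
open Matrix

/-- Let `A_ω = A + ω⁻¹B`, let `P` be a projection commuting with `A`, `Q = E − P`, and let
`λ ∈ ℂ` be such that the restriction of `Q(A_ω − λE)Q` to `range Q` is invertible on
`range Q`, with inverse (extended by `0` on `range P`) given by the matrix `R`. Then `λ`
is an eigenvalue of `A_ω` iff `λ` is an eigenvalue of the operator
`PAP + ω⁻¹P[B − ω⁻¹ B Q R Q B]P` acting on `range P`. -/
theorem stmt_16
    (n : ℕ) (A B P : Matrix (Fin n) (Fin n) ℂ) (ω : ℝ) (hω : 0 < ω)
    (hproj : P * P = P)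
    (hcomm : A * P = P * A)
    (lamb : ℂ)
    (R : Matrix (Fin n) (Fin n) ℂ)
    (hRrange : ((1 : Matrix (Fin n) (Fin n) ℂ) - P) * R *
      ((1 : Matrix (Fin n) (Fin n) ℂ) - P) = R)
    (hRinv : ∀ v : Fin n → ℂ, ((1 : Matrix (Fin n) (Fin n) ℂ) - P).mulVec v = v →
      (((1 : Matrix (Fin n) (Fin n) ℂ) - P) *
        (A + ((ω : ℂ))⁻¹ • B - lamb • (1 : Matrix (Fin n) (Fin n) ℂ)) *
        ((1 : Matrix (Fin n) (Fin n) ℂ) - P)).mulVec (R.mulVec v) = v ∧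
      R.mulVec ((((1 : Matrix (Fin n) (Fin n) ℂ) - P) *
        (A + ((ω : ℂ))⁻¹ • B - lamb • (1 : Matrix (Fin n) (Fin n) ℂ)) *
        ((1 : Matrix (Fin n) (Fin n) ℂ) - P)).mulVec v) = v) :
    (∃ v : Fin n → ℂ, v ≠ 0 ∧ (A + ((ω : ℂ))⁻¹ • B).mulVec v = lamb • v) ↔
    (∃ v : Fin n → ℂ, v ≠ 0 ∧ P.mulVec v = v ∧
      (P * A * P + ((ω : ℂ))⁻¹ •
        (P * (B - ((ω : ℂ))⁻¹ •
          (B * ((1 : Matrix (Fin n) (Fin n) ℂ) - P) * R *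
           ((1 : Matrix (Fin n) (Fin n) ℂ) - P) * B)) * P)).mulVec v = lamb • v) := by
  set c : ℂ := ((ω : ℂ))⁻¹ with hc
  set Q : Matrix (Fin n) (Fin n) ℂ := 1 - P with hQdef
  set M : Matrix (Fin n) (Fin n) ℂ := A + c • B - lamb • 1 with hMdef
  clear_value Q M
  have hPQ1 : P + Q = 1 := by rw [hQdef]; abel
  have hQQ : Q * Q = Q := by
    rw [hQdef]; simp [sub_mul, mul_sub, hproj]
  have hPQ : P * Q = 0 := by
    rw [hQdef]; simp [mul_sub, hproj]
  have hQP : Q * P = 0 := by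
    rw [hQdef]; simp [sub_mul, hproj]
  have hPA : P * A = A * P := hcomm.symm
  have hPAP : P * A * P = A * P := by
    rw [hPA, mul_assoc, hproj]
  have hPAQ : P * A * Q = 0 := by
    rw [hQdef, mul_sub, mul_one, hPAP, hPA, sub_self]
  have hQAP : Q * A * P = 0 := by
    rw [hQdef, sub_mul, sub_mul, one_mul, hPAP, sub_self]
  have hQR : Q * R = R := by
    conv_lhs => rw [← hRrange]
    rw [← mul_assoc, ← mul_assoc, hQQ]
    exact hRrange
  have hPR : P * R = 0 := by
    conv_lhs => rw [← hRrange]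
    rw [← mul_assoc, ← mul_assoc, hPQ, zero_mul, zero_mul]
  have hPM : P * M = P * A + c • (P * B) - lamb • P := by
    rw [hMdef, mul_sub, mul_add, Matrix.mul_smul, Matrix.mul_smul, mul_one]
  have hQM : Q * M = Q * A + c • (Q * B) - lamb • Q := by
    rw [hMdef, mul_sub, mul_add, Matrix.mul_smul, Matrix.mul_smul, mul_one]
  have hPMQ : P * M * Q = c • (P * B * Q) := by
    rw [hPM, sub_mul, add_mul]
    simp only [Matrix.smul_mul]
    rw [hPAQ, hPQ, smul_zero, zero_add, sub_zero]
  have hQMP : Q * M * P = c • (Q * B * P) := by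
    rw [hQM, sub_mul, add_mul]
    simp only [Matrix.smul_mul]
    rw [hQAP, hQP, smul_zero, zero_add, sub_zero]
  have hPMP : P * M * P = P * A * P + c • (P * B * P) - lamb • P := by
    rw [hPM, sub_mul, add_mul]
    simp only [Matrix.smul_mul]
    rw [hproj]
  -- the Feshbach operator identity
  have hF : (P * A * P + c • (P * (B - c • (B * Q * R * Q * B)) * P))
      = P * M * P + lamb • P - (P * M * Q) * R * (Q * M * P) := by
    rw [hPMP, hPMQ, hQMP]
    simp only [mul_sub, sub_mul, Matrix.mul_smul, Matrix.smul_mul, smul_sub, smul_smul,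
      sub_add_cancel, mul_assoc]
    abel
  -- relating the eigen-equation to M
  have hMeig : ∀ u : Fin n → ℂ, ((A + c • B).mulVec u = lamb • u ↔ M.mulVec u = 0) := by
    intro u
    rw [hMdef, Matrix.sub_mulVec, Matrix.smul_mulVec, Matrix.one_mulVec,
      sub_eq_zero]
  constructor
  · rintro ⟨u, hu, hAu⟩
    have hMu : M.mulVec u = 0 := (hMeig u).mp hAu
    set v : Fin n → ℂ := P.mulVec u with hv
    set x : Fin n → ℂ := Q.mulVec u with hx
    clear_value v x
    have hvP : P.mulVec v = v := by
      rw [hv, Matrix.mulVec_mulVec, hproj]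
    have hxQ : Q.mulVec x = x := by
      rw [hx, Matrix.mulVec_mulVec, hQQ]
    have hvx : v + x = u := by
      rw [hv, hx, ← Matrix.add_mulVec, hPQ1, Matrix.one_mulVec]
    have e1P : (P * M * P).mulVec v = (P * M).mulVec v := by
      conv_rhs => rw [← hvP, Matrix.mulVec_mulVec]
    have e1Q : (Q * M * P).mulVec v = (Q * M).mulVec v := by
      conv_rhs => rw [← hvP, Matrix.mulVec_mulVec]
    have e2P : (P * M * Q).mulVec x = (P * M).mulVec x := by
      conv_rhs => rw [← hxQ, Matrix.mulVec_mulVec]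
    have e2Q : (Q * M * Q).mulVec x = (Q * M).mulVec x := by
      conv_rhs => rw [← hxQ, Matrix.mulVec_mulVec]
    have hQMu : (Q * M * P).mulVec v + (Q * M * Q).mulVec x = 0 := by
      rw [e1Q, e2Q, ← Matrix.mulVec_add, hvx, ← Matrix.mulVec_mulVec, hMu,
        Matrix.mulVec_zero]
    have hPMu : (P * M * P).mulVec v + (P * M * Q).mulVec x = 0 := by
      rw [e1P, e2P, ← Matrix.mulVec_add, hvx, ← Matrix.mulVec_mulVec, hMu,
        Matrix.mulVec_zero]
    have h3 : (Q * M * Q).mulVec x = -((Q * M * P).mulVec v) := by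
      rw [eq_neg_iff_add_eq_zero, add_comm]
      exact hQMu
    have hxeq : x = - R.mulVec ((Q * M * P).mulVec v) := by
      have h2 := (hRinv x hxQ).2
      rw [h3] at h2
      rw [← h2, Matrix.mulVec_neg]
    have key : (P * M * P).mulVec v = ((P * M * Q) * R * (Q * M * P)).mulVec v := by
      rw [hxeq, Matrix.mulVec_neg, Matrix.mulVec_mulVec, Matrix.mulVec_mulVec,
        add_neg_eq_zero] at hPMu
      exact hPMu
    have hvne : v ≠ 0 := by
      intro hv0
      apply hu
      rw [← hvx, hv0, hxeq, hv0]
      simp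
    refine ⟨v, hvne, hvP, ?_⟩
    rw [hF, Matrix.sub_mulVec, Matrix.add_mulVec, Matrix.smul_mulVec, hvP, key]
    abel
  · rintro ⟨v, hvne, hvP, hFv⟩
    have key : (P * M * P).mulVec v = ((P * M * Q) * R * (Q * M * P)).mulVec v := by
      rw [hF, Matrix.sub_mulVec, Matrix.add_mulVec, Matrix.smul_mulVec, hvP,
        sub_eq_iff_eq_add, add_comm (lamb • v)] at hFv
      exact add_right_cancel hFv
    set x : Fin n → ℂ := - R.mulVec ((Q * M * P).mulVec v) with hx
    clear_value x
    have hxQ : Q.mulVec x = x := by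
      rw [hx, Matrix.mulVec_neg, Matrix.mulVec_mulVec, hQR]
    have hPx : P.mulVec x = 0 := by
      rw [hx, Matrix.mulVec_neg, Matrix.mulVec_mulVec, hPR, Matrix.zero_mulVec, neg_zero]
    refine ⟨v + x, ?_, ?_⟩
    · intro h0
      apply hvne
      have hz : P.mulVec (v + x) = 0 := by rw [h0, Matrix.mulVec_zero]
      rwa [Matrix.mulVec_add, hvP, hPx, add_zero] at hz
    · rw [hMeig]
      have h1P : (P * M).mulVec v = (P * M * P).mulVec v := by
        conv_lhs => rw [← hvP, Matrix.mulVec_mulVec]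
      have h1Q : (Q * M).mulVec v = (Q * M * P).mulVec v := by
        conv_lhs => rw [← hvP, Matrix.mulVec_mulVec]
      have h2P : (P * M).mulVec x = (P * M * Q).mulVec x := by
        conv_lhs => rw [← hxQ, Matrix.mulVec_mulVec]
      have h2Q : (Q * M).mulVec x = (Q * M * Q).mulVec x := by
        conv_lhs => rw [← hxQ, Matrix.mulVec_mulVec]
      have hPMu : (P * M).mulVec (v + x) = 0 := by
        rw [Matrix.mulVec_add, h1P, h2P, key, hx, Matrix.mulVec_neg,
          Matrix.mulVec_mulVec, Matrix.mulVec_mulVec]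
        abel
      have hQMu : (Q * M).mulVec (v + x) = 0 := by
        have hw : Q.mulVec ((Q * M * P).mulVec v) = (Q * M * P).mulVec v := by
          rw [Matrix.mulVec_mulVec, ← mul_assoc, ← mul_assoc, hQQ]
        have h3 := (hRinv _ hw).1
        rw [Matrix.mulVec_add, h1Q, h2Q, hx, Matrix.mulVec_neg, h3]
        abel
      have hsplit : M.mulVec (v + x) = ((P + Q) * M).mulVec (v + x) := by
        rw [hPQ1, one_mul]
      rw [hsplit, Matrix.add_mul, Matrix.add_mulVec, hPMu, hQMu, add_zero]
end
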